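/- arXiv:1604.05284 — 7 statements merged into one kernel-verified Lean document; each statement's English description precedes it below -/
import Mathlib

section
/- Let X₁ and X₂ be independent real random variables such that for some α ∈ (0,2) and constants c₁, c₂ > 0, z^α · P{X₁ > z} → c₁ and z^α · (ln z) · P{X₂ > z} → c₂ as z → ∞, and both X₁, X₂ are symmetric. Then z^α · (ln ln z)⁻¹ · P{X₁X₂ > z} → 2c₁c₂α as z → ∞. -/
/-!
By symmetry and independence, `P(X₁ X₂ > z) = 2 ∫_{y > 0} P(X₁ > z / y) dP_{X₂}(y)`. Fix a large
`M` and split the integral at `M` and `z / M`: the two outer pieces are `O(z^{-α})`, while for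
`M < y ≤ z / M` the tail of `X₁` gives `P(X₁ > z / y) ≈ c₁ y^α z^{-α}`. What remains is the
truncated moment `∫_{(M, z/M]} y^α dP_{X₂}`, which integration by parts turns into
`∫_M^{z/M} α t^{α-1} P(X₂ > t) dt` up to bounded terms. Since `P(X₂ > t) ≈ c₂ t^{-α} / log t`, the
integrand is `≈ α c₂ / (t log t)`, whose integral is `α c₂ log log z + O(1)`.
-/

open MeasureTheory ProbabilityTheory Filter Real

open Set Topology Asymptotics

theorem tendsto_of_forall_pos_squeeze {β : Type*} {F : Filter β} {f : β → ℝ} {L : ℝ}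
    {a b : ℝ → ℝ} (ha : Tendsto a (𝓝[>] 0) (𝓝 L)) (hb : Tendsto b (𝓝[>] 0) (𝓝 L))
    (h : ∀ ε > 0, ∃ l u : β → ℝ, Tendsto l F (𝓝 (a ε)) ∧ Tendsto u F (𝓝 (b ε)) ∧
      ∀ᶠ x in F, l x ≤ f x ∧ f x ≤ u x) :
    Tendsto f F (𝓝 L) := by
  rw [Metric.tendsto_nhds]
  intro η hη
  obtain ⟨ε, ⟨haε, hbε⟩, hε⟩ := (((Metric.tendsto_nhds.1 ha (η / 2) (half_pos hη)).and
    (Metric.tendsto_nhds.1 hb (η / 2) (half_pos hη))).and self_mem_nhdsWithin).exists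
  obtain ⟨l, u, hl, hu, hlu⟩ := h ε hε
  filter_upwards [Metric.tendsto_nhds.1 hl (η / 2) (half_pos hη),
    Metric.tendsto_nhds.1 hu (η / 2) (half_pos hη), hlu] with x hlx hux ⟨hlf, hfu⟩
  rw [Real.dist_eq, abs_sub_lt_iff] at *
  constructor <;> linarith

theorem eventually_div_le_and_le_div_of_tendsto_mul {β : Type*} {F : Filter β} {g f : β → ℝ}
    {c : ℝ} (h : Tendsto (fun x => g x * f x) F (𝓝 c)) (hg : ∀ᶠ x in F, 0 < g x) {ε : ℝ}
    (hε : 0 < ε) : ∀ᶠ x in F, (c - ε) / g x ≤ f x ∧ f x ≤ (c + ε) / g x := by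
  filter_upwards [Metric.tendsto_nhds.1 h ε hε, hg] with x hx hgx
  rw [Real.dist_eq, abs_sub_lt_iff] at hx
  rw [div_le_iff₀' hgx, le_div_iff₀' hgx]
  constructor <;> linarith

theorem tendsto_rpow_mul_of_tendsto_rpow_mul_log_mul {f : ℝ → ℝ} {α c : ℝ}
    (h : Tendsto (fun t => t ^ α * log t * f t) atTop (𝓝 c)) :
    Tendsto (fun t => t ^ α * f t) atTop (𝓝 0) := by
  refine (h.div_atTop tendsto_log_atTop).congr' ?_
  filter_upwards [eventually_gt_atTop 1] with t ht
  field_simp [(log_pos ht).ne']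

theorem tendsto_rpow_mul_comp_div_const {f : ℝ → ℝ} {α c M : ℝ} (hM : 0 < M)
    (h : Tendsto (fun x => x ^ α * f x) atTop (𝓝 c)) :
    Tendsto (fun z => z ^ α * f (z / M)) atTop (𝓝 (M ^ α * c)) := by
  refine ((h.comp (tendsto_id.atTop_div_const hM)).const_mul (M ^ α)).congr' ?_
  filter_upwards [eventually_gt_atTop 0] with z hz
  simp only [Function.comp_apply, id, div_rpow hz.le hM.le]
  field_simp

theorem tendsto_log_log_div_const_div_log_log {M : ℝ} (hM : 0 < M) :
    Tendsto (fun z => log (log (z / M)) / log (log z)) atTop (𝓝 1) := by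
  have hlog : (fun z => log (z / M)) ~[atTop] log :=
    (IsEquivalent.refl.sub_isLittleO (isLittleO_const_log_atTop (c := log M))).congr_left
      (eventually_gt_atTop 0 |>.mono fun z hz => (log_div hz.ne' hM.ne').symm)
  exact (isEquivalent_iff_tendsto_one
    ((tendsto_log_atTop.comp tendsto_log_atTop).eventually_ne_atTop 0)).1
    (hlog.log tendsto_log_atTop)

theorem continuousOn_inv_mul_log : ContinuousOn (fun t => (t * log t)⁻¹) (Ioi 1) :=
  (continuousOn_id.mul (continuousOn_log.mono fun _ ht => (zero_lt_one.trans ht).ne')).inv₀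
    fun _ ht => (mul_pos (zero_lt_one.trans ht) (log_pos ht)).ne'

theorem integral_inv_mul_log {N B : ℝ} (hN : 1 < N) (hNB : N ≤ B) :
    ∫ t in N..B, (t * log t)⁻¹ = log (log B) - log (log N) := by
  have hsub : uIcc N B ⊆ Ioi 1 := fun t ht => hN.trans_le (uIcc_of_le hNB ▸ ht).1
  refine intervalIntegral.integral_eq_sub_of_hasDerivAt (f := fun t => log (log t))
    (fun t ht => ?_)
    (continuousOn_inv_mul_log.mono hsub).intervalIntegrable
  have ht : 1 < t := hsub ht
  exact ((hasDerivAt_log (zero_lt_one.trans ht).ne').log (log_pos ht).ne').congr_deriv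
    (by rw [div_eq_mul_inv, mul_inv])

/-- For independent `X₁ ∼ ν₁` and `X₂ ∼ ν₂` this is `P(X₁ X₂ > z, X₂ > 0)` when `z > 0`. -/
noncomputable def productTail (ν₁ ν₂ : Measure ℝ) (z : ℝ) : ENNReal :=
  ∫⁻ y in Ioi 0, ν₁ (Ioi (z / y)) ∂ν₂

theorem lintegral_eq_two_mul_setLIntegral_Ioi_of_even (ν : Measure ℝ) [ν.IsNegInvariant]
    {f : ℝ → ENNReal} (heven : ∀ y, f (-y) = f y) (hzero : f 0 = 0) :
    ∫⁻ y, f y ∂ν = 2 * ∫⁻ y in Ioi 0, f y ∂ν := by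
  have hIic : ∫⁻ y in Iic 0, f y ∂ν = ∫⁻ y in Ioi 0, f y ∂ν := by
    rw [← lintegral_indicator measurableSet_Iic, ← lintegral_indicator measurableSet_Ioi,
      ← lintegral_neg_eq_self]
    congr 1 with y
    rcases lt_trichotomy y 0 with hy | rfl | hy
    · simp [indicator_of_notMem, hy.not_gt, hy.not_ge]
    · simp [hzero]
    · simp [indicator_of_mem, hy, hy.le, heven]
  rw [← lintegral_add_compl _ measurableSet_Ioi, compl_Ioi, hIic, two_mul]

theorem prod_setOf_lt_mul_eq_two_mul_productTail (ν₁ ν₂ : Measure ℝ) [SFinite ν₁] [SFinite ν₂]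
    [ν₁.IsNegInvariant] [ν₂.IsNegInvariant] {z : ℝ} (hz : 0 < z) :
    ν₁.prod ν₂ {p | z < p.1 * p.2} = 2 * productTail ν₁ ν₂ z := by
  rw [productTail, Measure.prod_apply_symm (measurableSet_lt measurable_const (by fun_prop)),
    lintegral_eq_two_mul_setLIntegral_Ioi_of_even]
  · congr 1
    refine setLIntegral_congr_fun measurableSet_Ioi fun y hy => ?_
    congr 1 with x
    simp [div_lt_iff₀ (mem_Ioi.1 hy)]
  · intro y
    rw [← Measure.measure_preimage_neg ν₁]
    congr 1 with x
    simp
  · simp [hz.not_gt]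

theorem isNegInvariant_map_of_map_eq_map_neg {Ω : Type*} [MeasurableSpace Ω] {μ : Measure Ω}
    {X : Ω → ℝ} (hX : Measurable X) (h : μ.map X = μ.map (fun ω => -X ω)) :
    (μ.map X).IsNegInvariant :=
  ⟨by rw [Measure.neg, Measure.map_map measurable_neg hX]; exact h.symm⟩

theorem ProbabilityTheory.IndepFun.measure_lt_mul_eq_two_mul_productTail {Ω : Type*}
    [MeasurableSpace Ω] {μ : Measure Ω} [IsFiniteMeasure μ] {X₁ X₂ : Ω → ℝ}
    (hind : IndepFun X₁ X₂ μ) (hX₁ : Measurable X₁) (hX₂ : Measurable X₂)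
    [(μ.map X₁).IsNegInvariant] [(μ.map X₂).IsNegInvariant] {z : ℝ} (hz : 0 < z) :
    μ {ω | z < X₁ ω * X₂ ω} = 2 * productTail (μ.map X₁) (μ.map X₂) z := by
  rw [← prod_setOf_lt_mul_eq_two_mul_productTail _ _ hz,
    ← (indepFun_iff_map_prod_eq_prod_map_map hX₁.aemeasurable hX₂.aemeasurable).1 hind,
    Measure.map_apply (hX₁.prodMk hX₂) (measurableSet_lt measurable_const (by fun_prop))]
  rfl

theorem setLIntegral_Ioc_setLIntegral_Ioo_eq (ν : Measure ℝ) [SFinite ν] {h : ℝ → ENNReal}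
    (hh : Measurable h) (A B : ℝ) :
    ∫⁻ y in Ioc A B, (∫⁻ t in Ioo A y, h t) ∂ν = ∫⁻ t in Ioo A B, h t * ν (Ioc t B) := by
  set S : Set (ℝ × ℝ) := {p | A < p.2 ∧ p.2 < p.1 ∧ p.1 ≤ B}
  have hS : MeasurableSet S :=
    (measurableSet_lt measurable_const measurable_snd).inter
      ((measurableSet_lt measurable_snd measurable_fst).inter
        (measurableSet_le measurable_fst measurable_const))
  have hy : ∀ y, (Ioc A B).indicator (fun y => ∫⁻ t in Ioo A y, h t) y
      = ∫⁻ t, S.indicator (fun p => h p.2) (y, t) := by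
    intro y
    by_cases hy : y ∈ Ioc A B
    · rw [indicator_of_mem hy, ← lintegral_indicator measurableSet_Ioo]
      congr 1 with t
      simp only [indicator_apply, S, mem_ofPred_eq, mem_Ioo, hy.2, and_true]
    · rw [indicator_of_notMem hy]
      refine (lintegral_eq_zero_of_ae_eq_zero (.of_forall fun t => indicator_of_notMem ?_ _)).symm
      exact fun ⟨h₁, h₂, h₃⟩ => hy ⟨h₁.trans h₂, h₃⟩
  have ht : ∀ t, (Ioo A B).indicator (fun t => h t * ν (Ioc t B)) t
      = ∫⁻ y, S.indicator (fun p => h p.2) (y, t) ∂ν := by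
    intro t
    by_cases ht : t ∈ Ioo A B
    · rw [indicator_of_mem ht, ← lintegral_indicator_const measurableSet_Ioc]
      congr 1 with y
      simp only [indicator_apply, S, mem_ofPred_eq, mem_Ioc, ht.1, true_and]
    · rw [indicator_of_notMem ht]
      refine (lintegral_eq_zero_of_ae_eq_zero (.of_forall fun y => indicator_of_notMem ?_ _)).symm
      exact fun ⟨h₁, h₂, h₃⟩ => ht ⟨h₁, h₂.trans_le h₃⟩
  rw [← lintegral_indicator measurableSet_Ioc, ← lintegral_indicator measurableSet_Ioo]
  simp_rw [hy, ht]
  exact lintegral_lintegral_swap ((hh.comp measurable_snd).indicator hS).aemeasurable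

theorem setLIntegral_Ioo_ofReal_deriv {g g' : ℝ → ℝ} {A B : ℝ} (hAB : A ≤ B)
    (hg : ∀ t ∈ Icc A B, HasDerivAt g (g' t) t) (hg' : IntervalIntegrable g' volume A B)
    (hg'₀ : ∀ t ∈ Ioo A B, 0 ≤ g' t) :
    ∫⁻ t in Ioo A B, ENNReal.ofReal (g' t) = ENNReal.ofReal (g B - g A) := by
  rw [← ofReal_integral_eq_lintegral_ofReal
      ((intervalIntegrable_iff_integrableOn_Ioo_of_le hAB).1 hg')
      ((ae_restrict_iff' measurableSet_Ioo).2 (.of_forall hg'₀)),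
    ← integral_Ioc_eq_integral_Ioo, ← intervalIntegral.integral_of_le hAB,
    intervalIntegral.integral_eq_sub_of_hasDerivAt (fun t ht => hg t (uIcc_of_le hAB ▸ ht)) hg']

theorem measureReal_Ioc_eq_sub (ν : Measure ℝ) [IsFiniteMeasure ν] {t B : ℝ} (h : t ≤ B) :
    ν.real (Ioc t B) = ν.real (Ioi t) - ν.real (Ioi B) := by
  rw [← Ioc_union_Ioi_eq_Ioi h, measureReal_union (Ioc_disjoint_Ioi le_rfl) measurableSet_Ioi]
  ring

theorem intervalIntegrable_rpow_mul_measureReal (ν : Measure ℝ) [IsFiniteMeasure ν]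
    {s : ℝ → Set ℝ} (hs : Antitone s) (α : ℝ) {a b : ℝ} (ha : 0 < a) (hb : 0 < b) :
    IntervalIntegrable (fun t => α * t ^ (α - 1) * ν.real (s t)) volume a b :=
  (Antitone.intervalIntegrable fun _ _ h => measureReal_mono (hs h)).continuousOn_mul
    (continuousOn_const.mul (continuousOn_id.rpow_const fun t ht =>
      .inl (lt_min ha hb |>.trans_le ht.1).ne'))

noncomputable def truncatedMoment (ν : Measure ℝ) (α M B : ℝ) : ENNReal :=
  ∫⁻ y in Ioc M B, ENNReal.ofReal (y ^ α) ∂ν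

theorem truncatedMoment_eq (ν : Measure ℝ) [SFinite ν] {α N B : ℝ} (hα : 0 ≤ α)
    (hN : 0 < N) :
    truncatedMoment ν α N B
      = ENNReal.ofReal (N ^ α) * ν (Ioc N B)
        + ∫⁻ t in Ioo N B, ENNReal.ofReal (α * t ^ (α - 1)) * ν (Ioc t B) := by
  rw [truncatedMoment, ← setLIntegral_Ioc_setLIntegral_Ioo_eq ν (by fun_prop),
    ← setLIntegral_const, ← lintegral_add_left measurable_const]
  refine setLIntegral_congr_fun measurableSet_Ioc fun y hy => ?_
  have hpos : ∀ t ∈ Icc N y, 0 < t := fun t ht => hN.trans_le ht.1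
  rw [setLIntegral_Ioo_ofReal_deriv hy.1.le
      (fun t ht => hasDerivAt_rpow_const (.inl (hpos t ht).ne'))
      (continuousOn_const.mul (continuousOn_id.rpow_const fun t ht =>
        .inl (hpos t (uIcc_of_le hy.1.le ▸ ht)).ne')).intervalIntegrable
      (fun t ht => mul_nonneg hα (rpow_nonneg (hpos t (Ioo_subset_Icc_self ht)).le _)),
    ← ENNReal.ofReal_add (rpow_nonneg hN.le _) (sub_nonneg.2 (rpow_le_rpow hN.le hy.1.le hα)),
    add_sub_cancel]

theorem toReal_truncatedMoment (ν : Measure ℝ) [IsFiniteMeasure ν] {α N B : ℝ}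
    (hα : 0 ≤ α) (hN : 0 < N) (hNB : N ≤ B) :
    (truncatedMoment ν α N B).toReal
      = N ^ α * ν.real (Ioi N) - B ^ α * ν.real (Ioi B)
        + ∫ t in N..B, α * t ^ (α - 1) * ν.real (Ioi t) := by
  have hcont : ContinuousOn (fun t => α * t ^ (α - 1)) (uIcc N B) :=
    continuousOn_const.mul (continuousOn_id.rpow_const fun t ht =>
      .inl (hN.trans_le (uIcc_of_le hNB ▸ ht).1).ne')
  have hpos : ∀ t, N ≤ t → 0 ≤ α * t ^ (α - 1) :=
    fun t ht => mul_nonneg hα (rpow_nonneg (hN.trans_le ht).le _)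
  have hint : ∀ s : ℝ → Set ℝ, Antitone s →
      IntervalIntegrable (fun t => α * t ^ (α - 1) * ν.real (s t)) volume N B :=
    fun s hs => intervalIntegrable_rpow_mul_measureReal ν hs α hN (hN.trans_le hNB)
  have hmid : ∫⁻ t in Ioo N B, ENNReal.ofReal (α * t ^ (α - 1)) * ν (Ioc t B)
      = ENNReal.ofReal (∫ t in N..B, α * t ^ (α - 1) * ν.real (Ioc t B)) := by
    rw [intervalIntegral.integral_of_le hNB, integral_Ioc_eq_integral_Ioo,
      ofReal_integral_eq_lintegral_ofReal ((intervalIntegrable_iff_integrableOn_Ioo_of_le hNB).1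
        (hint _ fun _ _ h => Ioc_subset_Ioc_left h))
        ((ae_restrict_iff' measurableSet_Ioo).2 (.of_forall fun t ht =>
          mul_nonneg (hpos t ht.1.le) measureReal_nonneg))]
    refine setLIntegral_congr_fun measurableSet_Ioo fun t ht => ?_
    rw [ENNReal.ofReal_mul (hpos t ht.1.le), ofReal_measureReal]
  have htail : ∫ t in N..B, α * t ^ (α - 1) * ν.real (Ioc t B)
      = (∫ t in N..B, α * t ^ (α - 1) * ν.real (Ioi t)) - (B ^ α - N ^ α) * ν.real (Ioi B) := by
    have hFTC : ∫ t in N..B, α * t ^ (α - 1) = B ^ α - N ^ α :=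
      intervalIntegral.integral_eq_sub_of_hasDerivAt
        (fun t ht => hasDerivAt_rpow_const (.inl (hN.trans_le (uIcc_of_le hNB ▸ ht).1).ne'))
        hcont.intervalIntegrable
    rw [← hFTC, ← intervalIntegral.integral_mul_const, ← intervalIntegral.integral_sub
      (hint _ fun _ _ h => Ioi_subset_Ioi h) (hcont.intervalIntegrable.mul_const _)]
    refine intervalIntegral.integral_congr fun t ht => ?_
    rw [measureReal_Ioc_eq_sub ν (uIcc_of_le hNB ▸ ht).2]
    ring
  rw [truncatedMoment_eq ν hα hN, hmid, ENNReal.toReal_add (by finiteness)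
    ENNReal.ofReal_ne_top, ENNReal.toReal_mul, ENNReal.toReal_ofReal (rpow_nonneg hN.le _),
    ENNReal.toReal_ofReal (intervalIntegral.integral_nonneg hNB fun t ht =>
      mul_nonneg (hpos t ht.1) measureReal_nonneg),
    htail, ← measureReal_def, measureReal_Ioc_eq_sub ν hNB]
  ring

theorem truncatedMoment_ne_top (ν : Measure ℝ) [IsFiniteMeasure ν] {α M B : ℝ}
    (hα : 0 ≤ α) (hM : 0 ≤ M) : truncatedMoment ν α M B ≠ ⊤ := by
  refine ne_top_of_le_ne_top (by finiteness : ENNReal.ofReal (B ^ α) * ν (Ioc M B) ≠ ⊤) ?_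
  rw [truncatedMoment, ← setLIntegral_const]
  exact setLIntegral_mono' measurableSet_Ioc fun y hy =>
    ENNReal.ofReal_le_ofReal (rpow_le_rpow (hM.trans hy.1.le) hy.2 hα)

theorem integral_rpow_mul_measureReal_Ioi_mem_Icc (ν : Measure ℝ) [IsFiniteMeasure ν]
    {α a b N B : ℝ} (hα : 0 ≤ α) (hN : 1 < N) (hNB : N ≤ B)
    (hT : ∀ t ∈ Icc N B,
      a / (t ^ α * log t) ≤ ν.real (Ioi t) ∧ ν.real (Ioi t) ≤ b / (t ^ α * log t)) :
    ∫ t in N..B, α * t ^ (α - 1) * ν.real (Ioi t) ∈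
      Icc (α * a * (log (log B) - log (log N))) (α * b * (log (log B) - log (log N))) := by
  have hcmp : ∀ c, IntervalIntegrable (fun t => α * c * (t * log t)⁻¹) volume N B := fun c =>
    ((continuousOn_inv_mul_log.mono fun t ht => hN.trans_le (uIcc_of_le hNB ▸ ht).1
      ).intervalIntegrable).const_mul _
  have hcmp_eq : ∀ c, ∫ t in N..B, α * c * (t * log t)⁻¹ = α * c * (log (log B) - log (log N)) :=
    fun c => by rw [intervalIntegral.integral_const_mul, integral_inv_mul_log hN hNB]
  have hint := intervalIntegrable_rpow_mul_measureReal ν (fun _ _ h => Ioi_subset_Ioi h) α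
    (zero_lt_one.trans hN) (zero_lt_one.trans_le (hN.le.trans hNB))
  have hfac : ∀ t ∈ Icc N B, ∀ c,
      α * t ^ (α - 1) * (c / (t ^ α * log t)) = α * c * (t * log t)⁻¹ := by
    intro t ht c
    have ht₀ : 0 < t := by linarith [ht.1]
    have hlog : 0 < log t := log_pos (hN.trans_le ht.1)
    rw [rpow_sub_one ht₀.ne']
    field_simp
  have hαt : ∀ t ∈ Icc N B, 0 ≤ α * t ^ (α - 1) := fun t ht =>
    mul_nonneg hα (rpow_nonneg (by linarith [ht.1]) _)
  rw [← hcmp_eq, ← hcmp_eq]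
  exact ⟨intervalIntegral.integral_mono_on hNB (hcmp _) hint fun t ht =>
      hfac t ht a ▸ mul_le_mul_of_nonneg_left (hT t ht).1 (hαt t ht),
    intervalIntegral.integral_mono_on hNB hint (hcmp _) fun t ht =>
      hfac t ht b ▸ mul_le_mul_of_nonneg_left (hT t ht).2 (hαt t ht)⟩

theorem tendsto_toReal_truncatedMoment_div_log_log (ν : Measure ℝ) [IsFiniteMeasure ν]
    {α c M : ℝ} (hα : 0 < α) (hM : 0 < M)
    (h : Tendsto (fun t => t ^ α * log t * ν.real (Ioi t)) atTop (𝓝 c)) :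
    Tendsto (fun B => (truncatedMoment ν α M B).toReal / log (log B)) atTop
      (𝓝 (α * c)) := by
  have hloglog : Tendsto (fun B => log (log B)) atTop atTop :=
    tendsto_log_atTop.comp tendsto_log_atTop
  refine tendsto_of_forall_pos_squeeze (a := fun ε => α * (c - ε)) (b := fun ε => α * (c + ε))
    ?_ ?_ fun ε hε => ?_
  · exact tendsto_nhdsWithin_of_tendsto_nhds (Continuous.tendsto' (by fun_prop) _ _ (by simp))
  · exact tendsto_nhdsWithin_of_tendsto_nhds (Continuous.tendsto' (by fun_prop) _ _ (by simp))
  obtain ⟨N, hN⟩ := eventually_atTop.1 ((eventually_div_le_and_le_div_of_tendsto_mul h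
    (eventually_gt_atTop 1 |>.mono fun t ht => mul_pos (rpow_pos_of_pos (zero_lt_one.trans ht) _)
      (log_pos ht)) hε).and (eventually_ge_atTop (max M 2)))
  have hN₁ : 1 < N := by linarith [le_max_right M 2, (hN N le_rfl).2]
  have hMN : M ≤ N := (le_max_left M 2).trans (hN N le_rfl).2
  have hint : ∀ {a b : ℝ}, 0 < a → 0 < b →
      IntervalIntegrable (fun t => α * t ^ (α - 1) * ν.real (Ioi t)) volume a b :=
    intervalIntegrable_rpow_mul_measureReal ν (fun _ _ h => Ioi_subset_Ioi h) α
  set C := M ^ α * ν.real (Ioi M) + ∫ t in M..N, α * t ^ (α - 1) * ν.real (Ioi t)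
  refine ⟨fun B => (C - B ^ α * ν.real (Ioi B) - α * (c - ε) * log (log N)) / log (log B)
      + α * (c - ε),
    fun B => (C - α * (c + ε) * log (log N)) / log (log B) + α * (c + ε), ?_, ?_, ?_⟩
  · simpa using (((tendsto_const_nhds.sub (tendsto_rpow_mul_of_tendsto_rpow_mul_log_mul h)).sub
      tendsto_const_nhds).div_atTop hloglog).add_const (α * (c - ε))
  · simpa using (tendsto_const_nhds.div_atTop hloglog).add_const (α * (c + ε))
  filter_upwards [eventually_ge_atTop N, hloglog.eventually_gt_atTop 0] with B hNB hB
  have hN₀ : 0 < N := by linarith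
  have hB₀ : 0 < B := by linarith
  obtain ⟨hlow, hup⟩ := integral_rpow_mul_measureReal_Ioi_mem_Icc ν hα.le hN₁ hNB
    fun t ht => (hN t ht.1).1
  have hBT : 0 ≤ B ^ α * ν.real (Ioi B) := mul_nonneg (rpow_nonneg hB₀.le _) measureReal_nonneg
  rw [toReal_truncatedMoment ν hα.le hM (hMN.trans hNB),
    ← intervalIntegral.integral_add_adjacent_intervals (hint hM hN₀) (hint hN₀ hB₀),
    div_add' _ _ _ hB.ne', div_add' _ _ _ hB.ne', div_le_div_iff_of_pos_right hB,
    div_le_div_iff_of_pos_right hB]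
  constructor <;> linarith

section TailOfProduct

variable {ν₁ ν₂ : Measure ℝ} [IsProbabilityMeasure ν₁] [IsProbabilityMeasure ν₂] {α M z : ℝ}

theorem div_div_rpow_eq_div_rpow_mul {a z y α : ℝ} (hz : 0 ≤ z) (hy : 0 < y) :
    a / (z / y) ^ α = a / z ^ α * y ^ α := by
  rw [div_rpow hz hy.le, div_div_eq_mul_div, mul_div_right_comm]

theorem le_div_of_mem_Ioc_div {y : ℝ} (hM : 0 < M) (hy : y ∈ Ioc M (z / M)) : M ≤ z / y :=
  (le_div_iff₀ (hM.trans hy.1)).2 (mul_comm M y ▸ (le_div_iff₀ hM).1 hy.2)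

theorem productTail_le (hM : 0 < M) (hMz : M * M ≤ z) {b : ℝ} (hb : 0 ≤ b)
    (hup : ∀ x ≥ M, ν₁.real (Ioi x) ≤ b / x ^ α) :
    productTail ν₁ ν₂ z ≤ ν₁ (Ioi (z / M))
      + ENNReal.ofReal (b / z ^ α) * truncatedMoment ν₂ α M (z / M) + ν₂ (Ioi (z / M)) := by
  have hz : 0 < z := by nlinarith
  have hMB : M ≤ z / M := (le_div_iff₀ hM).2 hMz
  have h₁ : ∫⁻ y in Ioc 0 M, ν₁ (Ioi (z / y)) ∂ν₂ ≤ ν₁ (Ioi (z / M)) := calc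
    _ ≤ ∫⁻ y in Ioc 0 M, ν₁ (Ioi (z / M)) ∂ν₂ := setLIntegral_mono' measurableSet_Ioc fun y hy =>
          measure_mono (Ioi_subset_Ioi (div_le_div_of_nonneg_left hz.le hy.1 hy.2))
    _ ≤ ν₁ (Ioi (z / M)) := by rw [setLIntegral_const]; exact mul_le_of_le_one_right' prob_le_one
  have h₂ : ∫⁻ y in Ioc M (z / M), ν₁ (Ioi (z / y)) ∂ν₂
      ≤ ENNReal.ofReal (b / z ^ α) * truncatedMoment ν₂ α M (z / M) := by
    rw [truncatedMoment, ← lintegral_const_mul' _ _ ENNReal.ofReal_ne_top]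
    refine setLIntegral_mono' measurableSet_Ioc fun y hy => ?_
    rw [← ENNReal.ofReal_mul (by positivity), ← ofReal_measureReal,
      ← div_div_rpow_eq_div_rpow_mul hz.le (hM.trans hy.1)]
    exact ENNReal.ofReal_le_ofReal (hup _ (le_div_of_mem_Ioc_div hM hy))
  have h₃ : ∫⁻ y in Ioi (z / M), ν₁ (Ioi (z / y)) ∂ν₂ ≤ ν₂ (Ioi (z / M)) := calc
    _ ≤ ∫⁻ _ in Ioi (z / M), 1 ∂ν₂ := setLIntegral_mono' measurableSet_Ioi fun _ _ => prob_le_one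
    _ = ν₂ (Ioi (z / M)) := by rw [setLIntegral_const, one_mul]
  rw [productTail, ← Ioc_union_Ioi_eq_Ioi (hM.le.trans hMB),
    lintegral_union measurableSet_Ioi (Ioc_disjoint_Ioi le_rfl),
    ← Ioc_union_Ioc_eq_Ioc hM.le hMB,
    lintegral_union measurableSet_Ioc (Ioc_disjoint_Ioc_of_le le_rfl)]
  gcongr

theorem productTail_ne_top (z : ℝ) : productTail ν₁ ν₂ z ≠ ⊤ :=
  ne_top_of_le_ne_top (b := ∫⁻ _ in Ioi 0, 1 ∂ν₂) (by simp)
    (setLIntegral_mono' measurableSet_Ioi fun _ _ => prob_le_one)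

theorem rpow_mul_toReal_productTail_le (hα : 0 ≤ α) (hM : 0 < M) (hMz : M * M ≤ z) {b : ℝ}
    (hup : ∀ x ≥ M, ν₁.real (Ioi x) ≤ b / x ^ α) :
    z ^ α * (productTail ν₁ ν₂ z).toReal ≤
      z ^ α * ν₁.real (Ioi (z / M)) + z ^ α * ν₂.real (Ioi (z / M)) +
        b * (truncatedMoment ν₂ α M (z / M)).toReal := by
  have hz : 0 < z := by nlinarith
  have hb : 0 ≤ b := by
    have := measureReal_nonneg.trans (hup M le_rfl)
    rwa [le_div_iff₀ (rpow_pos_of_pos hM α), zero_mul] at this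
  have hK := truncatedMoment_ne_top ν₂ hα hM.le (B := z / M)
  have := ENNReal.toReal_mono (by finiteness) (productTail_le (ν₂ := ν₂) hM hMz hb hup)
  rw [ENNReal.toReal_add (by finiteness) (by finiteness), ENNReal.toReal_add (by finiteness)
    (by finiteness), ENNReal.toReal_mul, ENNReal.toReal_ofReal (by positivity)] at this
  calc _ ≤ z ^ α * (ν₁.real (Ioi (z / M)) + b / z ^ α
        * (truncatedMoment ν₂ α M (z / M)).toReal + ν₂.real (Ioi (z / M))) :=
        mul_le_mul_of_nonneg_left this (rpow_nonneg hz.le _)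
    _ = _ := by field_simp; ring

theorem le_rpow_mul_toReal_productTail (hM : 0 < M) (hMz : M * M ≤ z) {a : ℝ}
    (hlow : ∀ x ≥ M, a / x ^ α ≤ ν₁.real (Ioi x)) :
    a * (truncatedMoment ν₂ α M (z / M)).toReal ≤ z ^ α * (productTail ν₁ ν₂ z).toReal := by
  have hz : 0 < z := by nlinarith
  have hzα : 0 < z ^ α := rpow_pos_of_pos hz α
  rcases lt_or_ge a 0 with ha | ha
  · exact (mul_nonpos_of_nonpos_of_nonneg ha.le ENNReal.toReal_nonneg).trans
      (mul_nonneg hzα.le ENNReal.toReal_nonneg)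
  have hJ : ENNReal.ofReal (a / z ^ α) * truncatedMoment ν₂ α M (z / M)
      ≤ productTail ν₁ ν₂ z := by
    rw [truncatedMoment, ← lintegral_const_mul' _ _ ENNReal.ofReal_ne_top]
    refine (setLIntegral_mono' measurableSet_Ioc fun y hy => ?_).trans
      (lintegral_mono_set (Ioc_subset_Ioi_self.trans (Ioi_subset_Ioi hM.le)))
    rw [← ENNReal.ofReal_mul (by positivity), ← ofReal_measureReal,
      ← div_div_rpow_eq_div_rpow_mul hz.le (hM.trans hy.1)]
    exact ENNReal.ofReal_le_ofReal (hlow _ (le_div_of_mem_Ioc_div hM hy))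
  have := ENNReal.toReal_mono (productTail_ne_top z) hJ
  rw [ENNReal.toReal_mul, ENNReal.toReal_ofReal (by positivity)] at this
  calc _ = z ^ α * (a / z ^ α * (truncatedMoment ν₂ α M (z / M)).toReal) := by field_simp
    _ ≤ _ := mul_le_mul_of_nonneg_left this hzα.le

theorem tendsto_rpow_mul_toReal_productTail_div_log_log (hα : 0 < α) {c₁ c₂ : ℝ}
    (h₁ : Tendsto (fun z => z ^ α * ν₁.real (Ioi z)) atTop (𝓝 c₁))
    (h₂ : Tendsto (fun z => z ^ α * log z * ν₂.real (Ioi z)) atTop (𝓝 c₂)) :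
    Tendsto (fun z => z ^ α * (productTail ν₁ ν₂ z).toReal / log (log z)) atTop
      (𝓝 (c₁ * (α * c₂))) := by
  have hloglog : Tendsto (fun z => log (log z)) atTop atTop :=
    tendsto_log_atTop.comp tendsto_log_atTop
  refine tendsto_of_forall_pos_squeeze (a := fun ε => (c₁ - ε) * (α * c₂))
    (b := fun ε => (c₁ + ε) * (α * c₂)) ?_ ?_ fun ε hε => ?_
  · exact tendsto_nhdsWithin_of_tendsto_nhds (Continuous.tendsto' (by fun_prop) _ _ (by simp))
  · exact tendsto_nhdsWithin_of_tendsto_nhds (Continuous.tendsto' (by fun_prop) _ _ (by simp))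
  obtain ⟨M, hM⟩ := eventually_atTop.1 ((eventually_div_le_and_le_div_of_tendsto_mul h₁
    (eventually_gt_atTop 0 |>.mono fun z hz => rpow_pos_of_pos hz α) hε).and
    (eventually_ge_atTop 1))
  have hM₀ : 0 < M := zero_lt_one.trans_le (hM M le_rfl).2
  set K := fun z => (truncatedMoment ν₂ α M (z / M)).toReal
  have hK : Tendsto (fun z => K z / log (log z)) atTop (𝓝 (α * c₂)) := by
    have := ((tendsto_toReal_truncatedMoment_div_log_log ν₂ hα hM₀ h₂).comp
      (tendsto_id.atTop_div_const hM₀)).mul (tendsto_log_log_div_const_div_log_log hM₀)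
    rw [mul_one] at this
    refine this.congr' ?_
    filter_upwards [(hloglog.comp (tendsto_id.atTop_div_const hM₀)).eventually_gt_atTop 0]
      with z hz
    exact div_mul_div_cancel₀ hz.ne'
  have hR : Tendsto (fun z => (z ^ α * ν₁.real (Ioi (z / M)) + z ^ α * ν₂.real (Ioi (z / M)))
      / log (log z)) atTop (𝓝 0) :=
    ((tendsto_rpow_mul_comp_div_const hM₀ h₁).add (tendsto_rpow_mul_comp_div_const hM₀
      (tendsto_rpow_mul_of_tendsto_rpow_mul_log_mul h₂))).div_atTop hloglog
  refine ⟨fun z => (c₁ - ε) * (K z / log (log z)),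
    fun z => (c₁ + ε) * (K z / log (log z)) + (z ^ α * ν₁.real (Ioi (z / M))
      + z ^ α * ν₂.real (Ioi (z / M))) / log (log z),
    hK.const_mul _, by simpa using (hK.const_mul _).add hR, ?_⟩
  filter_upwards [eventually_ge_atTop (M * M), hloglog.eventually_gt_atTop 0] with z hz hL
  rw [← mul_div_assoc, ← mul_div_assoc, ← add_div, div_le_div_iff_of_pos_right hL,
    div_le_div_iff_of_pos_right hL]
  exact ⟨le_rpow_mul_toReal_productTail hM₀ hz fun x hx => (hM x hx).1.1,
    (rpow_mul_toReal_productTail_le hα.le hM₀ hz fun x hx => (hM x hx).1.2).trans_eq (by ring)⟩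

end TailOfProduct

theorem tail_product_symmetric_loglog_general
    {Ω : Type*} [MeasurableSpace Ω] (μ : Measure Ω) [IsProbabilityMeasure μ]
    (X₁ X₂ : Ω → ℝ) (hm₁ : Measurable X₁) (hm₂ : Measurable X₂)
    (hind : IndepFun X₁ X₂ μ)
    (hsym₁ : Measure.map X₁ μ = Measure.map (fun ω => -X₁ ω) μ)
    (hsym₂ : Measure.map X₂ μ = Measure.map (fun ω => -X₂ ω) μ)
    (α c₁ c₂ : ℝ) (hα₀ : 0 < α)
    (h₁ : Tendsto (fun z : ℝ => z ^ α * (μ {ω | X₁ ω > z}).toReal)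
      atTop (nhds c₁))
    (h₂ : Tendsto (fun z : ℝ => z ^ α * Real.log z * (μ {ω | X₂ ω > z}).toReal)
      atTop (nhds c₂)) :
    Tendsto (fun z : ℝ => z ^ α * (Real.log (Real.log z))⁻¹ *
      (μ {ω | X₁ ω * X₂ ω > z}).toReal) atTop (nhds (2 * c₁ * c₂ * α)) := by
  have := isNegInvariant_map_of_map_eq_map_neg hm₁ hsym₁
  have := isNegInvariant_map_of_map_eq_map_neg hm₂ hsym₂
  have := Measure.isProbabilityMeasure_map (μ := μ) hm₁.aemeasurable
  have := Measure.isProbabilityMeasure_map (μ := μ) hm₂.aemeasurable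
  have htail : ∀ {X : Ω → ℝ}, Measurable X →
      ∀ z, (μ {ω | X ω > z}).toReal = (μ.map X).real (Ioi z) :=
    fun hX _ => (map_measureReal_apply hX measurableSet_Ioi).symm
  simp only [htail hm₁, htail hm₂] at h₁ h₂
  convert ((tendsto_rpow_mul_toReal_productTail_div_log_log hα₀ h₁ h₂).const_mul 2).congr' ?_
    using 2
  · ring
  filter_upwards [eventually_gt_atTop 0] with z hz
  rw [show {ω | X₁ ω * X₂ ω > z} = {ω | z < X₁ ω * X₂ ω} from rfl,
    hind.measure_lt_mul_eq_two_mul_productTail hm₁ hm₂ hz, ENNReal.toReal_mul, ENNReal.toReal_ofNat]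
  ring

theorem tail_product_symmetric_loglog
    {Ω : Type*} [MeasurableSpace Ω] (μ : Measure Ω) [IsProbabilityMeasure μ]
    (X₁ X₂ : Ω → ℝ) (hm₁ : Measurable X₁) (hm₂ : Measurable X₂)
    (hind : IndepFun X₁ X₂ μ)
    (hsym₁ : Measure.map X₁ μ = Measure.map (fun ω => -X₁ ω) μ)
    (hsym₂ : Measure.map X₂ μ = Measure.map (fun ω => -X₂ ω) μ)
    (α c₁ c₂ : ℝ) (hα₀ : 0 < α) (hα₂ : α < 2) (hc₁ : 0 < c₁) (hc₂ : 0 < c₂)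
    (h₁ : Tendsto (fun z : ℝ => z ^ α * (μ {ω | X₁ ω > z}).toReal)
      atTop (nhds c₁))
    (h₂ : Tendsto (fun z : ℝ => z ^ α * Real.log z * (μ {ω | X₂ ω > z}).toReal)
      atTop (nhds c₂)) :
    Tendsto (fun z : ℝ => z ^ α * (Real.log (Real.log z))⁻¹ *
      (μ {ω | X₁ ω * X₂ ω > z}).toReal) atTop (nhds (2 * c₁ * c₂ * α)) :=
  tail_product_symmetric_loglog_general μ X₁ X₂ hm₁ hm₂ hind hsym₁ hsym₂ α c₁ c₂ hα₀ h₁ h₂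
end

section
/- Let X₁ and X₂ be independent real random variables, α₁ ∈ (0,2), k₁ ≥ 0, c₁⁺, c₁⁻ ≥ 0 with c₁⁺ + c₁⁻ > 0, and suppose lim_{z→∞} z^{α₁} (ln z)^{−k₁} P{±X₁ > z} = c₁^±. Suppose further there is α₂ > α₁ with limsup_{z→∞} z^{α₂} P{|X₂| > z} < ∞. Then lim_{z→∞} z^{α₁} (ln z)^{−k₁} P{X₁X₂ > z} = α₁ ∫₀^∞ x^{α₁−1} (c₁⁺ P{X₂ > x} + c₁⁻ P{−X₂ > x}) dx, and the integral on the right converges. -/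
/-!
Conditioning on `X₂` and using independence, `P{X₁X₂ > z} = E[P{X₁ y > z}]_{y = X₂}`. For fixed
`y ≠ 0` the normalized tail `z^α₁ (ln z)^{-k₁} P{X₁ y > z}` tends to `c₁^± |y|^α₁` (the logarithm is
slowly varying), and a Potter-type bound dominates it by `K (1 + |y|^α₁)` uniformly in large `z`.
Since the tail of `X₂` decays faster than `z^{-α₁}`, `E|X₂|^α₁ < ∞`, so dominated convergence gives
the limit `E[c₁⁺ (X₂⁺)^α₁ + c₁⁻ (X₂⁻)^α₁]`, which the layer-cake formula turns into the stated
integral.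
-/

open MeasureTheory ProbabilityTheory Filter Real

open Set Asymptotics Topology

noncomputable def tailScale (α k z : ℝ) : ℝ := z ^ α * log z ^ (-k)

section tailScale

variable {α k : ℝ}

lemma tailScale_nonneg {z : ℝ} (hz : 1 ≤ z) : 0 ≤ tailScale α k z := by
  have := log_nonneg hz
  unfold tailScale; positivity

lemma tailScale_pos {z : ℝ} (hz : 1 < z) : 0 < tailScale α k z := by
  have := log_pos hz
  unfold tailScale; positivity

lemma tailScale_le_rpow {z : ℝ} (hk : 0 ≤ k) (hz : exp 1 ≤ z) : tailScale α k z ≤ z ^ α := by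
  have hz0 : 0 < z := (exp_pos 1).trans_le hz
  have hlog : 1 ≤ log z := (le_log_iff_exp_le hz0).mpr hz
  calc z ^ α * log z ^ (-k) ≤ z ^ α * 1 := by
        gcongr; exact rpow_le_one_of_one_le_of_nonpos hlog (neg_nonpos.mpr hk)
    _ = z ^ α := mul_one _

lemma tailScale_div_tailScale_div {z a : ℝ} (ha : 0 < a) (hz : 1 < z) (hza : 1 < z / a) :
    tailScale α k z / tailScale α k (z / a) = a ^ α * (log (z / a) / log z) ^ k := by
  have hz0 : 0 < z := one_pos.trans hz
  have hlz : 0 < log z := log_pos hz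
  have hlza : 0 < log (z / a) := log_pos hza
  unfold tailScale
  rw [div_rpow hz0.le ha.le, div_rpow hlza.le hlz.le, rpow_neg hlz.le, rpow_neg hlza.le]
  have : 0 < z ^ α := rpow_pos_of_pos hz0 α
  have : 0 < a ^ α := rpow_pos_of_pos ha α
  have : 0 < log z ^ k := rpow_pos_of_pos hlz k
  have : 0 < log (z / a) ^ k := rpow_pos_of_pos hlza k
  field_simp

lemma tendsto_log_div_div_log {a : ℝ} (ha : 0 < a) :
    Tendsto (fun z => log (z / a) / log z) atTop (𝓝 1) := by
  have hlim : Tendsto (fun z => 1 - log a / log z) atTop (𝓝 (1 - 0)) :=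
    tendsto_const_nhds.sub (tendsto_const_nhds.div_atTop tendsto_log_atTop)
  rw [sub_zero] at hlim
  refine hlim.congr' ?_
  filter_upwards [eventually_gt_atTop 1] with z hz
  rw [log_div (by linarith) ha.ne', sub_div, div_self (log_pos hz).ne']

lemma tendsto_tailScale_div_tailScale_div {a : ℝ} (ha : 0 < a) :
    Tendsto (fun z => tailScale α k z / tailScale α k (z / a)) atTop (𝓝 (a ^ α)) := by
  have hlim := ((tendsto_log_div_div_log ha).rpow_const (p := k) (Or.inl one_ne_zero)).const_mul
    (a ^ α)
  rw [one_rpow, mul_one] at hlim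
  refine hlim.congr' ?_
  filter_upwards [eventually_gt_atTop (max 1 a)] with z hz
  rw [max_lt_iff] at hz
  exact (tailScale_div_tailScale_div ha hz.1 ((one_lt_div ha).mpr hz.2)).symm

lemma Filter.Tendsto.tailScale_mul_comp_div {p : ℝ → ℝ} {c a : ℝ}
    (h : Tendsto (fun t => tailScale α k t * p t) atTop (𝓝 c)) (ha : 0 < a) :
    Tendsto (fun z => tailScale α k z * p (z / a)) atTop (𝓝 (a ^ α * c)) := by
  refine ((tendsto_tailScale_div_tailScale_div (k := k) ha).mul
    (h.comp (tendsto_id.atTop_div_const ha))).congr' ?_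
  filter_upwards [eventually_gt_atTop 1, (tendsto_id.atTop_div_const ha).eventually_gt_atTop 1]
    with z hz hza
  have : tailScale α k (z / a) ≠ 0 := (tailScale_pos hza).ne'
  simp only [Function.comp_apply, id]
  field_simp

lemma log_div_div_log_le_one_add_posLog_inv {z a : ℝ} (ha : 0 < a) (hz : exp 1 ≤ z) :
    log (z / a) / log z ≤ 1 + log⁺ a⁻¹ := by
  have hz0 : 0 < z := (exp_pos 1).trans_le hz
  have hlog : 1 ≤ log z := (le_log_iff_exp_le hz0).mpr hz
  have hpos : 0 ≤ log⁺ a⁻¹ := posLog_nonneg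
  rw [div_le_iff₀ (by linarith), div_eq_mul_inv, log_mul hz0.ne' (inv_ne_zero ha.ne')]
  have hle : log a⁻¹ ≤ log⁺ a⁻¹ := le_max_right 0 _
  nlinarith

lemma one_add_log_inv_le {a δ : ℝ} (ha : 0 < a) (ha1 : a ≤ 1) (hδ : 0 < δ) :
    1 + log a⁻¹ ≤ (1 + δ⁻¹) * a ^ (-δ) := by
  have hpow : a ^ (-δ) = a⁻¹ ^ δ := by rw [rpow_neg ha.le, inv_rpow ha.le]
  have hone : 1 ≤ a⁻¹ ^ δ := one_le_rpow (one_le_inv_iff₀.mpr ⟨ha, ha1⟩) hδ.le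
  have hlog : log a⁻¹ ≤ a⁻¹ ^ δ / δ := log_le_rpow_div (inv_nonneg.mpr ha.le) hδ
  rw [hpow, add_mul, one_mul, ← div_eq_inv_mul]
  linarith

lemma exists_rpow_mul_one_add_posLog_inv_rpow_le (hα : 0 < α) (hk : 0 ≤ k) :
    ∃ D, 1 ≤ D ∧ ∀ a, 0 < a → a ^ α * (1 + log⁺ a⁻¹) ^ k ≤ D * (1 + a ^ α) := by
  set δ := α / (k + 1)
  have hδ : 0 < δ := by positivity
  have hδk : δ * k ≤ α := by
    rw [div_mul_eq_mul_div, div_le_iff₀ (by linarith)]; nlinarith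
  have hD : 1 ≤ (1 + δ⁻¹) ^ k := one_le_rpow (by simp [hδ.le]) hk
  refine ⟨(1 + δ⁻¹) ^ k, hD, fun a ha => ?_⟩
  have haα : 0 ≤ a ^ α := rpow_nonneg ha.le α
  rcases le_or_gt a 1 with ha1 | ha1
  · have hinv : 1 ≤ a⁻¹ := one_le_inv_iff₀.mpr ⟨ha, ha1⟩
    have hlog : log⁺ a⁻¹ = log a⁻¹ := posLog_eq_log (by rwa [abs_of_pos (by positivity)])
    have hbase : 0 ≤ 1 + log a⁻¹ := by linarith [log_nonneg hinv]
    calc a ^ α * (1 + log⁺ a⁻¹) ^ k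
        ≤ a ^ α * ((1 + δ⁻¹) * a ^ (-δ)) ^ k := by
          rw [hlog]; gcongr; exact one_add_log_inv_le ha ha1 hδ
      _ = (1 + δ⁻¹) ^ k * a ^ (α - δ * k) := by
          rw [mul_rpow (by positivity) (by positivity), ← rpow_mul ha.le, sub_eq_add_neg,
            rpow_add ha, neg_mul]; ring
      _ ≤ (1 + δ⁻¹) ^ k * 1 := by
          gcongr; exact rpow_le_one ha.le ha1 (by linarith)
      _ ≤ (1 + δ⁻¹) ^ k * (1 + a ^ α) := by gcongr; linarith
  · have hlog : log⁺ a⁻¹ = 0 := by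
      rw [posLog_eq_zero_iff, abs_of_pos (inv_pos.mpr ha)]; exact inv_le_one_of_one_le₀ ha1.le
    rw [hlog, add_zero, one_rpow, mul_one]
    nlinarith

lemma tailScale_div_tailScale_div_le {z a : ℝ} (hk : 0 ≤ k) (ha : 0 < a) (hz : exp 1 ≤ z)
    (hza : 1 < z / a) :
    tailScale α k z / tailScale α k (z / a) ≤ a ^ α * (1 + log⁺ a⁻¹) ^ k := by
  have hz1 : 1 < z := (one_lt_exp_iff.mpr one_pos).trans_le hz
  rw [tailScale_div_tailScale_div ha hz1 hza]
  gcongr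
  · exact div_nonneg (log_pos hza).le (log_pos hz1).le
  · exact log_div_div_log_le_one_add_posLog_inv ha hz

lemma exists_tailScale_mul_comp_div_le (hα : 0 < α) (hk : 0 ≤ k) {M : ℝ → ℝ}
    (hM1 : ∀ t, M t ≤ 1) (hM : M =O[atTop] fun t => (tailScale α k t)⁻¹) :
    ∃ K, 0 ≤ K ∧ ∀ᶠ z in atTop, ∀ a, 0 < a → tailScale α k z * M (z / a) ≤ K * (1 + a ^ α) := by
  obtain ⟨C, hC, hCM⟩ := hM.exists_pos
  obtain ⟨t₀, ht₀⟩ := eventually_atTop.mp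
    (hCM.bound.and ((eventually_ge_atTop (exp 1)).and (eventually_gt_atTop 1)))
  obtain ⟨D, hD, hDa⟩ := exists_rpow_mul_one_add_posLog_inv_rpow_le hα hk
  have ht₀e : exp 1 ≤ t₀ := (ht₀ t₀ le_rfl).2.1
  have ht₀1 : 1 < t₀ := (ht₀ t₀ le_rfl).2.2
  refine ⟨C * D + t₀ ^ α, by positivity, ?_⟩
  filter_upwards [eventually_ge_atTop t₀] with z hz a ha
  have hze : exp 1 ≤ z := ht₀e.trans hz
  have hts : 0 ≤ tailScale α k z := tailScale_nonneg (ht₀1.trans_le hz).le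
  have haα : 0 ≤ a ^ α := rpow_nonneg ha.le α
  -- Either the `O`-bound applies at `z / a`, or `a > z / t₀` and the trivial bound `M ≤ 1`
  -- costs only a factor `t₀ ^ α a ^ α`.
  by_cases hza : t₀ ≤ z / a
  · obtain ⟨hMza, -, hza1⟩ := ht₀ (z / a) hza
    have hMle : M (z / a) ≤ C * (tailScale α k (z / a))⁻¹ := by
      have hpos := tailScale_pos (α := α) (k := k) hza1
      simpa [abs_of_pos hpos, Real.norm_eq_abs] using (le_abs_self _).trans hMza
    calc tailScale α k z * M (z / a)
        ≤ tailScale α k z * (C * (tailScale α k (z / a))⁻¹) := by gcongr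
      _ = C * (tailScale α k z / tailScale α k (z / a)) := by ring
      _ ≤ C * (D * (1 + a ^ α)) := by
          gcongr
          exact (tailScale_div_tailScale_div_le hk ha hze hza1).trans (hDa a ha)
      _ ≤ (C * D + t₀ ^ α) * (1 + a ^ α) := by
          rw [← mul_assoc]; gcongr; linarith [rpow_nonneg (zero_le_one.trans ht₀1.le) α]
  · have hzt : z ≤ t₀ * a := by
      rw [not_le, div_lt_iff₀ ha] at hza; exact hza.le
    calc tailScale α k z * M (z / a) ≤ tailScale α k z * 1 := by gcongr; exact hM1 _
      _ ≤ z ^ α := by rw [mul_one]; exact tailScale_le_rpow hk hze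
      _ ≤ (t₀ * a) ^ α := by gcongr; linarith
      _ = t₀ ^ α * a ^ α := mul_rpow (by linarith) ha.le
      _ ≤ (C * D + t₀ ^ α) * (1 + a ^ α) := by
          have : 0 ≤ C * D := by positivity
          nlinarith [rpow_nonneg (zero_le_one.trans ht₀1.le) α]

lemma isBigO_inv_tailScale_of_tendsto {c : ℝ} {p : ℝ → ℝ}
    (h : Tendsto (fun t => tailScale α k t * p t) atTop (𝓝 c)) :
    p =O[atTop] fun t => (tailScale α k t)⁻¹ := by
  refine ((h.isBigO_one ℝ).mul (isBigO_refl (fun t => (tailScale α k t)⁻¹) atTop)).congr' ?_ ?_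
  · filter_upwards [eventually_gt_atTop 1] with t ht
    field_simp [(tailScale_pos (α := α) (k := k) ht).ne']
  · exact Eventually.of_forall fun t => one_mul _

end tailScale

section Breiman

variable {Ω : Type*} [MeasurableSpace Ω] {μ : Measure Ω} {X Y : Ω → ℝ}
  {α k cp cm : ℝ}

lemma measurable_measure_mul_gt [SFinite μ] (hX : Measurable X) (z : ℝ) :
    Measurable fun y => μ {ω | X ω * y > z} :=
  measurable_measure_prodMk_left (s := {q : ℝ × Ω | X q.2 * q.1 > z})
    (measurableSet_lt measurable_const (by fun_prop))

lemma measure_mul_gt_toReal_eq_integral [IsProbabilityMeasure μ] (hX : Measurable X)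
    (hY : Measurable Y) (hind : IndepFun X Y μ) (z : ℝ) :
    (μ {ω | X ω * Y ω > z}).toReal = ∫ y, (μ {ω | X ω * y > z}).toReal ∂(μ.map Y) := by
  have hs : MeasurableSet {p : ℝ × ℝ | p.1 * p.2 > z} :=
    measurableSet_lt measurable_const (by fun_prop)
  have hlin : μ {ω | X ω * Y ω > z} = ∫⁻ y, μ {ω | X ω * y > z} ∂(μ.map Y) := by
    calc μ {ω | X ω * Y ω > z} = μ.map (fun ω => (X ω, Y ω)) {p | p.1 * p.2 > z} :=
          (Measure.map_apply (hX.prodMk hY) hs).symm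
      _ = ((μ.map X).prod (μ.map Y)) {p | p.1 * p.2 > z} := by
          rw [(indepFun_iff_map_prod_eq_prod_map_map hX.aemeasurable hY.aemeasurable).mp hind]
      _ = ∫⁻ y, μ.map X ((fun x => (x, y)) ⁻¹' {p | p.1 * p.2 > z}) ∂(μ.map Y) :=
          Measure.prod_apply_symm hs
      _ = ∫⁻ y, μ {ω | X ω * y > z} ∂(μ.map Y) :=
          lintegral_congr fun y => Measure.map_apply hX (measurable_prodMk_right hs)
  rw [hlin, integral_toReal]
  · exact (measurable_measure_mul_gt hX z).aemeasurable
  · exact Eventually.of_forall fun y => measure_lt_top μ _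

lemma tendsto_tailScale_mul_measure_mul_const_gt (hα : 0 < α)
    (hp : Tendsto (fun z => tailScale α k z * (μ {ω | X ω > z}).toReal) atTop (𝓝 cp))
    (hm : Tendsto (fun z => tailScale α k z * (μ {ω | -X ω > z}).toReal) atTop (𝓝 cm)) (y : ℝ) :
    Tendsto (fun z => tailScale α k z * (μ {ω | X ω * y > z}).toReal) atTop
      (𝓝 (cp * max y 0 ^ α + cm * max (-y) 0 ^ α)) := by
  rcases lt_trichotomy y 0 with hy | rfl | hy
  · have hset : ∀ z, {ω | X ω * y > z} = {ω | -X ω > z / -y} := fun z => by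
      ext ω; simp only [mem_ofPred_eq, gt_iff_lt, div_lt_iff₀ (neg_pos.mpr hy)]; constructor <;>
        intro h <;> linarith
    simp only [hset]
    convert hm.tailScale_mul_comp_div (neg_pos.mpr hy) using 2
    simp [max_eq_right hy.le, max_eq_left (neg_pos.mpr hy).le, zero_rpow hα.ne', mul_comm]
  · have hzero : (fun z => tailScale α k z * (μ {ω | X ω * 0 > z}).toReal) =ᶠ[atTop] 0 := by
      filter_upwards [eventually_ge_atTop 0] with z hz
      simp [not_lt.mpr hz]
    simpa [zero_rpow hα.ne'] using (tendsto_const_nhds (x := (0 : ℝ))).congr' hzero.symm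
  · have hset : ∀ z, {ω | X ω * y > z} = {ω | X ω > z / y} := fun z => by
      ext ω; simp only [mem_ofPred_eq, gt_iff_lt, div_lt_iff₀ hy]
    simp only [hset]
    convert hp.tailScale_mul_comp_div hy using 2
    simp [max_eq_left hy.le, max_eq_right (neg_nonpos.mpr hy.le), zero_rpow hα.ne', mul_comm]

lemma isBigO_measure_abs_gt_of_tendsto [IsFiniteMeasure μ]
    (hp : Tendsto (fun z => tailScale α k z * (μ {ω | X ω > z}).toReal) atTop (𝓝 cp))
    (hm : Tendsto (fun z => tailScale α k z * (μ {ω | -X ω > z}).toReal) atTop (𝓝 cm)) :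
    (fun t => (μ {ω | |X ω| > t}).toReal) =O[atTop] fun t => (tailScale α k t)⁻¹ := by
  have habs : ∀ t, (μ {ω | |X ω| > t}).toReal ≤
      (μ {ω | X ω > t}).toReal + (μ {ω | -X ω > t}).toReal := fun t => by
    rw [← ENNReal.toReal_add (measure_ne_top _ _) (measure_ne_top _ _)]
    exact ENNReal.toReal_mono (by finiteness) ((measure_mono fun ω (hω : t < |X ω|) =>
      lt_abs.mp hω).trans (measure_union_le _ _))
  refine (isBigO_of_le _ fun t => ?_).trans
    ((isBigO_inv_tailScale_of_tendsto hp).add (isBigO_inv_tailScale_of_tendsto hm))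
  simp only [Real.norm_eq_abs, abs_of_nonneg ENNReal.toReal_nonneg,
    abs_of_nonneg (add_nonneg ENNReal.toReal_nonneg ENNReal.toReal_nonneg)]
  exact habs t

lemma exists_tailScale_mul_measure_mul_const_gt_le [IsProbabilityMeasure μ] (hα : 0 < α)
    (hk : 0 ≤ k)
    (hp : Tendsto (fun z => tailScale α k z * (μ {ω | X ω > z}).toReal) atTop (𝓝 cp))
    (hm : Tendsto (fun z => tailScale α k z * (μ {ω | -X ω > z}).toReal) atTop (𝓝 cm)) :
    ∃ K, ∀ᶠ z in atTop, ∀ y,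
      tailScale α k z * (μ {ω | X ω * y > z}).toReal ≤ K * (1 + |y| ^ α) := by
  obtain ⟨K, hK, hKz⟩ := exists_tailScale_mul_comp_div_le hα hk (fun t => measureReal_le_one)
    (isBigO_measure_abs_gt_of_tendsto hp hm)
  refine ⟨K, ?_⟩
  filter_upwards [hKz, eventually_ge_atTop 1] with z hz hz1 y
  rcases eq_or_ne y 0 with rfl | hy
  · simp [not_lt.mpr (zero_le_one.trans hz1), zero_rpow hα.ne', hK]
  · calc tailScale α k z * (μ {ω | X ω * y > z}).toReal
        ≤ tailScale α k z * (μ {ω | |X ω| > z / |y|}).toReal := by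
          refine mul_le_mul_of_nonneg_left (ENNReal.toReal_mono (measure_ne_top _ _)
            (measure_mono fun ω hω => ?_)) (tailScale_nonneg hz1)
          simp only [mem_ofPred_eq, gt_iff_lt, div_lt_iff₀ (abs_pos.mpr hy), ← abs_mul] at hω ⊢
          exact hω.trans_le (le_abs_self _)
      _ ≤ K * (1 + |y| ^ α) := hz |y| (abs_pos.mpr hy)

theorem tendsto_tailScale_mul_measure_mul_gt [IsProbabilityMeasure μ] (hX : Measurable X)
    (hY : Measurable Y) (hind : IndepFun X Y μ) (hα : 0 < α) (hk : 0 ≤ k)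
    (hp : Tendsto (fun z => tailScale α k z * (μ {ω | X ω > z}).toReal) atTop (𝓝 cp))
    (hm : Tendsto (fun z => tailScale α k z * (μ {ω | -X ω > z}).toReal) atTop (𝓝 cm))
    (hmom : Integrable (fun ω => |Y ω| ^ α) μ) :
    Tendsto (fun z => tailScale α k z * (μ {ω | X ω * Y ω > z}).toReal) atTop
      (𝓝 (∫ ω, cp * max (Y ω) 0 ^ α + cm * max (-Y ω) 0 ^ α ∂μ)) := by
  obtain ⟨K, hK⟩ := exists_tailScale_mul_measure_mul_const_gt_le hα hk hp hm
  rw [← integral_map (f := fun y => cp * max y 0 ^ α + cm * max (-y) 0 ^ α) hY.aemeasurable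
    (by fun_prop)]
  simp only [measure_mul_gt_toReal_eq_integral hX hY hind, ← integral_const_mul]
  refine tendsto_integral_filter_of_dominated_convergence (fun y => K * (1 + |y| ^ α))
    (Eventually.of_forall fun z =>
      ((measurable_measure_mul_gt hX z).ennreal_toReal.const_mul _).aestronglyMeasurable)
    ?_ ?_ (Eventually.of_forall (tendsto_tailScale_mul_measure_mul_const_gt hα hp hm))
  · filter_upwards [hK, eventually_ge_atTop 1] with z hz hz1
    refine Eventually.of_forall fun y => ?_
    rw [Real.norm_of_nonneg (mul_nonneg (tailScale_nonneg hz1) ENNReal.toReal_nonneg)]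
    exact hz y
  · exact ((integrable_const 1).add ((integrable_map_measure (g := fun y => |y| ^ α)
      (by fun_prop : Measurable fun y : ℝ => |y| ^ α).aestronglyMeasurable
      hY.aemeasurable).mpr hmom)).const_mul K

end Breiman

section LayerCake

variable {Ω : Type*} [MeasurableSpace Ω] {μ : Measure Ω} [IsProbabilityMeasure μ] {Y : Ω → ℝ}
  {p : ℝ}

lemma measurable_measure_gt_toReal : Measurable fun t => (μ {ω | Y ω > t}).toReal :=
  (Antitone.measurable fun _ _ hst =>
    ENNReal.toReal_mono (measure_ne_top _ _) (measure_mono fun _ h => hst.trans_lt h))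

lemma integrableOn_rpow_sub_one_mul_measure_gt {β : ℝ} (hp : 0 < p) (hpβ : p < β)
    (hY : IsBoundedUnder (· ≤ ·) atTop fun t => t ^ β * (μ {ω | Y ω > t}).toReal) :
    IntegrableOn (fun t => t ^ (p - 1) * (μ {ω | Y ω > t}).toReal) (Ioi 0) := by
  obtain ⟨b, hb⟩ := hY
  obtain ⟨T, hT⟩ := eventually_atTop.mp ((eventually_map.mp hb).and (eventually_gt_atTop 0))
  have hT0 : 0 < T := (hT T le_rfl).2
  have hmeas : AEStronglyMeasurable (fun t => t ^ (p - 1) * (μ {ω | Y ω > t}).toReal) :=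
    ((by fun_prop : Measurable fun t : ℝ => t ^ (p - 1)).mul
      measurable_measure_gt_toReal).aestronglyMeasurable
  rw [← Ioc_union_Ioi_eq_Ioi hT0.le]
  refine IntegrableOn.union ?_ ?_
  · have hpow : IntegrableOn (fun t : ℝ => t ^ (p - 1)) (Ioc 0 T) := by
      rw [← intervalIntegrable_iff_integrableOn_Ioc_of_le hT0.le]
      exact intervalIntegral.intervalIntegrable_rpow' (by linarith)
    refine hpow.mono' hmeas.restrict ((ae_restrict_iff' measurableSet_Ioc).mpr
      (Eventually.of_forall fun t ht => ?_))
    rw [norm_mul, Real.norm_of_nonneg (rpow_nonneg ht.1.le _),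
      Real.norm_of_nonneg ENNReal.toReal_nonneg]
    exact mul_le_of_le_one_right (rpow_nonneg ht.1.le _) measureReal_le_one
  · have hpow : IntegrableOn (fun t : ℝ => t ^ (p - 1 - β) * b) (Ioi T) :=
      (integrableOn_Ioi_rpow_of_lt (by linarith) hT0).mul_const b
    refine hpow.mono' hmeas.restrict ((ae_restrict_iff' measurableSet_Ioi).mpr
      (Eventually.of_forall fun t (ht : T < t) => ?_))
    have ht0 : 0 < t := hT0.trans ht
    rw [norm_mul, Real.norm_of_nonneg (rpow_nonneg ht0.le _),
      Real.norm_of_nonneg ENNReal.toReal_nonneg]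
    calc t ^ (p - 1) * (μ {ω | Y ω > t}).toReal
        = t ^ (p - 1 - β) * (t ^ β * (μ {ω | Y ω > t}).toReal) := by
          rw [← mul_assoc, ← rpow_add ht0, sub_add_cancel]
      _ ≤ t ^ (p - 1 - β) * b := by gcongr; exact (hT t ht.le).1

lemma integrable_max_rpow_and_integral_eq (hY : Measurable Y) (hp : 0 < p)
    (hint : IntegrableOn (fun t => t ^ (p - 1) * (μ {ω | Y ω > t}).toReal) (Ioi 0)) :
    Integrable (fun ω => max (Y ω) 0 ^ p) μ ∧
      ∫ ω, max (Y ω) 0 ^ p ∂μ = p * ∫ t in Ioi 0, t ^ (p - 1) * (μ {ω | Y ω > t}).toReal := by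
  have hnn : 0 ≤ᵐ[μ] fun ω => max (Y ω) 0 := ae_of_all _ fun ω => le_max_right _ _
  have hnnp : 0 ≤ᵐ[μ] fun ω => max (Y ω) 0 ^ p := ae_of_all _ fun ω => by positivity
  have hmeas : AEStronglyMeasurable (fun ω => max (Y ω) 0 ^ p) μ :=
    ((hY.max measurable_const).pow_const p).aestronglyMeasurable
  have hcake := lintegral_rpow_eq_lintegral_meas_lt_mul μ hnn (by fun_prop) hp
  have htail : ∫⁻ t in Ioi 0, μ {ω | t < max (Y ω) 0} * ENNReal.ofReal (t ^ (p - 1)) =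
      ∫⁻ t in Ioi 0, ENNReal.ofReal (t ^ (p - 1) * (μ {ω | Y ω > t}).toReal) := by
    refine setLIntegral_congr_fun measurableSet_Ioi fun t (ht : 0 < t) => ?_
    have hset : {ω | t < max (Y ω) 0} = {ω | Y ω > t} := by
      ext ω; simp [not_lt.mpr ht.le]
    rw [hset, ENNReal.ofReal_mul (rpow_nonneg ht.le _), ENNReal.ofReal_toReal (measure_ne_top _ _),
      mul_comm]
  have hint' : Integrable (fun ω => max (Y ω) 0 ^ p) μ := by
    refine ⟨hmeas, (hasFiniteIntegral_iff_ofReal hnnp).mpr ?_⟩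
    rw [hcake, htail]
    exact ENNReal.mul_lt_top ENNReal.ofReal_lt_top hint.lintegral_lt_top
  refine ⟨hint', ?_⟩
  rw [integral_eq_lintegral_of_nonneg_ae hnnp hmeas, hcake, htail, ENNReal.toReal_mul,
    ENNReal.toReal_ofReal hp.le, integral_eq_lintegral_of_nonneg_ae _ hint.aestronglyMeasurable]
  exact (ae_restrict_iff' measurableSet_Ioi).mpr (Eventually.of_forall fun t (ht : 0 < t) => by
    positivity)

lemma isBoundedUnder_rpow_mul_measure_gt_of_le {Z : Ω → ℝ} {β : ℝ} (hYZ : ∀ ω, Y ω ≤ Z ω)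
    (hZ : IsBoundedUnder (· ≤ ·) atTop fun t => t ^ β * (μ {ω | Z ω > t}).toReal) :
    IsBoundedUnder (· ≤ ·) atTop fun t => t ^ β * (μ {ω | Y ω > t}).toReal :=
  hZ.mono_le <| (eventually_ge_atTop 0).mono fun t ht =>
    mul_le_mul_of_nonneg_left (ENNReal.toReal_mono (measure_ne_top _ _)
      (measure_mono fun ω (hω : t < Y ω) => hω.trans_le (hYZ ω))) (rpow_nonneg ht _)

lemma integrable_abs_rpow_of_isBoundedUnder {β : ℝ} (hY : Measurable Y) (hp : 0 < p)
    (hpβ : p < β) (h : IsBoundedUnder (· ≤ ·) atTop fun t => t ^ β * (μ {ω | |Y ω| > t}).toReal) :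
    Integrable (fun ω => |Y ω| ^ p) μ := by
  simpa only [abs_nonneg, max_eq_left] using (integrable_max_rpow_and_integral_eq hY.abs hp
    (integrableOn_rpow_sub_one_mul_measure_gt hp hpβ h)).1

lemma integrableOn_tails_and_integral_eq {β : ℝ} (hY : Measurable Y) (hp : 0 < p)
    (hpβ : p < β) (h : IsBoundedUnder (· ≤ ·) atTop fun t => t ^ β * (μ {ω | |Y ω| > t}).toReal)
    (cp cm : ℝ) :
    IntegrableOn (fun t => t ^ (p - 1) *
        (cp * (μ {ω | Y ω > t}).toReal + cm * (μ {ω | -Y ω > t}).toReal)) (Ioi 0) ∧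
      ∫ ω, cp * max (Y ω) 0 ^ p + cm * max (-Y ω) 0 ^ p ∂μ =
        p * ∫ t in Ioi 0, t ^ (p - 1) *
          (cp * (μ {ω | Y ω > t}).toReal + cm * (μ {ω | -Y ω > t}).toReal) := by
  have hIp := integrableOn_rpow_sub_one_mul_measure_gt hp hpβ
    (isBoundedUnder_rpow_mul_measure_gt_of_le (fun ω => le_abs_self (Y ω)) h)
  have hIm := integrableOn_rpow_sub_one_mul_measure_gt hp hpβ
    (isBoundedUnder_rpow_mul_measure_gt_of_le (Y := (-Y ·)) (fun ω => neg_le_abs (Y ω)) h)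
  obtain ⟨hintp, hEp⟩ := integrable_max_rpow_and_integral_eq hY hp hIp
  obtain ⟨hintm, hEm⟩ := integrable_max_rpow_and_integral_eq (Y := (-Y ·)) hY.neg hp hIm
  have hsum : EqOn (fun t => cp * (t ^ (p - 1) * (μ {ω | Y ω > t}).toReal) +
        cm * (t ^ (p - 1) * (μ {ω | -Y ω > t}).toReal))
      (fun t => t ^ (p - 1) * (cp * (μ {ω | Y ω > t}).toReal + cm * (μ {ω | -Y ω > t}).toReal))
      (Ioi 0) := fun t _ => by ring
  refine ⟨IntegrableOn.congr_fun ((hIp.const_mul cp).add (hIm.const_mul cm)) hsum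
    measurableSet_Ioi, ?_⟩
  rw [← setIntegral_congr_fun measurableSet_Ioi hsum,
    integral_add (hIp.const_mul cp) (hIm.const_mul cm), integral_const_mul, integral_const_mul,
    integral_add (hintp.const_mul cp) (hintm.const_mul cm), integral_const_mul,
    integral_const_mul, hEp, hEm]
  ring

end LayerCake

theorem tail_product_different_indices_general
    {Ω : Type*} [MeasurableSpace Ω] (μ : Measure Ω) [IsProbabilityMeasure μ]
    (X₁ X₂ : Ω → ℝ) (hm₁ : Measurable X₁) (hm₂ : Measurable X₂)
    (hind : IndepFun X₁ X₂ μ)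
    (α₁ k₁ c₁p c₁m α₂ : ℝ) (hα₁ : 0 < α₁) (hk₁ : 0 ≤ k₁)
    (hα₂ : α₁ < α₂)
    (h₁p : Tendsto (fun z : ℝ => z ^ α₁ * (Real.log z) ^ (-k₁) *
      (μ {ω | X₁ ω > z}).toReal) atTop (nhds c₁p))
    (h₁m : Tendsto (fun z : ℝ => z ^ α₁ * (Real.log z) ^ (-k₁) *
      (μ {ω | -X₁ ω > z}).toReal) atTop (nhds c₁m))
    (h₂ : IsBoundedUnder (· ≤ ·) atTop
      (fun z : ℝ => z ^ α₂ * (μ {ω | |X₂ ω| > z}).toReal)) :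
    IntegrableOn (fun x : ℝ => x ^ (α₁ - 1) *
        (c₁p * (μ {ω | X₂ ω > x}).toReal + c₁m * (μ {ω | -X₂ ω > x}).toReal))
      (Set.Ioi 0) ∧
    Tendsto (fun z : ℝ => z ^ α₁ * (Real.log z) ^ (-k₁) *
        (μ {ω | X₁ ω * X₂ ω > z}).toReal) atTop
      (nhds (α₁ * ∫ x in Set.Ioi (0:ℝ), x ^ (α₁ - 1) *
        (c₁p * (μ {ω | X₂ ω > x}).toReal + c₁m * (μ {ω | -X₂ ω > x}).toReal))) := by
  obtain ⟨hint, hlim⟩ := integrableOn_tails_and_integral_eq hm₂ hα₁ hα₂ h₂ c₁p c₁m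
  refine ⟨hint, ?_⟩
  rw [← hlim]
  exact tendsto_tailScale_mul_measure_mul_gt hm₁ hm₂ hind hα₁ hk₁ h₁p h₁m
    (integrable_abs_rpow_of_isBoundedUnder hm₂ hα₁ hα₂ h₂)

theorem tail_product_different_indices
    {Ω : Type*} [MeasurableSpace Ω] (μ : Measure Ω) [IsProbabilityMeasure μ]
    (X₁ X₂ : Ω → ℝ) (hm₁ : Measurable X₁) (hm₂ : Measurable X₂)
    (hind : IndepFun X₁ X₂ μ)
    (α₁ k₁ c₁p c₁m α₂ : ℝ) (hα₁ : 0 < α₁) (hα₁' : α₁ < 2) (hk₁ : 0 ≤ k₁)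
    (hc₁p : 0 ≤ c₁p) (hc₁m : 0 ≤ c₁m) (hc : 0 < c₁p + c₁m) (hα₂ : α₁ < α₂)
    (h₁p : Tendsto (fun z : ℝ => z ^ α₁ * (Real.log z) ^ (-k₁) *
      (μ {ω | X₁ ω > z}).toReal) atTop (nhds c₁p))
    (h₁m : Tendsto (fun z : ℝ => z ^ α₁ * (Real.log z) ^ (-k₁) *
      (μ {ω | -X₁ ω > z}).toReal) atTop (nhds c₁m))
    (h₂ : IsBoundedUnder (· ≤ ·) atTop
      (fun z : ℝ => z ^ α₂ * (μ {ω | |X₂ ω| > z}).toReal)) :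
    IntegrableOn (fun x : ℝ => x ^ (α₁ - 1) *
        (c₁p * (μ {ω | X₂ ω > x}).toReal + c₁m * (μ {ω | -X₂ ω > x}).toReal))
      (Set.Ioi 0) ∧
    Tendsto (fun z : ℝ => z ^ α₁ * (Real.log z) ^ (-k₁) *
        (μ {ω | X₁ ω * X₂ ω > z}).toReal) atTop
      (nhds (α₁ * ∫ x in Set.Ioi (0:ℝ), x ^ (α₁ - 1) *
        (c₁p * (μ {ω | X₂ ω > x}).toReal + c₁m * (μ {ω | -X₂ ω > x}).toReal))) :=
  tail_product_different_indices_general μ X₁ X₂ hm₁ hm₂ hind α₁ k₁ c₁p c₁m α₂ hα₁ hk₁ hα₂ h₁p h₁m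
    h₂
end

section
/- Let Y = V₁V₂ and Z = V₂V₃ where V₁, V₂, V₃ are independent real random variables such that lim_{z→∞} z^{α}(ln z)^{−u_i} P{±V_i > z} = v_i^± with α > 0, u_i ≥ 0 and v_i⁺ + v_i⁻ > 0 for i = 1, 2, 3. Then limsup_{z→∞} z^{α}(ln z)^{−u₂} P{|Y| > z and |Z| > z} < ∞. -/
/-!
On the event, `min (|V₁|, |V₃|) * |V₂| > z`. The factor `W = min (|V₁|, |V₃|)` is independent of
`V₂`, and its tail `P(|V₁| > t) P(|V₃| > t) = O(t^(-3α/2))` is strictly lighter than that of `V₂`.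
Cutting `W` into dyadic shells `2^k ≤ W < 2^(k+1)` gives
`P(W |V₂| > z) ≤ P(|V₂| > z) + ∑ₖ P(W ≥ 2^k) P(|V₂| > z / 2^(k+1))`, and a Potter-type bound
`P(|V₂| > s) ≤ C s^(-α) (log z)^u₂` for all `s ≤ z` turns the `k`-th term into
`O(2^(k(α - β)) z^(-α) (log z)^u₂)` with `β = 3α/2`, a convergent geometric series.
-/

open MeasureTheory ProbabilityTheory Filter Real Asymptotics Topology

lemma isBigO_inv_of_tendsto_mul {α : Type*} {l : Filter α} {f g : α → ℝ} {c : ℝ}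
    (hg : ∀ᶠ x in l, g x ≠ 0) (h : Tendsto (fun x => g x * f x) l (𝓝 c)) :
    f =O[l] fun x => (g x)⁻¹ := by
  refine ((h.isBigO_one ℝ).mul (isBigO_refl (fun x => (g x)⁻¹) l)).congr' ?_
    (.of_forall fun x => one_mul _)
  filter_upwards [hg] with x hx
  field_simp

lemma isBoundedUnder_mul_of_isBigO_inv {α : Type*} {l : Filter α} {f g : α → ℝ}
    (h : f =O[l] fun x => (g x)⁻¹) : IsBoundedUnder (· ≤ ·) l fun x => g x * f x := by
  have hbig : (fun x => g x * f x) =O[l] fun _ => (1 : ℝ) :=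
    ((isBigO_refl g l).mul h).trans <| isBigO_of_le l fun x => by
      by_cases hx : g x = 0 <;> simp [hx]
  exact hbig.isBoundedUnder_le.mono_le (.of_forall fun x => le_norm_self _)

lemma inv_rpow_mul_log_rpow_neg {t : ℝ} (ht : 1 ≤ t) (α u : ℝ) :
    (t ^ α * log t ^ (-u))⁻¹ = t ^ (-α) * log t ^ u := by
  rw [mul_inv, ← rpow_neg (by linarith), rpow_neg (log_nonneg ht), inv_inv]

lemma isBigO_rpow_neg_mul_log_rpow_atTop (α u : ℝ) {ε : ℝ} (hε : 0 < ε) :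
    (fun t => t ^ (-α) * log t ^ u) =O[atTop] fun t => t ^ (ε - α) := by
  refine ((isBigO_refl (fun t : ℝ => t ^ (-α)) atTop).mul
    (isLittleO_log_rpow_rpow_atTop u hε).isBigO).congr' .rfl ?_
  filter_upwards [eventually_gt_atTop 0] with t ht
  rw [← rpow_add ht, neg_add_eq_sub]

lemma eventually_monotone_log_rpow {u : ℝ} (hu : 0 ≤ u) :
    ∀ᶠ s in atTop, ∀ t, s ≤ t → log s ^ u ≤ log t ^ u := by
  filter_upwards [eventually_ge_atTop 1] with s hs t hst
  exact rpow_le_rpow (log_nonneg hs) (log_le_log (by linarith) hst) hu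

lemma eventually_one_le_log_rpow {u : ℝ} (hu : 0 ≤ u) : ∀ᶠ t in atTop, 1 ≤ log t ^ u := by
  filter_upwards [eventually_ge_atTop (exp 1)] with t ht
  exact one_le_rpow (by rwa [le_log_iff_exp_le ((exp_pos 1).trans_le ht)]) hu

lemma exists_le_rpow_neg_mul_of_isBigO {f ℓ : ℝ → ℝ} {α : ℝ} (hα : 0 ≤ α) (hf : ∀ t, f t ≤ 1)
    (hℓ_mono : ∀ᶠ s in atTop, ∀ t, s ≤ t → ℓ s ≤ ℓ t) (hℓ_one : ∀ᶠ t in atTop, 1 ≤ ℓ t)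
    (hfℓ : f =O[atTop] fun t => t ^ (-α) * ℓ t) :
    ∃ C T, 0 < T ∧ ∀ z, T ≤ z → ∀ s, 0 < s → s ≤ z → f s ≤ C * (s ^ (-α) * ℓ z) := by
  obtain ⟨c, hc, hfc⟩ := hfℓ.exists_pos
  obtain ⟨T, hT⟩ := eventually_atTop.1
    (hfc.bound.and (hℓ_mono.and (hℓ_one.and (eventually_gt_atTop 0))))
  have hT0 : 0 < T := (hT T le_rfl).2.2.2
  refine ⟨max c (T ^ α), T, hT0, fun z hz s hs hsz => ?_⟩
  have hℓz : 1 ≤ ℓ z := (hT z hz).2.2.1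
  rcases le_or_gt T s with hTs | hsT
  · obtain ⟨hfs, hℓs, hℓs1, -⟩ := hT s hTs
    have hℓs0 : 0 ≤ ℓ s := zero_le_one.trans hℓs1
    rw [norm_of_nonneg (mul_nonneg (rpow_nonneg hs.le _) hℓs0)] at hfs
    calc f s ≤ c * (s ^ (-α) * ℓ s) := (le_norm_self _).trans hfs
      _ ≤ max c (T ^ α) * (s ^ (-α) * ℓ z) := by
        gcongr
        exacts [le_max_left _ _, hℓs z hsz]
  · -- below the threshold `T`, the trivial bound `f s ≤ 1` is absorbed by `T ^ α * s ^ (-α) ≥ 1`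
    have hTα : 1 ≤ T ^ α * s ^ (-α) := by
      rw [rpow_neg hs.le, ← div_eq_mul_inv, ← div_rpow hT0.le hs.le]
      exact one_le_rpow ((one_le_div hs).2 hsT.le) hα
    calc f s ≤ 1 := hf s
      _ ≤ T ^ α * s ^ (-α) * ℓ z := by nlinarith
      _ ≤ max c (T ^ α) * (s ^ (-α) * ℓ z) := by
        rw [← mul_assoc]
        have hℓz0 : 0 ≤ ℓ z := zero_le_one.trans hℓz
        gcongr
        exact le_max_right _ _

lemma setOf_lt_abs_mul_subset {Ω : Type*} (X W : Ω → ℝ) (z : ℝ) :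
    {ω | z < |X ω * W ω|} ⊆
      {ω | z < |X ω|} ∪ ⋃ k : ℕ, {ω | z / 2 ^ (k + 1) < |X ω|} ∩ {ω | (2 : ℝ) ^ k ≤ |W ω|} := by
  intro ω hω
  rw [Set.mem_ofPred_eq, abs_mul] at hω
  rcases lt_or_ge |W ω| 1 with hW | hW
  · left
    exact hω.trans_le (mul_le_of_le_one_right (abs_nonneg _) hW.le)
  · right
    obtain ⟨k, hk, hk'⟩ := exists_nat_pow_near hW one_lt_two
    refine Set.mem_iUnion.2 ⟨k, ?_, hk⟩
    rw [Set.mem_ofPred_eq, div_lt_iff₀ (by positivity)]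
    exact hω.trans_le (mul_le_mul_of_nonneg_left hk'.le (abs_nonneg _))

lemma measureReal_iUnion_le_tsum {Ω : Type*} [MeasurableSpace Ω] {μ : Measure Ω}
    [IsFiniteMeasure μ] {A : ℕ → Set Ω} {a : ℕ → ℝ} (ha : Summable a)
    (hA : ∀ k, μ.real (A k) ≤ a k) : μ.real (⋃ k, A k) ≤ ∑' k, a k := by
  have ha0 (k : ℕ) : 0 ≤ a k := measureReal_nonneg.trans (hA k)
  refine ENNReal.toReal_le_of_le_ofReal (tsum_nonneg ha0) ?_
  calc μ (⋃ k, A k) ≤ ∑' k, μ (A k) := measure_iUnion_le _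
    _ ≤ ∑' k, ENNReal.ofReal (a k) := ENNReal.tsum_le_tsum fun k =>
        (ENNReal.le_ofReal_iff_toReal_le (measure_ne_top _ _) (ha0 k)).2 (hA k)
    _ = ENNReal.ofReal (∑' k, a k) := (ENNReal.ofReal_tsum_of_nonneg ha0 ha).symm

lemma isBigO_measureReal_lt_abs_of_tendsto {Ω : Type*} [MeasurableSpace Ω] {μ : Measure Ω}
    [IsFiniteMeasure μ] {V : Ω → ℝ} {α u c c' : ℝ}
    (hpos : Tendsto (fun t => t ^ α * log t ^ (-u) * μ.real {ω | t < V ω}) atTop (𝓝 c))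
    (hneg : Tendsto (fun t => t ^ α * log t ^ (-u) * μ.real {ω | t < -V ω}) atTop (𝓝 c')) :
    (fun t => μ.real {ω | t < |V ω|}) =O[atTop] fun t => t ^ (-α) * log t ^ u := by
  have hne : ∀ᶠ t : ℝ in atTop, t ^ α * log t ^ (-u) ≠ 0 := by
    filter_upwards [eventually_gt_atTop 1] with t ht
    have := log_pos ht
    positivity
  have hinv : (fun t : ℝ => (t ^ α * log t ^ (-u))⁻¹) =ᶠ[atTop]
      fun t => t ^ (-α) * log t ^ u := by
    filter_upwards [eventually_ge_atTop 1] with t ht using inv_rpow_mul_log_rpow_neg ht α u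
  have hsplit (t : ℝ) : {ω | t < |V ω|} = {ω | t < V ω} ∪ {ω | t < -V ω} := by
    ext ω
    simp only [Set.mem_ofPred_eq, Set.mem_union, lt_abs]
  refine (isBigO_of_le atTop fun t => ?_).trans
    (((isBigO_inv_of_tendsto_mul hne hpos).add (isBigO_inv_of_tendsto_mul hne hneg)).congr'
      .rfl hinv)
  rw [norm_of_nonneg measureReal_nonneg, norm_of_nonneg (by positivity), hsplit]
  exact measureReal_union_le _ _

namespace ProbabilityTheory.IndepFun

variable {Ω : Type*} [MeasurableSpace Ω] {μ : Measure Ω}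

lemma measureReal_inter_preimage_eq_mul {β γ : Type*} [MeasurableSpace β] [MeasurableSpace γ]
    {X : Ω → β} {Y : Ω → γ} (h : IndepFun X Y μ) (s : Set β) (t : Set γ)
    (hs : MeasurableSet s) (ht : MeasurableSet t) :
    μ.real (X ⁻¹' s ∩ Y ⁻¹' t) = μ.real (X ⁻¹' s) * μ.real (Y ⁻¹' t) := by
  simp only [measureReal_def, h.measure_inter_preimage_eq_mul s t hs ht, ENNReal.toReal_mul]

lemma isBigO_measureReal_lt_min_abs {X Y : Ω → ℝ} (hXY : IndepFun X Y μ) {α u v : ℝ}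
    (hα : 0 < α)
    (hX : (fun t => μ.real {ω | t < |X ω|}) =O[atTop] fun t => t ^ (-α) * log t ^ u)
    (hY : (fun t => μ.real {ω | t < |Y ω|}) =O[atTop] fun t => t ^ (-α) * log t ^ v) :
    (fun t => μ.real {ω | t < min |X ω| |Y ω|}) =O[atTop] fun t => t ^ (-(3 / 2 * α)) := by
  have hindep (t : ℝ) : μ.real {ω | t < |X ω|} * μ.real {ω | t < |Y ω|} =
      μ.real {ω | t < min |X ω| |Y ω|} := by
    simp only [lt_min_iff, Set.ofPred_and]
    exact (hXY.measureReal_inter_preimage_eq_mul {x | t < |x|} {y | t < |y|}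
      (measurableSet_lt measurable_const continuous_abs.measurable)
      (measurableSet_lt measurable_const continuous_abs.measurable)).symm
  have hε : 0 < α / 4 := by positivity
  refine ((hX.mul hY).trans ((isBigO_rpow_neg_mul_log_rpow_atTop α u hε).mul
    (isBigO_rpow_neg_mul_log_rpow_atTop α v hε))).congr' (.of_forall hindep) ?_
  filter_upwards [eventually_gt_atTop 0] with t ht
  rw [← rpow_add ht]
  ring_nf

lemma measureReal_dyadic_shell_le [IsFiniteMeasure μ] {X W : Ω → ℝ} (hXW : IndepFun X W μ)
    {α β C D L z : ℝ} (hz : 0 < z)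
    (hX : ∀ s, 0 < s → s ≤ z → μ.real {ω | s < |X ω|} ≤ C * (s ^ (-α) * L))
    (hW : ∀ s, 0 < s → μ.real {ω | s < |W ω|} ≤ D * s ^ (-β)) (k : ℕ) :
    μ.real ({ω | z / 2 ^ (k + 1) < |X ω|} ∩ {ω | (2 : ℝ) ^ k ≤ |W ω|}) ≤
      C * D * 2 ^ α * 2 ^ β * (2 ^ (α - β)) ^ k * (z ^ (-α) * L) := by
  set x : ℝ := 2 ^ k
  have hx : 0 < x := by positivity
  have hXk : μ.real {ω | z / 2 ^ (k + 1) < |X ω|} ≤ C * ((z / (2 * x)) ^ (-α) * L) := by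
    rw [pow_succ']
    exact hX _ (by positivity)
      (div_le_self hz.le (by linarith [one_le_pow₀ (M₀ := ℝ) one_le_two (n := k)]))
  have hWk : μ.real {ω | x ≤ |W ω|} ≤ D * (x / 2) ^ (-β) :=
    (measureReal_mono (s₂ := {ω | x / 2 < |W ω|}) fun ω (h : x ≤ |W ω|) =>
      show x / 2 < |W ω| by linarith).trans (hW _ (by positivity))
  have hpow : (z / (2 * x)) ^ (-α) * (x / 2) ^ (-β) =
      2 ^ α * 2 ^ β * (2 ^ (α - β)) ^ k * z ^ (-α) := by
    have hρk : ((2 : ℝ) ^ (α - β)) ^ k = x ^ (α - β) := by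
      rw [← rpow_mul_natCast zero_le_two, mul_comm, rpow_natCast_mul zero_le_two]
    rw [hρk, div_rpow hz.le (by positivity), div_rpow hx.le zero_le_two,
      mul_rpow zero_le_two hx.le, rpow_sub hx, rpow_neg zero_le_two, rpow_neg zero_le_two,
      rpow_neg hx.le, rpow_neg hx.le]
    field_simp
  calc _ = μ.real {ω | z / 2 ^ (k + 1) < |X ω|} * μ.real {ω | x ≤ |W ω|} :=
        hXW.measureReal_inter_preimage_eq_mul {y | z / 2 ^ (k + 1) < |y|} {w | x ≤ |w|}
          (measurableSet_lt measurable_const continuous_abs.measurable)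
          (measurableSet_le measurable_const continuous_abs.measurable)
    _ ≤ C * ((z / (2 * x)) ^ (-α) * L) * (D * (x / 2) ^ (-β)) :=
        mul_le_mul hXk hWk measureReal_nonneg (measureReal_nonneg.trans hXk)
    _ = C * D * 2 ^ α * 2 ^ β * (2 ^ (α - β)) ^ k * (z ^ (-α) * L) := by
        linear_combination C * D * L * hpow

theorem isBigO_measureReal_lt_abs_mul [IsProbabilityMeasure μ] {X W : Ω → ℝ}
    (hXW : IndepFun X W μ) {α β : ℝ} (hα : 0 ≤ α) (hαβ : α < β) {ℓ : ℝ → ℝ}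
    (hℓ_mono : ∀ᶠ s in atTop, ∀ t, s ≤ t → ℓ s ≤ ℓ t) (hℓ_one : ∀ᶠ t in atTop, 1 ≤ ℓ t)
    (hX : (fun t => μ.real {ω | t < |X ω|}) =O[atTop] fun t => t ^ (-α) * ℓ t)
    (hW : (fun t => μ.real {ω | t < |W ω|}) =O[atTop] fun t => t ^ (-β)) :
    (fun z => μ.real {ω | z < |X ω * W ω|}) =O[atTop] fun z => z ^ (-α) * ℓ z := by
  obtain ⟨C, T, hT, hXle⟩ :=
    exists_le_rpow_neg_mul_of_isBigO hα (fun _ => measureReal_le_one) hℓ_mono hℓ_one hX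
  obtain ⟨D, T', -, hWle⟩ := exists_le_rpow_neg_mul_of_isBigO (ℓ := fun _ => 1)
    (hα.trans hαβ.le) (fun _ => measureReal_le_one) (.of_forall fun _ _ _ => le_rfl)
    (.of_forall fun _ => le_rfl) (by simpa only [mul_one] using hW)
  have hWle' (s : ℝ) (hs : 0 < s) : μ.real {ω | s < |W ω|} ≤ D * s ^ (-β) := by
    simpa only [mul_one] using hWle _ (le_max_right s T') s hs (le_max_left s T')
  set ρ : ℝ := 2 ^ (α - β)
  have hρ0 : 0 ≤ ρ := by positivity
  have hρ1 : ρ < 1 := rpow_lt_one_of_one_lt_of_neg one_lt_two (by linarith)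
  set K := C * D * 2 ^ α * 2 ^ β
  refine isBigO_iff.2 ⟨C + K * (1 - ρ)⁻¹, ?_⟩
  filter_upwards [eventually_ge_atTop T, hℓ_one] with z hz hℓz
  have hz0 : 0 < z := hT.trans_le hz
  rw [norm_of_nonneg measureReal_nonneg, norm_of_nonneg (by positivity)]
  have hsum : Summable fun k : ℕ => K * ρ ^ k * (z ^ (-α) * ℓ z) :=
    ((summable_geometric_of_lt_one hρ0 hρ1).mul_left K).mul_right _
  calc μ.real {ω | z < |X ω * W ω|}
      ≤ μ.real {ω | z < |X ω|} + μ.real (⋃ k : ℕ,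
          {ω | z / 2 ^ (k + 1) < |X ω|} ∩ {ω | (2 : ℝ) ^ k ≤ |W ω|}) :=
        (measureReal_mono (setOf_lt_abs_mul_subset X W z)).trans (measureReal_union_le _ _)
    _ ≤ C * (z ^ (-α) * ℓ z) + ∑' k : ℕ, K * ρ ^ k * (z ^ (-α) * ℓ z) :=
        add_le_add (hXle z hz z hz0 le_rfl) (measureReal_iUnion_le_tsum hsum
          (hXW.measureReal_dyadic_shell_le hz0 (hXle z hz) hWle'))
    _ = (C + K * (1 - ρ)⁻¹) * (z ^ (-α) * ℓ z) := by
        rw [tsum_mul_right, tsum_mul_left, tsum_geometric_of_lt_one hρ0 hρ1]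
        ring

end ProbabilityTheory.IndepFun

lemma lt_abs_mul_min_abs_iff (a b c z : ℝ) :
    z < |b * min (|a|) (|c|)| ↔ z < |a * b| ∧ z < |b * c| := by
  rw [abs_mul, abs_of_nonneg (le_min (abs_nonneg a) (abs_nonneg c)),
    mul_min_of_nonneg _ _ (abs_nonneg b), lt_min_iff, abs_mul a, abs_mul b, mul_comm |a|]

theorem joint_tail_common_factor_bounded_general
    {Ω : Type*} [MeasurableSpace Ω] (μ : Measure Ω) [IsProbabilityMeasure μ]
    (V₁ V₂ V₃ : Ω → ℝ) (hm₁ : Measurable V₁) (hm₂ : Measurable V₂) (hm₃ : Measurable V₃)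
    (hind : iIndepFun ![V₁, V₂, V₃] μ)
    (α : ℝ) (hα : 0 < α)
    (uexp : Fin 3 → ℝ) (hu : ∀ i, 0 ≤ uexp i)
    (vp vm : Fin 3 → ℝ)
    (hTp : ∀ i, Tendsto (fun z : ℝ => z ^ α * (Real.log z) ^ (-(uexp i)) *
      (μ {ω | ![V₁, V₂, V₃] i ω > z}).toReal) atTop (nhds (vp i)))
    (hTm : ∀ i, Tendsto (fun z : ℝ => z ^ α * (Real.log z) ^ (-(uexp i)) *
      (μ {ω | -(![V₁, V₂, V₃] i ω) > z}).toReal) atTop (nhds (vm i))) :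
    IsBoundedUnder (· ≤ ·) atTop
      (fun z : ℝ => z ^ α * (Real.log z) ^ (-(uexp 1)) *
        (μ {ω | |V₁ ω * V₂ ω| > z ∧ |V₂ ω * V₃ ω| > z}).toReal) := by
  have hV (i : Fin 3) : (fun t => μ.real {ω | t < |![V₁, V₂, V₃] i ω|}) =O[atTop]
      fun t => t ^ (-α) * log t ^ uexp i :=
    isBigO_measureReal_lt_abs_of_tendsto (hTp i) (hTm i)
  set W : Ω → ℝ := fun ω => min |V₁ ω| |V₃ ω|
  have hW : (fun t => μ.real {ω | t < |W ω|}) =O[atTop] fun t => t ^ (-(3 / 2 * α)) := by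
    have habs (ω : Ω) : |W ω| = W ω := abs_of_nonneg (le_min (abs_nonneg _) (abs_nonneg _))
    simp only [habs]
    exact (hind.indepFun (show (0 : Fin 3) ≠ 2 by decide)).isBigO_measureReal_lt_min_abs hα
      (hV 0) (hV 2)
  have hmeas (i : Fin 3) : Measurable (![V₁, V₂, V₃] i) := by fin_cases i <;> assumption
  have h2W : IndepFun V₂ W μ :=
    (hind.indepFun_prodMk hmeas 0 2 1 (by decide) (by decide)).symm.comp measurable_id
      (by fun_prop : Measurable fun p : ℝ × ℝ => min |p.1| |p.2|)
  have hprod := h2W.isBigO_measureReal_lt_abs_mul hα.le (by linarith)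
    (eventually_monotone_log_rpow (hu 1)) (eventually_one_le_log_rpow (hu 1)) (hV 1) hW
  refine isBoundedUnder_mul_of_isBigO_inv (hprod.congr' (.of_forall fun z => ?_) ?_)
  · simp only [W, lt_abs_mul_min_abs_iff, measureReal_def, gt_iff_lt]
  · filter_upwards [eventually_ge_atTop 1] with z hz
    exact (inv_rpow_mul_log_rpow_neg hz α (uexp 1)).symm

theorem joint_tail_common_factor_bounded
    {Ω : Type*} [MeasurableSpace Ω] (μ : Measure Ω) [IsProbabilityMeasure μ]
    (V₁ V₂ V₃ : Ω → ℝ) (hm₁ : Measurable V₁) (hm₂ : Measurable V₂) (hm₃ : Measurable V₃)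
    (hind : iIndepFun ![V₁, V₂, V₃] μ)
    (α : ℝ) (hα : 0 < α)
    (uexp : Fin 3 → ℝ) (hu : ∀ i, 0 ≤ uexp i)
    (vp vm : Fin 3 → ℝ) (hvp : ∀ i, 0 ≤ vp i) (hvm : ∀ i, 0 ≤ vm i)
    (hv : ∀ i, 0 < vp i + vm i)
    (hTp : ∀ i, Tendsto (fun z : ℝ => z ^ α * (Real.log z) ^ (-(uexp i)) *
      (μ {ω | ![V₁, V₂, V₃] i ω > z}).toReal) atTop (nhds (vp i)))
    (hTm : ∀ i, Tendsto (fun z : ℝ => z ^ α * (Real.log z) ^ (-(uexp i)) *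
      (μ {ω | -(![V₁, V₂, V₃] i ω) > z}).toReal) atTop (nhds (vm i))) :
    IsBoundedUnder (· ≤ ·) atTop
      (fun z : ℝ => z ^ α * (Real.log z) ^ (-(uexp 1)) *
        (μ {ω | |V₁ ω * V₂ ω| > z ∧ |V₂ ω * V₃ ω| > z}).toReal) :=
  joint_tail_common_factor_bounded_general μ V₁ V₂ V₃ hm₁ hm₂ hm₃ hind α hα uexp hu vp vm hTp hTm
end

section
/- Let x_n^i → x^i in the J₁ topology on D([0,1]; ℝ^q) for i = 1, …, d, and suppose that for every pair i ≠ j the limits x^i and x^j have no common discontinuity points. Then the sums ∑_{i=1}^d x_n^i converge in the J₁ topology of D([0,1]; ℝ^q) to ∑_{i=1}^d x^i. -/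
open Filter

/-- A function on `[0,1]` is càdlàg: right continuous everywhere, has left limits at
every point other than `0`, and is left continuous at `1`. -/
def Cadlag {X : Type*} [TopologicalSpace X] (f : unitInterval → X) : Prop :=
  (∀ t, ContinuousWithinAt f (Set.Ici t) t) ∧
  (∀ t : unitInterval, t ≠ 0 → ∃ L, Tendsto f (nhdsWithin t (Set.Iio t)) (nhds L)) ∧
  Tendsto f (nhdsWithin 1 (Set.Iio 1)) (nhds (f 1))

/-- Convergence in the Skorokhod `J₁` topology on `D([0,1]; X)`. -/
def J1Tendsto {X : Type*} [PseudoMetricSpace X]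
    (xn : ℕ → unitInterval → X) (x : unitInterval → X) : Prop :=
  ∃ lam : ℕ → unitInterval → unitInterval,
    (∀ n, Function.Bijective (lam n) ∧ StrictMono (lam n)) ∧
    ∀ ε > (0 : ℝ), ∀ᶠ n in atTop, ∀ t,
      |((lam n t : ℝ)) - (t : ℝ)| < ε ∧ dist (xn n (lam n t)) (x t) < ε

/-!
Each limit `x i` is càdlàg, so `[0,1]` splits into finitely many cells `[s, s')` on which `x i`
oscillates by at most `ε`; only the cut points at which `x i` jumps matter, and by hypothesis
these are different for different `i`. Interpolating piecewise linearly, one builds a single time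
change `l`, uniformly close to the identity, that agrees with the `i`-th time change `λᵢ` at
the jumps of `x i`. Then `xn i n (l t) = xn i n (λᵢ u)` with `u = λᵢ⁻¹ (l t)` close to `t`, and
since `l` and `λᵢ` agree at the jumps, no jump of `x i` separates `u` from `t`; hence `x i u` is
within `2ε` of `x i t`. This gives joint `J₁` convergence of `(xn i n)ᵢ`, and summation is uniformly
continuous.
-/

open Set unitInterval
open scoped Interval Topology

theorem exists_mem_Ico_succ_of_mem_Ico {α : Type*} [LinearOrder α] {p : ℕ → α} {K : ℕ}
    {t : α} (ht : t ∈ Ico (p 0) (p K)) : ∃ j < K, t ∈ Ico (p j) (p (j + 1)) := by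
  classical
  have hex : ∃ k, t < p k := ⟨K, ht.2⟩
  obtain ⟨j, hj⟩ : ∃ j, Nat.find hex = j + 1 :=
    Nat.exists_eq_succ_of_ne_zero fun h => (h ▸ Nat.find_spec hex).not_ge ht.1
  refine ⟨j, ?_, not_lt.1 (Nat.find_min hex (by omega)), hj ▸ Nat.find_spec hex⟩
  have := Nat.find_min' hex ht.2
  omega

theorem Finset.exists_strictMonoOn_image_Iic {α : Type*} [LinearOrder α] (S : Finset α)
    (hS : S.Nonempty) :
    ∃ (K : ℕ) (q : ℕ → α), StrictMonoOn q (Set.Iic K) ∧ q '' Set.Iic K = S := by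
  set K := S.card - 1
  have hK : S.card = K + 1 := by have := S.card_pos.2 hS; omega
  let e := S.orderEmbOfFin hK
  have hmin : ∀ k ∈ Set.Iic K, min k K = k := fun k hk => min_eq_left hk
  refine ⟨K, fun k => e ⟨min k K, by omega⟩, fun a ha b hb hab => ?_, ?_⟩
  · simp only [hmin a ha, hmin b hb]
    exact e.strictMono (Fin.mk_lt_mk.2 hab)
  · rw [← S.range_orderEmbOfFin hK]
    refine Set.Subset.antisymm (Set.image_subset_iff.2 fun k _ => ⟨_, rfl⟩) ?_
    rintro _ ⟨⟨k, hk⟩, rfl⟩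
    exact ⟨k, Set.mem_Iic.2 (by omega), by simp only [e, hmin k (Set.mem_Iic.2 (by omega))]⟩

theorem Finset.exists_pos_pairwise_le_dist {α : Type*} [MetricSpace α] (S : Finset α) :
    ∃ ρ > 0, (S : Set α).Pairwise (ρ ≤ dist · ·) := by
  rcases S.offDiag.eq_empty_or_nonempty with h | h
  · refine ⟨1, one_pos, fun s hs s' hs' hne => ?_⟩
    exact absurd (show (s, s') ∈ S.offDiag from Finset.mem_offDiag.2 ⟨hs, hs', hne⟩)
      (h ▸ Finset.notMem_empty _)
  obtain ⟨⟨a, b⟩, hab, hmin⟩ := S.offDiag.exists_min_image (fun q => dist q.1 q.2) h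
  exact ⟨dist a b, dist_pos.2 (Finset.mem_offDiag.1 hab).2.2, fun s hs s' hs' hne =>
    hmin (s, s') (show (s, s') ∈ S.offDiag from Finset.mem_offDiag.2 ⟨hs, hs', hne⟩)⟩

theorem notMem_uIoc_of_apply_eq {α β : Type*} [LinearOrder α] [LinearOrder β] {f g : α → β}
    (hf : StrictMono f) (hg : StrictMono g) {a s t : α} (hs : f s = g s) (ha : f a = g t) :
    s ∉ Ι a t := by
  rw [mem_uIoc]
  rintro (⟨has, hst⟩ | ⟨hts, hsa⟩)
  · exact (hg.monotone hst).not_gt (hs ▸ ha ▸ hf has)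
  · exact (hf.monotone hsa).not_gt (hs ▸ ha ▸ hg hts)

theorem exists_seq_forall_eventually {α : Type*} [Nonempty α] {P : ℕ → α → ℝ → Prop}
    (hP : ∀ n a ε ε', ε ≤ ε' → P n a ε → P n a ε')
    (h : ∀ ε > 0, ∀ᶠ n in atTop, ∃ a, P n a ε) :
    ∃ a : ℕ → α, ∀ ε > 0, ∀ᶠ n in atTop, P n (a n) ε := by
  classical
  -- at stage `n`, aim for the best accuracy `1 / (m + 1)` with `m ≤ n` that is achievable
  set Q : ℕ → ℕ → Prop := fun n m => ∃ a, P n a (1 / (m + 1))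
  set M : ℕ → ℕ := fun n => Nat.findGreatest (Q n) n
  choose a ha using fun n =>
    (em (Q n (M n))).elim (fun h => h.imp fun a ha _ => ha)
      fun h => ⟨Classical.arbitrary α, fun h' => absurd h' h⟩
  refine ⟨a, fun ε hε => ?_⟩
  obtain ⟨m, hm⟩ := exists_nat_one_div_lt hε
  filter_upwards [h _ Nat.one_div_pos_of_nat, eventually_ge_atTop m] with n hn hmn
  have hmM : (m : ℝ) ≤ M n := Nat.cast_le.2 (Nat.le_findGreatest hmn hn)
  refine hP n (a n) _ _ ?_ (ha n (Nat.findGreatest_spec hmn hn))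
  exact (one_div_le_one_div_of_le (by positivity) (by linarith)).trans hm.le

section PiecewiseLinear

/-- Sum of ramps: on `[p k, p (k + 1)]` only the `k`-th term varies, and it is affine there. -/
noncomputable def piecewiseLinear (p v : ℕ → ℝ) (K : ℕ) (t : ℝ) : ℝ :=
  v 0 + ∑ k ∈ Finset.range K,
    (v (k + 1) - v k) / (p (k + 1) - p k) * (max (p k) (min t (p (k + 1))) - p k)

variable {p v : ℕ → ℝ} {K : ℕ}

theorem continuous_piecewiseLinear : Continuous (piecewiseLinear p v K) := by
  unfold piecewiseLinear
  fun_prop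

theorem piecewiseLinear_sub_piecewiseLinear (hp : MonotoneOn p (Iic K)) {j : ℕ} (hj : j < K)
    {s t : ℝ} (hs : s ∈ Icc (p j) (p (j + 1))) (ht : t ∈ Icc (p j) (p (j + 1))) :
    piecewiseLinear p v K t - piecewiseLinear p v K s =
      (v (j + 1) - v j) / (p (j + 1) - p j) * (t - s) := by
  have hp' : ∀ a b, a ≤ b → b ≤ K → p a ≤ p b := fun a b hab hb =>
    hp (mem_Iic.2 (hab.trans hb)) (mem_Iic.2 hb) hab
  unfold piecewiseLinear
  rw [add_sub_add_left_eq_sub, ← Finset.sum_sub_distrib, Finset.sum_eq_single j]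
  · rw [← mul_sub, max_eq_right (le_min ht.1 (hp' _ _ j.le_succ hj)), min_eq_left ht.2,
      max_eq_right (le_min hs.1 (hp' _ _ j.le_succ hj)), min_eq_left hs.2]
    ring
  · intro k hk hkj
    rw [← mul_sub]
    rcases lt_or_gt_of_ne hkj with hkj | hkj
    · have h := hp' (k + 1) j hkj hj.le
      rw [min_eq_right (h.trans ht.1), min_eq_right (h.trans hs.1), sub_self, mul_zero]
    · have h := hp' (j + 1) k hkj (Finset.mem_range.1 hk).le
      rw [max_eq_left ((min_le_left _ _).trans (ht.2.trans h)),
        max_eq_left ((min_le_left _ _).trans (hs.2.trans h)), sub_self, mul_zero]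
  · exact fun h => absurd (Finset.mem_range.2 hj) h

theorem piecewiseLinear_apply (hp : StrictMonoOn p (Iic K)) {j : ℕ} (hj : j ≤ K) :
    piecewiseLinear p v K (p j) = v j := by
  induction j with
  | zero =>
    refine add_eq_left.2 (Finset.sum_eq_zero fun k hk => ?_)
    have h0k := hp.monotoneOn (mem_Iic.2 (Nat.zero_le K))
      (mem_Iic.2 (Finset.mem_range.1 hk).le) (Nat.zero_le k)
    rw [max_eq_left ((min_le_left _ _).trans h0k), sub_self, mul_zero]
  | succ j ih =>
    have hlt := hp (mem_Iic.2 (Nat.le_of_succ_le hj)) (mem_Iic.2 hj) j.lt_succ_self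
    have := piecewiseLinear_sub_piecewiseLinear (v := v) hp.monotoneOn hj
      ⟨le_rfl, hlt.le⟩ ⟨hlt.le, le_rfl⟩
    rw [ih (Nat.le_of_succ_le hj), div_mul_cancel₀ _ (sub_ne_zero.2 hlt.ne')] at this
    linarith

theorem piecewiseLinear_of_mem_Icc (hp : StrictMonoOn p (Iic K)) {j : ℕ} (hj : j < K) {t : ℝ}
    (ht : t ∈ Icc (p j) (p (j + 1))) :
    piecewiseLinear p v K t = v j + (v (j + 1) - v j) / (p (j + 1) - p j) * (t - p j) := by
  have hlt := hp (mem_Iic.2 hj.le) (mem_Iic.2 hj) j.lt_succ_self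
  have := piecewiseLinear_sub_piecewiseLinear (v := v) hp.monotoneOn hj ⟨le_rfl, hlt.le⟩ ht
  rw [piecewiseLinear_apply hp hj.le] at this
  linarith

theorem monotone_piecewiseLinear (hp : MonotoneOn p (Iic K)) (hv : MonotoneOn v (Iic K)) :
    Monotone (piecewiseLinear p v K) := by
  intro s t hst
  unfold piecewiseLinear
  gcongr with k hk
  have hk := Finset.mem_range.1 hk
  exact div_nonneg (sub_nonneg.2 (hv (mem_Iic.2 hk.le) (mem_Iic.2 hk) k.le_succ))
    (sub_nonneg.2 (hp (mem_Iic.2 hk.le) (mem_Iic.2 hk) k.le_succ))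

theorem strictMonoOn_piecewiseLinear (hp : StrictMonoOn p (Iic K)) (hv : StrictMonoOn v (Iic K)) :
    StrictMonoOn (piecewiseLinear p v K) (Icc (p 0) (p K)) := by
  intro s hs t ht hst
  obtain ⟨j, hj, hsj⟩ := exists_mem_Ico_succ_of_mem_Ico ⟨hs.1, hst.trans_le ht.2⟩
  have hpj := hp (mem_Iic.2 hj.le) (mem_Iic.2 hj) j.lt_succ_self
  have hvj := hv (mem_Iic.2 hj.le) (mem_Iic.2 hj) j.lt_succ_self
  calc piecewiseLinear p v K s
      < piecewiseLinear p v K (min t (p (j + 1))) := by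
        rw [← sub_pos, piecewiseLinear_sub_piecewiseLinear hp.monotoneOn hj
          ⟨hsj.1, hsj.2.le⟩ ⟨hsj.1.trans (le_min hst.le hsj.2.le), min_le_right _ _⟩]
        exact mul_pos (div_pos (sub_pos.2 hvj) (sub_pos.2 hpj)) (sub_pos.2 (lt_min hst hsj.2))
    _ ≤ piecewiseLinear p v K t :=
        monotone_piecewiseLinear hp.monotoneOn hv.monotoneOn (min_le_left _ _)

theorem abs_piecewiseLinear_sub_le (hp : StrictMonoOn p (Iic K)) {δ : ℝ}
    (hδ : ∀ k ≤ K, |v k - p k| ≤ δ) {t : ℝ} (ht : t ∈ Icc (p 0) (p K)) :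
    |piecewiseLinear p v K t - t| ≤ δ := by
  rcases ht.2.eq_or_lt with rfl | htK
  · rw [piecewiseLinear_apply hp le_rfl]
    exact hδ K le_rfl
  obtain ⟨j, hj, htj⟩ := exists_mem_Ico_succ_of_mem_Ico ⟨ht.1, htK⟩
  have hlt := sub_pos.2 (hp (mem_Iic.2 hj.le) (mem_Iic.2 hj) j.lt_succ_self)
  set θ := (t - p j) / (p (j + 1) - p j)
  have hθ0 : 0 ≤ θ := div_nonneg (sub_nonneg.2 htj.1) hlt.le
  have hθ1 : θ ≤ 1 := (div_le_one hlt).2 (by linarith [htj.2])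
  have htθ : t - p j = θ * (p (j + 1) - p j) := (div_mul_cancel₀ _ hlt.ne').symm
  have hslope : (v (j + 1) - v j) / (p (j + 1) - p j) * (t - p j) = θ * (v (j + 1) - v j) := by
    rw [htθ]
    field_simp
  -- the deviation from the identity is a convex combination of the deviations at the two knots
  have key : piecewiseLinear p v K t - t =
      (1 - θ) * (v j - p j) + θ * (v (j + 1) - p (j + 1)) := by
    rw [piecewiseLinear_of_mem_Icc hp hj ⟨htj.1, htj.2.le⟩]
    linear_combination hslope - htθ
  have ha := abs_le.1 (hδ j hj.le)
  have hb := abs_le.1 (hδ (j + 1) hj)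
  rw [key, abs_le]
  constructor <;> nlinarith

end PiecewiseLinear

namespace unitInterval

theorem dist_le_dist_of_mem_Ioc {a b s s' : I} (hs : s ∈ Ioc a b) (hs' : s' ∈ Ioc a b) :
    dist s s' ≤ dist a b := by
  rw [Subtype.dist_eq, Subtype.dist_eq, dist_comm (a : ℝ)]
  exact (Real.dist_le_of_mem_Icc ⟨(hs.1.le : (a : ℝ) ≤ s), hs.2⟩
    ⟨(hs'.1.le : (a : ℝ) ≤ s'), hs'.2⟩).trans (le_abs_self _)

theorem strictMonoOn_of_dist_lt {S : Set I} {v : I → I} {ρ : ℝ}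
    (hS : S.Pairwise (ρ ≤ dist · ·)) (hv : ∀ s ∈ S, dist (v s) s < ρ / 2) :
    StrictMonoOn v S := by
  intro s hs s' hs' hlt
  have hρ : ρ ≤ dist s s' := hS hs hs' hlt.ne
  have h := hv s hs
  have h' := hv s' hs'
  have hlt' : (s : ℝ) < s' := hlt
  rw [Subtype.dist_eq, Real.dist_eq, abs_sub_comm, abs_of_pos (sub_pos.2 hlt')] at hρ
  rw [Subtype.dist_eq, Real.dist_eq, abs_lt] at h h'
  show (v s : ℝ) < v s'
  linarith

theorem exists_orderIso_of_strictMonoOn {g : ℝ → ℝ} (hg : Continuous g)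
    (hmono : StrictMonoOn g (Icc 0 1)) (hg0 : g 0 = 0) (hg1 : g 1 = 1) :
    ∃ l : I ≃o I, ∀ t, (l t : ℝ) = g t := by
  have hgI : ∀ t : I, g t ∈ I := fun t =>
    ⟨hg0 ▸ hmono.monotoneOn ⟨le_rfl, zero_le_one⟩ t.2 t.2.1,
      hg1 ▸ hmono.monotoneOn t.2 ⟨zero_le_one, le_rfl⟩ t.2.2⟩
  set l₀ : I → I := fun t => ⟨g t, hgI t⟩
  have hsurj : Function.Surjective l₀ := by
    intro y
    obtain ⟨t, ht, hty⟩ := intermediate_value_Icc zero_le_one hg.continuousOn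
      (show (y : ℝ) ∈ Icc (g 0) (g 1) by rw [hg0, hg1]; exact y.2)
    exact ⟨⟨t, ht⟩, Subtype.ext hty⟩
  exact ⟨StrictMono.orderIsoOfSurjective l₀ (fun s t hst => hmono s.2 t.2 hst) hsurj,
    fun _ => rfl⟩

theorem exists_orderIso_interpolating (S : Finset I) {v : I → I} (h0 : 0 ∈ S) (h1 : 1 ∈ S)
    (hv0 : v 0 = 0) (hv1 : v 1 = 1) (hv : StrictMonoOn v S) {δ : ℝ}
    (hδ : ∀ s ∈ S, dist (v s) s ≤ δ) :
    ∃ l : I ≃o I, (∀ s ∈ S, l s = v s) ∧ ∀ t, dist (l t) t ≤ δ := by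
  obtain ⟨K, q, hq, hqS⟩ := S.exists_strictMonoOn_image_Iic ⟨0, h0⟩
  have hqS' : ∀ k ≤ K, q k ∈ S := fun k hk =>
    Finset.mem_coe.1 (hqS ▸ mem_image_of_mem q (mem_Iic.2 hk))
  have hSq : ∀ s ∈ S, ∃ k ≤ K, q k = s := fun s hs =>
    (hqS.symm ▸ Finset.mem_coe.2 hs : s ∈ q '' Iic K)
  have hq0 : q 0 = 0 := by
    obtain ⟨k, hk, hk0⟩ := hSq 0 h0
    exact le_antisymm (hk0 ▸ hq.monotoneOn (mem_Iic.2 (Nat.zero_le K)) hk (Nat.zero_le k)) nonneg'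
  have hqK : q K = 1 := by
    obtain ⟨k, hk, hk1⟩ := hSq 1 h1
    exact le_antisymm le_one' (hk1 ▸ hq.monotoneOn hk (mem_Iic.2 le_rfl) hk)
  set p : ℕ → ℝ := fun k => q k
  set w : ℕ → ℝ := fun k => v (q k)
  have hp : StrictMonoOn p (Iic K) := fun a ha b hb hab => hq ha hb hab
  have hw : StrictMonoOn w (Iic K) := fun a ha b hb hab =>
    hv (hqS' a ha) (hqS' b hb) (hq ha hb hab)
  have hIcc : Icc (p 0) (p K) = Icc 0 1 := by simp only [p, hq0, hqK, Icc.coe_zero, Icc.coe_one]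
  obtain ⟨l, hl⟩ := exists_orderIso_of_strictMonoOn continuous_piecewiseLinear
    (hIcc ▸ strictMonoOn_piecewiseLinear hp hw)
    (by simpa only [p, w, hq0, hv0, Icc.coe_zero] using
      piecewiseLinear_apply (v := w) hp (Nat.zero_le K))
    (by simpa only [p, w, hqK, hv1, Icc.coe_one] using piecewiseLinear_apply (v := w) hp le_rfl)
  refine ⟨l, fun s hs => ?_, fun t => ?_⟩
  · obtain ⟨k, hk, rfl⟩ := hSq s hs
    exact Subtype.ext ((hl _).trans (piecewiseLinear_apply hp hk))
  · rw [Subtype.dist_eq, Real.dist_eq, hl]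
    refine abs_piecewiseLinear_sub_le hp (fun k hk => ?_) (hIcc ▸ t.2)
    simpa only [Subtype.dist_eq, Real.dist_eq] using hδ (q k) (hqS' k hk)

theorem exists_orderIso_eq_on_disjoint {ι : Type*} [Fintype ι] {J : ι → Finset I}
    (hJ : Pairwise fun i j => Disjoint (J i) (J j)) (lam : ι → I ≃o I) {ρ η : ℝ}
    (hsep : (↑(insert 0 (insert 1 (Finset.univ.biUnion J))) : Set I).Pairwise (ρ ≤ dist · ·))
    (hlam : ∀ i t, dist (lam i t) t ≤ η) (hη0 : 0 ≤ η) (hηρ : η < ρ / 2) :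
    ∃ l : I ≃o I, (∀ i, ∀ s ∈ J i, l s = lam i s) ∧ ∀ t, dist (l t) t ≤ η := by
  classical
  set v : I → I := fun w => if h : ∃ i, w ∈ J i then lam h.choose w else w
  have hv : ∀ i, ∀ s ∈ J i, v s = lam i s := by
    intro i s hs
    have h : ∃ i, s ∈ J i := ⟨i, hs⟩
    simp only [v, dif_pos h, hJ.eq (Finset.not_disjoint_iff.2 ⟨s, h.choose_spec, hs⟩)]
  have hv_near : ∀ w, dist (v w) w ≤ η := by
    intro w
    simp only [v]
    split_ifs
    exacts [hlam _ w, (dist_self w).symm ▸ hη0]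
  have hvI : ∀ w, (∀ i, lam i w = w) → v w = w := by
    intro w hw
    simp only [v]
    split_ifs
    exacts [hw _, rfl]
  obtain ⟨l, hlv, hl⟩ := exists_orderIso_interpolating _ (v := v) (Finset.mem_insert_self _ _)
    (Finset.mem_insert_of_mem (Finset.mem_insert_self _ _))
    (hvI 0 fun i => (lam i).map_bot) (hvI 1 fun i => (lam i).map_top)
    (strictMonoOn_of_dist_lt hsep fun s _ => (hv_near s).trans_lt hηρ) fun s _ => hv_near s
  refine ⟨l, fun i s hs => (hlv s ?_).trans (hv i s hs), hl⟩
  exact Finset.mem_insert_of_mem (Finset.mem_insert_of_mem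
    (Finset.mem_biUnion.2 ⟨i, Finset.mem_univ i, hs⟩))

end unitInterval

section Oscillation

variable {X : Type*} [PseudoMetricSpace X]

/-- Two points with no point of `P` in `Ι u w` lie in the same cell `[s, s')` cut out by
consecutive points of `P`, so this says that `f` oscillates by at most `ε` on each cell. -/
def IsOscPartitionOn (f : I → X) (ε : ℝ) (P : Finset I) (A : Set I) : Prop :=
  ∀ u ∈ A, ∀ w ∈ A, (∀ s ∈ P, s ∉ Ι u w) → dist (f u) (f w) ≤ ε

variable {f : I → X} {ε : ℝ} {P : Finset I} {A B : Set I}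

theorem IsOscPartitionOn.mono (h : IsOscPartitionOn f ε P A) (hBA : B ⊆ A) :
    IsOscPartitionOn f ε P B := by
  intro u hu w hw
  exact h u (hBA hu) w (hBA hw)

theorem IsOscPartitionOn.extend {a : I} {y : X} (hP : IsOscPartitionOn f ε P (Iio a))
    (hB : ∀ w ∈ B, a ≤ w ∧ dist (f w) y < ε / 2) :
    IsOscPartitionOn f ε (insert a P) (Iio a ∪ B) := by
  rintro u (hu | hu) w (hw | hw) hPa
  · exact hP u hu w hw fun s hs => hPa s (Finset.mem_insert_of_mem hs)
  · exact absurd (mem_uIoc.2 (.inl ⟨hu, (hB w hw).1⟩)) (hPa a (Finset.mem_insert_self _ _))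
  · exact absurd (mem_uIoc.2 (.inr ⟨hw, (hB u hu).1⟩)) (hPa a (Finset.mem_insert_self _ _))
  · exact (dist_triangle_right _ _ y).trans (by linarith [(hB u hu).2, (hB w hw).2])

theorem Cadlag.exists_isOscPartitionOn (hf : Cadlag f) (hε : 0 < ε) :
    ∃ P, IsOscPartitionOn f ε P univ := by
  set T := {a : I | ∃ P, IsOscPartitionOn f ε P (Iio a)}
  set c := sSup T
  have hcT : c ∈ T := by
    rcases eq_or_ne c 0 with hc | hc
    · exact ⟨∅, fun u hu => absurd (lt_of_lt_of_eq hu hc) (not_lt.2 nonneg')⟩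
    obtain ⟨L, hL⟩ := hf.2.1 c hc
    obtain ⟨a, hac, haL⟩ := (mem_nhdsLT_iff_exists_Ioo_subset' (pos_iff_ne_zero.2 hc)).1
      (hL (Metric.ball_mem_nhds L (half_pos hε)))
    obtain ⟨a', ⟨P, hP⟩, haa'⟩ := lt_sSup_iff.1 (show a < c from hac)
    refine ⟨_, Iio_union_Ico_eq_Iio (le_sSup (show a' ∈ T from ⟨P, hP⟩)) ▸
      hP.extend (B := Ico a' c) fun w hw => ⟨hw.1, haL ⟨haa'.trans_le hw.1, hw.2⟩⟩⟩
  obtain ⟨P, hP⟩ := hcT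
  have hc1 : c = 1 := by
    by_contra hc
    obtain ⟨u, hcu, hu⟩ := (mem_nhdsGE_iff_exists_Ico_subset' (lt_of_le_of_ne le_one' hc)).1
      (hf.1 c (Metric.ball_mem_nhds (f c) (half_pos hε)))
    obtain ⟨b, hcb, hbu⟩ := exists_between (show c < u from hcu)
    have hbT : b ∈ T := ⟨_, Iio_union_Ico_eq_Iio hcb.le ▸
      hP.extend (B := Ico c b) fun w hw => ⟨hw.1, hu ⟨hw.1, hw.2.trans hbu⟩⟩⟩
    exact (le_sSup hbT).not_gt hcb
  obtain ⟨a, ha1, ha⟩ := (mem_nhdsLT_iff_exists_Ioo_subset' (zero_lt_one' I)).1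
    (hf.2.2 (Metric.ball_mem_nhds (f 1) (half_pos hε)))
  obtain ⟨a', haa', ha'1⟩ := exists_between (show a < 1 from ha1)
  have hclose : ∀ w ∈ Icc a' 1, a' ≤ w ∧ dist (f w) (f 1) < ε / 2 := fun w hw =>
    ⟨hw.1, hw.2.eq_or_lt.elim (fun h => by simpa [h] using half_pos hε)
      fun h => ha ⟨haa'.trans_le hw.1, h⟩⟩
  have hIcc : Iio a' ∪ Icc a' 1 = univ :=
    (Iio_union_Icc_eq_Iic ha'1.le).trans (eq_univ_of_forall fun _ => le_one')
  exact ⟨_, hIcc ▸ (hP.mono (Iio_subset_Iio (hc1 ▸ ha'1.le))).extend hclose⟩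

theorem IsOscPartitionOn.dist_le_two_mul (hP : IsOscPartitionOn f ε P univ) {ρ : ℝ}
    (hsep : (P : Set I).Pairwise (ρ ≤ dist · ·)) {u w : I} (huw : dist u w < ρ)
    (hcont : ∀ s ∈ P, s ∈ Ι u w → ContinuousAt f s) : dist (f u) (f w) ≤ 2 * ε := by
  wlog hle : u ≤ w generalizing u w
  · rw [dist_comm]
    exact this (dist_comm u w ▸ huw) (fun s hs hsw => hcont s hs (uIoc_comm u w ▸ hsw))
      (le_of_not_ge hle)
  unfold IsOscPartitionOn at hP
  rw [uIoc_of_le hle] at hcont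
  have hε : 0 ≤ ε := by simpa using hP u trivial u trivial (by simp)
  by_cases hex : ∃ s ∈ P, s ∈ Ioc u w
  swap
  · simp only [not_exists, not_and] at hex
    linarith [hP u trivial w trivial (by rwa [uIoc_of_le hle])]
  obtain ⟨s, hsP, hs⟩ := hex
  -- `w - u < ρ` leaves room for only one cut point in `(u, w]`
  have huniq : ∀ s' ∈ P, s' ∈ Ioc u w → s' = s := fun s' hs'P hs' => by_contra fun hne =>
    (hsep hs'P hsP hne).not_gt ((dist_le_dist_of_mem_Ioc hs' hs).trans_lt huw)
  have hsw : dist (f s) (f w) ≤ ε := hP s trivial w trivial fun s' hs'P hs' => by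
    rw [uIoc_of_le hs.2] at hs'
    exact hs'.1.ne' (huniq s' hs'P ⟨hs.1.trans hs'.1, hs'.2⟩)
  have hus : dist (f u) (f s) ≤ ε := by
    have : (𝓝[<] s).NeBot := nhdsLT_neBot_of_exists_lt ⟨u, hs.1⟩
    refine le_of_tendsto (tendsto_const_nhds.dist
      ((hcont s hsP hs).tendsto.mono_left (nhdsWithin_le_nhds (s := Iio s)))) ?_
    filter_upwards [Ioo_mem_nhdsLT hs.1] with z hz
    refine hP u trivial z trivial fun s' hs'P hs' => ?_
    rw [uIoc_of_le hz.1.le] at hs'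
    exact hz.2.not_ge (huniq s' hs'P ⟨hs'.1, hs'.2.trans (hz.2.le.trans hs.2)⟩ ▸ hs'.2)
  linarith [dist_triangle (f u) (f s) (f w)]

theorem IsOscPartitionOn.dist_comp_lt_three_mul (hP : IsOscPartitionOn f ε P univ) {ρ η : ℝ}
    (hsep : (P : Set I).Pairwise (ρ ≤ dist · ·)) (hηρ : 2 * η < ρ) {g : I → X} {lam l : I ≃o I}
    (hlam : ∀ t, dist (lam t) t ≤ η ∧ dist (g (lam t)) (f t) < ε) (hl : ∀ t, dist (l t) t ≤ η)
    (hjump : ∀ s ∈ P, ¬ContinuousAt f s → l s = lam s) (t : I) :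
    dist (g (l t)) (f t) < 3 * ε := by
  set u := lam.symm (l t)
  have hu : lam u = l t := lam.apply_symm_apply _
  have hut : dist u t < ρ := by
    linarith [dist_triangle_left u t (lam u), (hlam u).1, hu ▸ hl t]
  -- `l` and `lam` agree at the jumps of `f`, so no jump separates `u` from `t`
  have hcont : ∀ s ∈ P, s ∈ Ι u t → ContinuousAt f s := fun s hs hst => by
    by_contra hc
    exact notMem_uIoc_of_apply_eq lam.strictMono l.strictMono (hjump s hs hc).symm hu hst
  calc dist (g (l t)) (f t) ≤ dist (g (lam u)) (f u) + dist (f u) (f t) :=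
        hu ▸ dist_triangle _ _ _
    _ < ε + 2 * ε := add_lt_add_of_lt_of_le (hlam u).2 (hP.dist_le_two_mul hsep hut hcont)
    _ = 3 * ε := by ring

end Oscillation

section J1

variable {X : Type*} [PseudoMetricSpace X] {xn : ℕ → I → X} {x : I → X}

theorem j1Tendsto_iff_exists_orderIso :
    J1Tendsto xn x ↔ ∃ lam : ℕ → I ≃o I, ∀ ε > 0, ∀ᶠ n in atTop, ∀ t,
      dist (lam n t) t < ε ∧ dist (xn n (lam n t)) (x t) < ε := by
  constructor
  · rintro ⟨lam, hlam, h⟩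
    exact ⟨fun n => (hlam n).2.orderIsoOfSurjective _ (hlam n).1.2, h⟩
  · rintro ⟨lam, h⟩
    exact ⟨fun n => lam n, fun n => ⟨(lam n).bijective, (lam n).strictMono⟩, h⟩

theorem J1Tendsto.of_forall_eventually_exists
    (h : ∀ ε > 0, ∀ᶠ n in atTop, ∃ l : I ≃o I, ∀ t,
      dist (l t) t < ε ∧ dist (xn n (l t)) (x t) < ε) :
    J1Tendsto xn x :=
  j1Tendsto_iff_exists_orderIso.2 <| exists_seq_forall_eventually
    (fun _ _ _ _ hεε' H t => ⟨(H t).1.trans_le hεε', (H t).2.trans_le hεε'⟩) h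

theorem J1Tendsto.comp_uniformContinuous {Y : Type*} [PseudoMetricSpace Y] (h : J1Tendsto xn x)
    {φ : X → Y} (hφ : UniformContinuous φ) :
    J1Tendsto (fun n t => φ (xn n t)) (fun t => φ (x t)) := by
  obtain ⟨lam, hlam, hconv⟩ := h
  refine ⟨lam, hlam, fun ε hε => ?_⟩
  obtain ⟨δ, hδ, hφδ⟩ := Metric.uniformContinuous_iff.1 hφ ε hε
  filter_upwards [hconv (min ε δ) (lt_min hε hδ)] with n hn t
  exact ⟨(hn t).1.trans_le (min_le_left _ _), hφδ ((hn t).2.trans_le (min_le_right _ _))⟩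

end J1

theorem J1Tendsto.pi {ι : Type*} [Fintype ι] {X : ι → Type*} [∀ i, PseudoMetricSpace (X i)]
    {xn : ∀ i, ℕ → I → X i} {x : ∀ i, I → X i} (hx : ∀ i, Cadlag (x i))
    (hconv : ∀ i, J1Tendsto (xn i) (x i))
    (hdisj : Pairwise fun i j =>
      Disjoint {t | ¬ContinuousAt (x i) t} {t | ¬ContinuousAt (x j) t}) :
    J1Tendsto (fun n t i => xn i n t) (fun t i => x i t) := by
  classical
  refine .of_forall_eventually_exists fun ε hε => ?_
  choose P hP using fun i => (hx i).exists_isOscPartitionOn (ε := ε / 4) (by positivity)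
  set U := insert 0 (insert 1 (Finset.univ.biUnion P))
  obtain ⟨ρ, hρ, hsep⟩ := U.exists_pos_pairwise_le_dist
  have hPU : ∀ i, P i ⊆ U := fun i => (Finset.subset_biUnion_of_mem P (Finset.mem_univ i)).trans
    ((Finset.subset_insert _ _).trans (Finset.subset_insert _ _))
  choose lam hlam using fun i => j1Tendsto_iff_exists_orderIso.1 (hconv i)
  set η := min (ε / 4) (ρ / 3)
  have hη : 0 < η := by positivity
  have hηε : η ≤ ε / 4 := min_le_left _ _
  have hηρ : η ≤ ρ / 3 := min_le_right _ _
  filter_upwards [eventually_all.2 fun i => hlam i η hη] with n hn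
  set J : ι → Finset I := fun i => (P i).filter fun s => ¬ContinuousAt (x i) s
  obtain ⟨l, hlJ, hl⟩ := exists_orderIso_eq_on_disjoint (J := J) (fun i j hij =>
      Finset.disjoint_left.2 fun s hsi hsj => Set.disjoint_left.1 (hdisj hij)
        (Finset.mem_filter.1 hsi).2 (Finset.mem_filter.1 hsj).2)
    (fun i => lam i n) (hsep.mono (Finset.coe_subset.2 (Finset.insert_subset_insert _
      (Finset.insert_subset_insert _ (Finset.biUnion_mono fun i _ => Finset.filter_subset _ _)))))
    (fun i t => (hn i t).1.le) hη.le (by linarith)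
  refine ⟨l, fun t => ⟨(hl t).trans_lt (by linarith),
    (dist_pi_lt_iff hε).2 fun i => ?_⟩⟩
  have := (hP i).dist_comp_lt_three_mul (hsep.mono (Finset.coe_subset.2 (hPU i)))
    (by linarith) (fun t => ⟨(hn i t).1.le, (hn i t).2.trans_le hηε⟩) hl
    (fun s hs hc => hlJ i s (Finset.mem_filter.2 ⟨hs, hc⟩)) t
  linarith

theorem J1_convergence_of_sums_general
    (d q : ℕ)
    (xn : Fin d → ℕ → unitInterval → EuclideanSpace ℝ (Fin q))
    (x : Fin d → unitInterval → EuclideanSpace ℝ (Fin q))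
    (hx : ∀ i, Cadlag (x i))
    (hconv : ∀ i, J1Tendsto (xn i) (x i))
    (hdisj : ∀ i j, i ≠ j →
      Disjoint {t | ¬ ContinuousAt (x i) t} {t | ¬ ContinuousAt (x j) t}) :
    J1Tendsto (fun n t => ∑ i, xn i n t) (fun t => ∑ i, x i t) :=
  (J1Tendsto.pi hx hconv hdisj).comp_uniformContinuous
    (Finset.uniformContinuous_sum _ fun i _ => Pi.uniformContinuous_proj _ i)

theorem J1_convergence_of_sums
    (d q : ℕ)
    (xn : Fin d → ℕ → unitInterval → EuclideanSpace ℝ (Fin q))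
    (x : Fin d → unitInterval → EuclideanSpace ℝ (Fin q))
    (hxn : ∀ i n, Cadlag (xn i n)) (hx : ∀ i, Cadlag (x i))
    (hconv : ∀ i, J1Tendsto (xn i) (x i))
    (hdisj : ∀ i j, i ≠ j →
      Disjoint {t | ¬ ContinuousAt (x i) t} {t | ¬ ContinuousAt (x j) t}) :
    J1Tendsto (fun n t => ∑ i, xn i n t) (fun t => ∑ i, x i t) :=
  J1_convergence_of_sums_general d q xn x hx hconv hdisj
end

section
/- Let V be a real random variable with lim_{ρ→∞} ρ^α (ln ρ)^{−k} E[W(V/ρ)] = ∫_{−∞}^{∞}(c⁻·1_{x<0} + c⁺·1_{x>0}) W(x) |x|^{−(1+α)} dx for all bounded continuous W : ℝ → ℝ satisfying |W(x)| ≤ C x²/(1+x²), where 0 < α < 2 and k ≥ 0. Let Y be an ℝ^m-valued random vector independent of V with E[|Y|^α] < ∞. Then for every bounded continuous W : ℝ^m → ℝ with |W(x)| ≤ C|x|²/(1+|x|²), lim_{ρ→∞} ρ^α (ln ρ)^{−k} E[W(VY/ρ)] = E[∫₀^∞ (c⁺W(xY) + c⁻W(−xY)) x^{−(1+α)} dx].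 -/
/-
By independence, `E[W(ρ⁻¹ V Y)] = E[φ_ρ(Y)]` with `φ_ρ(y) = E[W(ρ⁻¹ V y)]`, and the hypothesis on
`V`, applied to the test function `x ↦ W(x y)`, gives the limit of `ρ^α (log ρ)^(-k) φ_ρ(y)` for
each fixed `y`. It remains to dominate these functions of `y` by `A + B ‖y‖^α`, uniformly in large
`ρ`. Since `|W z| ≤ C ‖z‖² / (1 + ‖z‖²)`, we have `|φ_ρ(y)| ≤ C h(‖y‖ / ρ)` where
`h(x) = E[(xV)² / (1 + (xV)²)]`, and the hypothesis for this single test function gives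
`h(1/s) ≤ L s^(-α) (log s)^k` for `s ≥ ρ₀`. At `s = ρ / ‖y‖ ≥ ρ₀` this yields
`ρ^α (log ρ)^(-k) h(‖y‖/ρ) ≤ L ‖y‖^α (log s / log ρ)^k ≤ L ‖y‖^α (1 + log⁺ ‖y‖⁻¹)^k`, and the
logarithm is absorbed by `‖y‖^α` for small `‖y‖`; when `ρ / ‖y‖ < ρ₀` the trivial bound `h ≤ 1`
costs only `ρ^α ≤ ρ₀^α ‖y‖^α`.
-/

open MeasureTheory ProbabilityTheory Filter Real Set

noncomputable def sqTrunc (r : ℝ) : ℝ := r ^ 2 / (1 + r ^ 2)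

namespace sqTrunc

lemma nonneg (r : ℝ) : 0 ≤ sqTrunc r := by unfold sqTrunc; positivity

lemma le_one (r : ℝ) : sqTrunc r ≤ 1 := by
  unfold sqTrunc; rw [div_le_one (by positivity)]; linarith

lemma le_sq (r : ℝ) : sqTrunc r ≤ r ^ 2 :=
  div_le_self (sq_nonneg r) (by linarith [sq_nonneg r])

@[simp] lemma zero : sqTrunc 0 = 0 := by simp [sqTrunc]

@[simp] lemma abs (r : ℝ) : sqTrunc |r| = sqTrunc r := by simp [sqTrunc]

lemma mul_le (a b : ℝ) : sqTrunc (a * b) ≤ (1 + b ^ 2) * sqTrunc a := by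
  unfold sqTrunc
  rw [mul_div_assoc', div_le_div_iff₀ (by positivity) (by positivity)]
  nlinarith [sq_nonneg a, sq_nonneg (a ^ 2 * b ^ 2)]

@[fun_prop] lemma continuous : Continuous sqTrunc :=
  Continuous.div (by fun_prop) (by fun_prop) fun r => by positivity

lemma mul_div_eq (C r : ℝ) : C * r ^ 2 / (1 + r ^ 2) = C * sqTrunc r := mul_div_assoc _ _ _

end sqTrunc

lemma exists_one_add_rpow_le_mul_exp {α : ℝ} (hα : 0 < α) (k : ℝ) (hk : 0 ≤ k) :
    ∃ C, ∀ u, 0 ≤ u → (1 + u) ^ k ≤ C * exp (α * u) := by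
  set ε := min 1 (α / (k + 1))
  have hε : 0 < ε := lt_min one_pos (by positivity)
  have hεk : ε * k ≤ α := by
    calc ε * k ≤ α / (k + 1) * k := by gcongr; exact min_le_right _ _
      _ ≤ α := by rw [div_mul_eq_mul_div, div_le_iff₀ (by positivity)]; nlinarith
  refine ⟨ε⁻¹ ^ k, fun u hu => ?_⟩
  -- `ε (1 + u) ≤ 1 + ε u ≤ exp (ε u)`
  have hlin : 1 + u ≤ ε⁻¹ * exp (ε * u) := by
    rw [le_inv_mul_iff₀ hε]
    nlinarith [add_one_le_exp (ε * u), min_le_left 1 (α / (k + 1))]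
  calc (1 + u) ^ k ≤ (ε⁻¹ * exp (ε * u)) ^ k := by gcongr
    _ = ε⁻¹ ^ k * exp (ε * k * u) := by
      rw [mul_rpow (by positivity) (exp_pos _).le, ← exp_mul, mul_right_comm]
    _ ≤ ε⁻¹ ^ k * exp (α * u) := by gcongr

lemma rpow_mul_one_add_posLog_inv_rpow_le {α k C : ℝ}
    (hC : ∀ u, 0 ≤ u → (1 + u) ^ k ≤ C * exp (α * u)) {t : ℝ} (ht : 0 < t) :
    t ^ α * (1 + log⁺ t⁻¹) ^ k ≤ C + t ^ α := by
  have hC0 : 0 ≤ C := zero_le_one.trans (by simpa using hC 0 le_rfl)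
  rcases le_or_gt 1 t with ht1 | ht1
  · rw [(posLog_eq_zero_iff _).2 (by rw [abs_inv, abs_of_pos ht]; exact inv_le_one_of_one_le₀ ht1)]
    simpa using hC0
  · have hlog : log⁺ t⁻¹ = log t⁻¹ :=
      posLog_eq_log (by rw [abs_inv, abs_of_pos ht]; exact (one_le_inv₀ ht).2 ht1.le)
    calc t ^ α * (1 + log⁺ t⁻¹) ^ k ≤ t ^ α * (C * exp (α * log t⁻¹)) := by
          gcongr; rw [← hlog]; exact hC _ posLog_nonneg
      _ = C := by
          rw [mul_comm α, ← rpow_def_of_pos (inv_pos.2 ht), inv_rpow ht.le]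
          field_simp
      _ ≤ C + t ^ α := le_add_of_nonneg_right (rpow_nonneg ht.le _)

lemma log_div_le_log_mul_one_add_posLog {ρ t : ℝ} (hρ : 1 ≤ log ρ) (ht : 0 < t) :
    log (ρ / t) ≤ log ρ * (1 + log⁺ t⁻¹) := by
  have hρ0 : ρ ≠ 0 := by rintro rfl; norm_num at hρ
  rw [div_eq_mul_inv, log_mul hρ0 (inv_ne_zero ht.ne')]
  have := (le_max_right 0 (log t⁻¹)).trans_eq posLog_apply.symm
  nlinarith [mul_le_mul_of_nonneg_right hρ (posLog_nonneg (x := t⁻¹))]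

lemma rpow_neg_mul_rpow_le_of_le_mul {a b c k : ℝ} (ha : 0 < a) (hb : 0 ≤ b) (hbac : b ≤ a * c)
    (hk : 0 ≤ k) : a ^ (-k) * b ^ k ≤ c ^ k := by
  have hc : 0 ≤ c := nonneg_of_mul_nonneg_right (hb.trans hbac) ha
  calc a ^ (-k) * b ^ k ≤ a ^ (-k) * (a ^ k * c ^ k) := by
        gcongr; rw [← mul_rpow ha.le hc]; gcongr
    _ = c ^ k := by rw [← mul_assoc, ← rpow_add ha, neg_add_cancel, rpow_zero, one_mul]

lemma exists_rpow_mul_log_rpow_mul_comp_div_le {α k : ℝ} (hα : 0 < α) (hk : 0 ≤ k)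
    {h : ℝ → ℝ} (h0 : h 0 = 0) (h1 : ∀ x, h x ≤ 1) {L ρ₀ : ℝ} (hL : 0 ≤ L) (hρ₀ : exp 1 ≤ ρ₀)
    (htail : ∀ s, ρ₀ ≤ s → h s⁻¹ ≤ L * s ^ (-α) * log s ^ k) :
    ∃ A B, ∀ ρ, ρ₀ ≤ ρ → ∀ t, 0 ≤ t → ρ ^ α * log ρ ^ (-k) * h (t / ρ) ≤ A + B * t ^ α := by
  obtain ⟨C, hC⟩ := exists_one_add_rpow_le_mul_exp hα k hk
  have hC0 : 0 ≤ C := zero_le_one.trans (by simpa using hC 0 le_rfl)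
  have hρ₀0 : 0 < ρ₀ := (exp_pos 1).trans_le hρ₀
  have one_le_log : ∀ s, ρ₀ ≤ s → 1 ≤ log s := fun s hs =>
    (le_log_iff_exp_le (hρ₀0.trans_le hs)).2 (hρ₀.trans hs)
  refine ⟨L * C, ρ₀ ^ α + L, fun ρ hρ t ht => ?_⟩
  have hρ0 : 0 < ρ := hρ₀0.trans_le hρ
  have hlogρ := one_le_log ρ hρ
  have hfac : 0 ≤ ρ ^ α * log ρ ^ (-k) := by positivity
  have htα : 0 ≤ t ^ α := rpow_nonneg ht _
  rcases ht.eq_or_lt with rfl | ht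
  · rw [zero_div, h0, mul_zero]; positivity
  set s := ρ / t
  have hts : t / ρ = s⁻¹ := (inv_div ρ t).symm
  rw [hts]
  rcases lt_or_ge s ρ₀ with hs | hs
  · have hρt : ρ ≤ ρ₀ * t := ((div_lt_iff₀ ht).1 hs).le
    calc ρ ^ α * log ρ ^ (-k) * h s⁻¹ ≤ ρ ^ α * log ρ ^ (-k) * 1 := by gcongr; exact h1 _
      _ ≤ ρ ^ α * 1 * 1 := by
          gcongr; exact rpow_le_one_of_one_le_of_nonpos hlogρ (neg_nonpos.2 hk)
      _ ≤ ρ₀ ^ α * t ^ α := by rw [mul_one, mul_one, ← mul_rpow hρ₀0.le ht.le]; gcongr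
      _ ≤ L * C + (ρ₀ ^ α + L) * t ^ α := by nlinarith [mul_nonneg hL hC0, mul_nonneg hL htα]
  · have hlogs := one_le_log s hs
    have hratio : log ρ ^ (-k) * log s ^ k ≤ (1 + log⁺ t⁻¹) ^ k :=
      rpow_neg_mul_rpow_le_of_le_mul (by linarith) (by linarith)
        (log_div_le_log_mul_one_add_posLog hlogρ ht) hk
    have hρs : ρ ^ α * s ^ (-α) = t ^ α := by
      rw [rpow_neg (by positivity), ← div_eq_mul_inv, ← div_rpow hρ0.le (by positivity),
        div_div_cancel₀ hρ0.ne']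
    calc ρ ^ α * log ρ ^ (-k) * h s⁻¹ ≤ ρ ^ α * log ρ ^ (-k) * (L * s ^ (-α) * log s ^ k) := by
          gcongr; exact htail s hs
      _ = L * (t ^ α * (log ρ ^ (-k) * log s ^ k)) := by rw [← hρs]; ring
      _ ≤ L * (C + t ^ α) := by
          gcongr
          exact (mul_le_mul_of_nonneg_left hratio htα).trans
            (rpow_mul_one_add_posLog_inv_rpow_le hC ht)
      _ ≤ L * C + (ρ₀ ^ α + L) * t ^ α := by nlinarith [rpow_nonneg hρ₀0.le α]

lemma exists_le_mul_rpow_neg_mul_log_rpow_of_tendsto {α k ℓ : ℝ} {g : ℝ → ℝ}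
    (hg : Tendsto (fun ρ => ρ ^ α * log ρ ^ (-k) * g ρ) atTop (nhds ℓ)) :
    ∃ L ρ₀, 0 ≤ L ∧ exp 1 ≤ ρ₀ ∧ ∀ s, ρ₀ ≤ s → g s ≤ L * s ^ (-α) * log s ^ k := by
  obtain ⟨ρ₁, hρ₁⟩ := eventually_atTop.1 (hg.eventually_le_const (lt_add_one ℓ))
  refine ⟨max (ℓ + 1) 0, max ρ₁ (exp 1), le_max_right _ _, le_max_right _ _, fun s hs => ?_⟩
  have hs0 : 0 < s := (exp_pos 1).trans_le ((le_max_right _ _).trans hs)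
  have hlog : 0 < log s :=
    one_pos.trans_le ((le_log_iff_exp_le hs0).2 ((le_max_right _ _).trans hs))
  have hfac : 0 < s ^ α * log s ^ (-k) := by positivity
  calc g s ≤ max (ℓ + 1) 0 / (s ^ α * log s ^ (-k)) := by
        rw [le_div_iff₀ hfac, mul_comm]
        exact (hρ₁ s ((le_max_left _ _).trans hs)).trans (le_max_left _ _)
    _ = max (ℓ + 1) 0 * s ^ (-α) * log s ^ k := by
        rw [rpow_neg hs0.le, rpow_neg hlog.le, div_mul_eq_div_div, div_inv_eq_mul,
          div_eq_mul_inv]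

lemma integrableOn_Ioi_sqTrunc_div_rpow {α : ℝ} (hα₀ : 0 < α) (hα₂ : α < 2) :
    IntegrableOn (fun x => sqTrunc x / x ^ (1 + α)) (Ioi 0) := by
  have hmeas : AEStronglyMeasurable (fun x => sqTrunc x / x ^ (1 + α)) :=
    (sqTrunc.continuous.measurable.div (by fun_prop)).aestronglyMeasurable
  rw [← Ioc_union_Ioi_eq_Ioi zero_le_one]
  refine IntegrableOn.union ?_ ?_
  · have hg : IntegrableOn (fun x : ℝ => x ^ (1 - α)) (Ioc 0 1) := by
      rw [← intervalIntegrable_iff_integrableOn_Ioc_of_le zero_le_one]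
      exact intervalIntegral.intervalIntegrable_rpow' (by linarith)
    refine hg.mono' hmeas.restrict ((ae_restrict_mem measurableSet_Ioc).mono fun x hx => ?_)
    have hx0 : 0 < x := hx.1
    rw [norm_of_nonneg (by have := sqTrunc.nonneg x; positivity)]
    calc sqTrunc x / x ^ (1 + α) ≤ x ^ 2 / x ^ (1 + α) := by gcongr; exact sqTrunc.le_sq x
      _ = x ^ (1 - α) := by rw [← rpow_natCast, ← rpow_sub hx0]; norm_num; ring_nf
  · have hg : IntegrableOn (fun x : ℝ => x ^ (-(1 + α))) (Ioi 1) :=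
      integrableOn_Ioi_rpow_of_lt (by linarith) one_pos
    refine hg.mono' hmeas.restrict ((ae_restrict_mem measurableSet_Ioi).mono fun x hx => ?_)
    have hx0 : 0 < (x : ℝ) := one_pos.trans hx
    rw [norm_of_nonneg (by have := sqTrunc.nonneg x; positivity), rpow_neg hx0.le, ← one_div]
    gcongr
    exact sqTrunc.le_one x

lemma integrable_comp_abs_of_integrableOn_Ioi {E : Type*} [NormedAddCommGroup E] {f : ℝ → E}
    (hf : IntegrableOn f (Ioi 0)) : Integrable (fun x => f |x|) := by
  have hIoi : IntegrableOn (fun x => f |x|) (Ioi 0) :=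
    hf.congr_fun (fun x hx => by rw [abs_of_pos hx]) measurableSet_Ioi
  have hIic : IntegrableOn (fun x => f |x|) (Iic 0) := by
    have hneg : MeasurableEmbedding fun x : ℝ => -x := (Homeomorph.neg ℝ).measurableEmbedding
    rw [← Measure.map_neg_eq_self (volume : Measure ℝ), hneg.integrableOn_map_iff]
    simp_rw [Function.comp_def, abs_neg, neg_preimage, neg_Iic, neg_zero]
    exact Iff.mpr integrableOn_Ici_iff_integrableOn_Ioi hIoi
  rw [← integrableOn_univ, ← Iic_union_Ioi (a := (0 : ℝ))]
  exact hIic.union hIoi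

lemma integral_eq_integral_Ioi_add_comp_neg {E : Type*} [NormedAddCommGroup E] [NormedSpace ℝ E]
    {f : ℝ → E} (hf : Integrable f) : ∫ x, f x = ∫ x in Ioi 0, (f x + f (-x)) := by
  have hneg : Integrable (fun x => f (-x)) := hf.comp_neg
  rw [integral_add hf.integrableOn hneg.integrableOn, integral_comp_neg_Ioi, neg_zero, add_comm,
    ← integral_add_compl measurableSet_Iic hf, compl_Iic]

lemma integral_levy_eq_integral_Ioi {α : ℝ} (hα₀ : 0 < α) (hα₂ : α < 2) (cp cm : ℝ)
    {u : ℝ → ℝ} (hu : Measurable u) {C : ℝ} (hb : ∀ x, |u x| ≤ C * sqTrunc x) :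
    ∫ x, ((if x < 0 then cm else 0) + (if 0 < x then cp else 0)) * u x / |x| ^ (1 + α)
      = ∫ x in Ioi 0, (cp * u x + cm * u (-x)) / x ^ (1 + α) := by
  have hdom : Integrable fun x => (|cm| + |cp|) * C * (sqTrunc |x| / |x| ^ (1 + α)) :=
    (integrable_comp_abs_of_integrableOn_Ioi
      (integrableOn_Ioi_sqTrunc_div_rpow hα₀ hα₂)).const_mul _
  have hint : Integrable fun x =>
      ((if x < 0 then cm else 0) + (if 0 < x then cp else 0)) * u x / |x| ^ (1 + α) := by
    refine hdom.mono' ?_ (Eventually.of_forall fun x => ?_)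
    · exact (((measurable_const.ite measurableSet_Iio measurable_const).add
        (measurable_const.ite measurableSet_Ioi measurable_const)).mul hu).div
        (by fun_prop) |>.aestronglyMeasurable
    · have hw : |(if x < 0 then cm else 0) + (if 0 < x then cp else 0)| ≤ |cm| + |cp| := by
        split_ifs <;> first | exact abs_add_le _ _ | simp [add_nonneg]
      rw [Real.norm_eq_abs, abs_div, abs_mul, abs_of_nonneg (by positivity : 0 ≤ |x| ^ (1 + α)),
        sqTrunc.abs, ← mul_div_assoc, mul_assoc]
      gcongr ?_ / _
      exact mul_le_mul hw (hb x) (abs_nonneg _) (by positivity)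
  rw [integral_eq_integral_Ioi_add_comp_neg hint]
  refine setIntegral_congr_fun measurableSet_Ioi fun x (hx : 0 < x) => ?_
  have hx' : ¬ x < 0 := hx.not_gt
  simp only [hx, hx', neg_lt_zero, neg_pos, if_true, if_false, abs_neg, abs_of_pos hx]
  ring

theorem ProbabilityTheory.IndepFun.integral_comp_eq_integral_integral
    {Ω α β E : Type*} [MeasurableSpace Ω] [MeasurableSpace α] [MeasurableSpace β]
    [NormedAddCommGroup E] [NormedSpace ℝ E] {μ : Measure Ω} [IsFiniteMeasure μ]
    {X : Ω → α} {Y : Ω → β} (hXY : IndepFun X Y μ) (hX : Measurable X) (hY : Measurable Y)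
    {F : α → β → E} (hF : StronglyMeasurable (Function.uncurry F))
    (hFi : Integrable (Function.uncurry F) ((μ.map X).prod (μ.map Y))) :
    ∫ ω, F (X ω) (Y ω) ∂μ = ∫ ω, ∫ ω', F (X ω') (Y ω) ∂μ ∂μ := by
  have hjoint : μ.map (fun ω => (X ω, Y ω)) = (μ.map X).prod (μ.map Y) :=
    (indepFun_iff_map_prod_eq_prod_map_map hX.aemeasurable hY.aemeasurable).1 hXY
  calc ∫ ω, F (X ω) (Y ω) ∂μ = ∫ p, Function.uncurry F p ∂(μ.map fun ω => (X ω, Y ω)) :=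
        (integral_map (hX.prodMk hY).aemeasurable hF.aestronglyMeasurable).symm
    _ = ∫ y, ∫ x, F x y ∂(μ.map X) ∂(μ.map Y) := by rw [hjoint, integral_prod_symm _ hFi]; rfl
    _ = ∫ ω, ∫ x, F x (Y ω) ∂(μ.map X) ∂μ :=
        integral_map hY.aemeasurable hF.integral_prod_left.aestronglyMeasurable
    _ = ∫ ω, ∫ ω', F (X ω') (Y ω) ∂μ ∂μ := by
        congr 1 with ω
        exact integral_map hX.aemeasurable
          (hF.comp_measurable (measurable_id.prodMk measurable_const)).aestronglyMeasurable

section Probability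

variable {Ω : Type*} [MeasurableSpace Ω] {μ : Measure Ω}

lemma integrable_sqTrunc_comp [IsFiniteMeasure μ] {f : Ω → ℝ} (hf : Measurable f) :
    Integrable (fun ω => sqTrunc (f ω)) μ :=
  .of_bound (sqTrunc.continuous.measurable.comp hf).aestronglyMeasurable 1
    (.of_forall fun ω => by rw [norm_of_nonneg (sqTrunc.nonneg _)]; exact sqTrunc.le_one _)

lemma integral_sqTrunc_comp_le_one [IsProbabilityMeasure μ] {f : Ω → ℝ} (hf : Measurable f) :
    ∫ ω, sqTrunc (f ω) ∂μ ≤ 1 := by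
  simpa using integral_mono (integrable_sqTrunc_comp (μ := μ) hf) (integrable_const 1)
    fun ω => sqTrunc.le_one (f ω)

variable {E : Type*} [NormedAddCommGroup E] [NormedSpace ℝ E] {W : E → ℝ} {C : ℝ}
  {V : Ω → ℝ}

lemma abs_integral_comp_smul_le [IsFiniteMeasure μ] (hW : ∀ z, |W z| ≤ C * sqTrunc ‖z‖)
    (hV : Measurable V) (ρ : ℝ) (y : E) :
    |∫ ω, W (ρ⁻¹ • (V ω • y)) ∂μ| ≤ C * ∫ ω, sqTrunc (V ω * (‖y‖ / ρ)) ∂μ := by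
  rw [← integral_const_mul]
  refine norm_integral_le_of_norm_le ((integrable_sqTrunc_comp (hV.mul_const _)).const_mul C)
    (.of_forall fun ω => (Real.norm_eq_abs _).trans_le ((hW _).trans_eq ?_))
  rw [norm_smul, norm_smul, Real.norm_eq_abs, Real.norm_eq_abs, ← sqTrunc.abs (V ω * _), abs_mul,
    abs_div, abs_norm, abs_inv]
  ring_nf

lemma exists_abs_rpow_mul_log_rpow_mul_integral_comp_smul_le [IsProbabilityMeasure μ]
    {α k ℓ : ℝ} (hα : 0 < α) (hk : 0 ≤ k) (hV : Measurable V)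
    (htail : Tendsto (fun ρ => ρ ^ α * log ρ ^ (-k) * ∫ ω, sqTrunc (V ω / ρ) ∂μ) atTop (nhds ℓ))
    (hC : 0 ≤ C) (hW : ∀ z, |W z| ≤ C * sqTrunc ‖z‖) :
    ∃ A B ρ₀, ∀ ρ, ρ₀ ≤ ρ → ∀ y : E,
      |ρ ^ α * log ρ ^ (-k) * ∫ ω, W (ρ⁻¹ • (V ω • y)) ∂μ| ≤ A + B * ‖y‖ ^ α := by
  obtain ⟨L, ρ₀, hL, hρ₀, hLρ₀⟩ := exists_le_mul_rpow_neg_mul_log_rpow_of_tendsto htail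
  obtain ⟨A, B, hAB⟩ := exists_rpow_mul_log_rpow_mul_comp_div_le hα hk
    (h := fun x => ∫ ω, sqTrunc (V ω * x) ∂μ) (by simp)
    (fun x => integral_sqTrunc_comp_le_one (hV.mul_const x)) hL hρ₀
    (fun s hs => by simpa only [div_eq_mul_inv] using hLρ₀ s hs)
  refine ⟨C * A, C * B, ρ₀, fun ρ hρ y => ?_⟩
  have hρ0 : 0 < ρ := (exp_pos 1).trans_le (hρ₀.trans hρ)
  have hlogρ : 0 < log ρ := one_pos.trans_le ((le_log_iff_exp_le hρ0).2 (hρ₀.trans hρ))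
  have hfac : 0 ≤ ρ ^ α * log ρ ^ (-k) := by positivity
  rw [abs_mul, abs_of_nonneg hfac]
  calc ρ ^ α * log ρ ^ (-k) * |∫ ω, W (ρ⁻¹ • (V ω • y)) ∂μ|
      ≤ ρ ^ α * log ρ ^ (-k) * (C * ∫ ω, sqTrunc (V ω * (‖y‖ / ρ)) ∂μ) := by
        gcongr; exact abs_integral_comp_smul_le hW hV ρ y
    _ = C * (ρ ^ α * log ρ ^ (-k) * ∫ ω, sqTrunc (V ω * (‖y‖ / ρ)) ∂μ) := by ring
    _ ≤ C * (A + B * ‖y‖ ^ α) := by gcongr; exact hAB ρ hρ _ (norm_nonneg y)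
    _ = C * A + C * B * ‖y‖ ^ α := by ring

end Probability

lemma abs_comp_smul_le {E : Type*} [NormedAddCommGroup E] [NormedSpace ℝ E] {W : E → ℝ} {C : ℝ}
    (hW : ∀ z, |W z| ≤ C * sqTrunc ‖z‖) (hC : 0 ≤ C) (x : ℝ) (y : E) :
    |W (x • y)| ≤ C * (1 + ‖y‖ ^ 2) * sqTrunc x :=
  calc |W (x • y)| ≤ C * sqTrunc ‖x • y‖ := hW _
    _ = C * sqTrunc (x * ‖y‖) := by
        rw [norm_smul, Real.norm_eq_abs, ← sqTrunc.abs (x * _), abs_mul, abs_norm]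
    _ ≤ C * ((1 + ‖y‖ ^ 2) * sqTrunc x) := by gcongr; exact sqTrunc.mul_le _ _
    _ = C * (1 + ‖y‖ ^ 2) * sqTrunc x := by ring

section Independence

variable {Ω E : Type*} [MeasurableSpace Ω] {μ : Measure Ω} [NormedAddCommGroup E]
  [NormedSpace ℝ E] [MeasurableSpace E] [BorelSpace E] [SecondCountableTopology E]
  {V : Ω → ℝ} {W : E → ℝ}

lemma stronglyMeasurable_integral_comp_smul_smul [SFinite μ] (hV : Measurable V)
    (hW : Continuous W) (c : ℝ) :
    StronglyMeasurable fun y : E => ∫ ω, W (c • (V ω • y)) ∂μ :=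
  StronglyMeasurable.integral_prod_right (f := fun (y : E) ω => W (c • (V ω • y))) <|
    (hW.measurable.comp (((hV.comp measurable_snd).smul measurable_fst).const_smul c))
      |>.stronglyMeasurable

lemma integral_comp_smul_smul_eq_integral_integral [IsFiniteMeasure μ] {Y : Ω → E}
    (hind : IndepFun V Y μ) (hV : Measurable V) (hY : Measurable Y) (hW : Continuous W)
    {C : ℝ} (hWC : ∀ z, |W z| ≤ C) (c : ℝ) :
    ∫ ω, W (c • (V ω • Y ω)) ∂μ = ∫ ω, ∫ ω', W (c • (V ω' • Y ω)) ∂μ ∂μ := by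
  have hcont : Continuous (Function.uncurry fun (v : ℝ) (y : E) => W (c • (v • y))) :=
    hW.comp (by fun_prop)
  exact hind.integral_comp_eq_integral_integral hV hY hcont.measurable.stronglyMeasurable
    (.of_bound hcont.aestronglyMeasurable C (.of_forall fun _ => hWC _))

end Independence

theorem tail_scalar_times_vector_general
    {Ω : Type*} [MeasurableSpace Ω] (μ : Measure Ω) [IsProbabilityMeasure μ]
    (m : ℕ) (V : Ω → ℝ) (Y : Ω → EuclideanSpace ℝ (Fin m))
    (hV : Measurable V) (hY : Measurable Y) (hind : IndepFun V Y μ)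
    (α k cp cm : ℝ) (hα₀ : 0 < α) (hα₂ : α < 2) (hk : 0 ≤ k)
    (hmom : Integrable (fun ω => ‖Y ω‖ ^ α) μ)
    (hVtail : ∀ W : ℝ → ℝ, Continuous W →
      (∃ C : ℝ, ∀ x, |W x| ≤ C * x ^ 2 / (1 + x ^ 2)) →
      Tendsto (fun ρ : ℝ => ρ ^ α * (Real.log ρ) ^ (-k) * ∫ ω, W (V ω / ρ) ∂μ)
        atTop (nhds (∫ x : ℝ,
          ((if x < 0 then cm else 0) + (if 0 < x then cp else 0)) * W x / |x| ^ (1 + α)))) :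
    ∀ W : EuclideanSpace ℝ (Fin m) → ℝ, Continuous W →
      (∃ C : ℝ, ∀ x, |W x| ≤ C * ‖x‖ ^ 2 / (1 + ‖x‖ ^ 2)) →
      Tendsto (fun ρ : ℝ => ρ ^ α * (Real.log ρ) ^ (-k) *
          ∫ ω, W (ρ⁻¹ • (V ω • Y ω)) ∂μ) atTop
        (nhds (∫ ω, (∫ x in Set.Ioi (0:ℝ),
          (cp * W (x • Y ω) + cm * W ((-x) • Y ω)) / x ^ (1 + α)) ∂μ)) := by
  rintro W hWc ⟨C₀, hC₀⟩
  have hC : 0 ≤ max C₀ 0 := le_max_right _ _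
  have hW : ∀ z, |W z| ≤ max C₀ 0 * sqTrunc ‖z‖ := fun z =>
    (hC₀ z).trans (by rw [sqTrunc.mul_div_eq]; gcongr; exacts [sqTrunc.nonneg _, le_max_left _ _])
  have hslice : ∀ y, Tendsto (fun ρ => ρ ^ α * log ρ ^ (-k) * ∫ ω, W (ρ⁻¹ • (V ω • y)) ∂μ)
      atTop (nhds (∫ x in Ioi 0, (cp * W (x • y) + cm * W ((-x) • y)) / x ^ (1 + α))) := by
    intro y
    have hcont : Continuous fun x : ℝ => W (x • y) := by fun_prop
    have hlim := hVtail _ hcont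
      ⟨_, fun x => by rw [sqTrunc.mul_div_eq]; exact abs_comp_smul_le hW hC x y⟩
    rw [integral_levy_eq_integral_Ioi hα₀ hα₂ cp cm hcont.measurable
      (abs_comp_smul_le hW hC · y)] at hlim
    simpa only [smul_smul, div_eq_inv_mul] using hlim
  obtain ⟨A, B, ρ₀, hdom⟩ := exists_abs_rpow_mul_log_rpow_mul_integral_comp_smul_le hα₀ hk hV
    (hVtail sqTrunc sqTrunc.continuous
      ⟨1, fun x => by rw [sqTrunc.mul_div_eq, one_mul, abs_of_nonneg (sqTrunc.nonneg x)]⟩) hC hW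
  refine (tendsto_congr fun ρ => ?_).2 <| tendsto_integral_filter_of_dominated_convergence
    (fun ω => A + B * ‖Y ω‖ ^ α)
    (.of_forall fun ρ => (((stronglyMeasurable_integral_comp_smul_smul hV hWc ρ⁻¹).measurable.comp
      hY).const_mul _).aestronglyMeasurable)
    (eventually_atTop.2 ⟨ρ₀, fun ρ hρ => .of_forall fun ω => hdom ρ hρ (Y ω)⟩)
    ((integrable_const A).add (hmom.const_mul B)) (.of_forall fun ω => hslice (Y ω))
  rw [integral_comp_smul_smul_eq_integral_integral hind hV hY hWc
    (fun z => (hW z).trans (mul_le_of_le_one_right hC (sqTrunc.le_one _))), integral_const_mul]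
  rfl

theorem tail_scalar_times_vector
    {Ω : Type*} [MeasurableSpace Ω] (μ : Measure Ω) [IsProbabilityMeasure μ]
    (m : ℕ) (V : Ω → ℝ) (Y : Ω → EuclideanSpace ℝ (Fin m))
    (hV : Measurable V) (hY : Measurable Y) (hind : IndepFun V Y μ)
    (α k cp cm : ℝ) (hα₀ : 0 < α) (hα₂ : α < 2) (hk : 0 ≤ k)
    (hcp : 0 ≤ cp) (hcm : 0 ≤ cm)
    (hmom : Integrable (fun ω => ‖Y ω‖ ^ α) μ)
    (hVtail : ∀ W : ℝ → ℝ, Continuous W →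
      (∃ C : ℝ, ∀ x, |W x| ≤ C * x ^ 2 / (1 + x ^ 2)) →
      Tendsto (fun ρ : ℝ => ρ ^ α * (Real.log ρ) ^ (-k) * ∫ ω, W (V ω / ρ) ∂μ)
        atTop (nhds (∫ x : ℝ,
          ((if x < 0 then cm else 0) + (if 0 < x then cp else 0)) * W x / |x| ^ (1 + α)))) :
    ∀ W : EuclideanSpace ℝ (Fin m) → ℝ, Continuous W →
      (∃ C : ℝ, ∀ x, |W x| ≤ C * ‖x‖ ^ 2 / (1 + ‖x‖ ^ 2)) →
      Tendsto (fun ρ : ℝ => ρ ^ α * (Real.log ρ) ^ (-k) *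
          ∫ ω, W (ρ⁻¹ • (V ω • Y ω)) ∂μ) atTop
        (nhds (∫ ω, (∫ x in Set.Ioi (0:ℝ),
          (cp * W (x • Y ω) + cm * W ((-x) • Y ω)) / x ^ (1 + α)) ∂μ)) :=
  tail_scalar_times_vector_general μ m V Y hV hY hind α k cp cm hα₀ hα₂ hk hmom hVtail
end

section
/- Let V be a real random variable satisfying lim_{ρ→∞} ρ^α (ln ρ)^{−k} E[W(V y/ρ)] = ∫₀^∞ (c⁺W(xy) + c⁻W(−xy)) x^{−(1+α)} dx for each fixed y ∈ ℝ^m and each W in the class 𝒲 of bounded continuous functions with |W(x)| ≤ C|x|²/(1+|x|²), with the convergence uniform on bounded sets of y, 0 < α < 2, k ≥ 0. Then for all ρ ≥ 3 with ln ρ ≥ 1 there is a constant C' such that ρ^α (ln ρ)^{−k} E[W(V y/ρ)] ≤ C' max(1, |y|^α) for all y ∈ ℝ^m. -/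
open MeasureTheory Filter Real

/-!
Uniform convergence on the unit ball bounds `ρ ^ α * (log ρ) ^ (-k) * E[W (V y / ρ)]` for
`‖y‖ ≤ 1` and large `ρ`, while `|W| ≤ max C 0` bounds it for bounded `ρ`. A general `y` is
reduced to `y / s` with `s = max 1 ‖y‖`, because `V y / ρ = V (y / s) / (ρ / s)`: the factor
`ρ ^ α` produces `s ^ α = max 1 (‖y‖ ^ α)`, and the logarithmic weight only helps since
`log (ρ / s) ≤ log ρ`.
-/

lemma mul_sq_div_one_add_sq_le_max (C a : ℝ) : C * a ^ 2 / (1 + a ^ 2) ≤ max C 0 := by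
  have h₀ : 0 ≤ a ^ 2 / (1 + a ^ 2) := by positivity
  have h₁ : a ^ 2 / (1 + a ^ 2) ≤ 1 := (div_le_one (by positivity)).2 (by linarith)
  rw [mul_div_assoc]
  rcases le_total C 0 with hC | hC
  · exact (mul_nonpos_of_nonpos_of_nonneg hC h₀).trans (le_max_right _ _)
  · exact (mul_le_of_le_one_right hC h₁).trans (le_max_left _ _)

lemma integral_le_of_forall_abs_le {Ω : Type*} [MeasurableSpace Ω] {μ : Measure Ω}
    [IsProbabilityMeasure μ] {f : Ω → ℝ} {B : ℝ} (h : ∀ ω, |f ω| ≤ B) :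
    ∫ ω, f ω ∂μ ≤ B := by
  have := norm_integral_le_of_norm_le_const (μ := μ) (f := f) (Eventually.of_forall h)
  simp only [probReal_univ, mul_one, Real.norm_eq_abs] at this
  exact (le_abs_self _).trans this

section LogWeight

variable {α k B ρ₁ ρ' ρ e : ℝ}

lemma rpow_mul_log_rpow_neg_mul_le_of_le (hα : 0 ≤ α) (hk : 0 ≤ k) (hB : 0 ≤ B)
    (he : e ≤ B) (hρ' : 0 ≤ ρ') (hρ'ρ₁ : ρ' ≤ ρ₁) (hρ : 1 ≤ log ρ) :
    ρ' ^ α * log ρ ^ (-k) * e ≤ ρ₁ ^ α * B :=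
  calc ρ' ^ α * log ρ ^ (-k) * e ≤ ρ' ^ α * log ρ ^ (-k) * B := by gcongr
    _ ≤ ρ' ^ α * 1 * B := by
      gcongr
      exact rpow_le_one_of_one_le_of_nonpos hρ (neg_nonpos.2 hk)
    _ ≤ ρ₁ ^ α * B := by rw [mul_one]; gcongr

lemma rpow_mul_log_rpow_neg_mul_le {M : ℝ} (hα : 0 ≤ α) (hk : 0 ≤ k) (hB : 0 ≤ B)
    (he : e ≤ B) (hBM : ρ₁ ^ α * B ≤ M) (hρ₁ : exp 1 ≤ ρ₁)
    (hM : ρ₁ ≤ ρ' → ρ' ^ α * log ρ' ^ (-k) * e ≤ M)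
    (hρ' : 0 < ρ') (hρ'ρ : ρ' ≤ ρ) (hρ : 1 ≤ log ρ) :
    ρ' ^ α * log ρ ^ (-k) * e ≤ M := by
  rcases le_total ρ' ρ₁ with hρ'ρ₁ | hρ₁ρ'
  · exact (rpow_mul_log_rpow_neg_mul_le_of_le hα hk hB he hρ'.le hρ'ρ₁ hρ).trans hBM
  rcases le_total e 0 with he₀ | he₀
  · calc ρ' ^ α * log ρ ^ (-k) * e ≤ 0 :=
          mul_nonpos_of_nonneg_of_nonpos (by positivity) he₀
      _ ≤ ρ₁ ^ α * B := by
          have : 0 ≤ ρ₁ := (exp_pos 1).le.trans hρ₁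
          positivity
      _ ≤ M := hBM
  have hlogρ' : 1 ≤ log ρ' := (le_log_iff_exp_le hρ').2 (hρ₁.trans hρ₁ρ')
  have hlog : log ρ ^ (-k) ≤ log ρ' ^ (-k) :=
    rpow_le_rpow_of_nonpos (by linarith) (log_le_log hρ' hρ'ρ) (neg_nonpos.2 hk)
  calc ρ' ^ α * log ρ ^ (-k) * e ≤ ρ' ^ α * log ρ' ^ (-k) * e := by gcongr
    _ ≤ M := hM hρ₁ρ'

end LogWeight

lemma rpow_mul_integral_div_smul_eq {Ω E : Type*} [MeasurableSpace Ω] [NormedAddCommGroup E]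
    [NormedSpace ℝ E] (μ : Measure Ω) (V : Ω → ℝ) (W : E → ℝ) (α L : ℝ) {ρ s : ℝ}
    (hρ : 0 ≤ ρ) (hs : 0 < s) (y : E) :
    ρ ^ α * L * ∫ ω, W ((V ω / ρ) • y) ∂μ
      = s ^ α * ((ρ / s) ^ α * L * ∫ ω, W ((V ω / (ρ / s)) • s⁻¹ • y) ∂μ) := by
  have hsmul : ∀ ω, (V ω / (ρ / s)) • s⁻¹ • y = (V ω / ρ) • y := fun ω => by
    rw [smul_smul]
    congr 1
    field_simp
  simp_rw [hsmul, div_rpow hρ hs.le]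
  field_simp

theorem domination_estimate_scalar_vector_general
    {Ω : Type*} [MeasurableSpace Ω] (μ : Measure Ω) [IsProbabilityMeasure μ]
    (m : ℕ) (V : Ω → ℝ)
    (α k cp cm : ℝ) (hα₀ : 0 < α) (hk : 0 ≤ k)
    (W : EuclideanSpace ℝ (Fin m) → ℝ)
    (C : ℝ) (hWb : ∀ x, |W x| ≤ C * ‖x‖ ^ 2 / (1 + ‖x‖ ^ 2))
    (hunif : ∀ R > (0:ℝ), TendstoUniformlyOn
      (fun ρ (y : EuclideanSpace ℝ (Fin m)) => ρ ^ α * (Real.log ρ) ^ (-k) *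
        ∫ ω, W ((V ω / ρ) • y) ∂μ)
      (fun y => ∫ x in Set.Ioi (0:ℝ),
        (cp * W (x • y) + cm * W ((-x) • y)) / x ^ (1 + α))
      atTop (Metric.closedBall 0 R)) :
    ∃ C' : ℝ, ∀ ρ : ℝ, 3 ≤ ρ → 1 ≤ Real.log ρ →
      ∀ y : EuclideanSpace ℝ (Fin m),
        ρ ^ α * (Real.log ρ) ^ (-k) * ∫ ω, W ((V ω / ρ) • y) ∂μ
          ≤ C' * max 1 (‖y‖ ^ α) := by
  set B := max C 0
  have hB : 0 ≤ B := le_max_right _ _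
  have hE : ∀ ρ y, ∫ ω, W ((V ω / ρ) • y) ∂μ ≤ B := fun ρ y =>
    integral_le_of_forall_abs_le fun ω => (hWb _).trans (mul_sq_div_one_add_sq_le_max _ _)
  obtain ⟨N, hN⟩ := Metric.uniformCauchySeqOn_iff.1 (hunif 1 one_pos).uniformCauchySeqOn 1 one_pos
  set ρ₁ := max N (exp 1)
  have hρ₁ : exp 1 ≤ ρ₁ := le_max_right _ _
  have hρ₁pos : 0 < ρ₁ := (exp_pos 1).trans_le hρ₁
  set M := ρ₁ ^ α * B + 1
  have hball : ∀ ρ ≥ ρ₁, ∀ u : EuclideanSpace ℝ (Fin m), ‖u‖ ≤ 1 →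
      ρ ^ α * log ρ ^ (-k) * ∫ ω, W ((V ω / ρ) • u) ∂μ ≤ M := by
    intro ρ hρ u hu
    have hclose := hN ρ ((le_max_left _ _).trans hρ) ρ₁ (le_max_left _ _) u (by simpa using hu)
    have hcrude := rpow_mul_log_rpow_neg_mul_le_of_le (ρ' := ρ₁) (ρ₁ := ρ₁) (ρ := ρ₁)
      hα₀.le hk hB (hE ρ₁ u) hρ₁pos.le le_rfl ((le_log_iff_exp_le hρ₁pos).2 hρ₁)
    rw [Real.dist_eq, abs_sub_lt_iff] at hclose
    linarith [hclose.1]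
  refine ⟨M, fun ρ hρ hlogρ y => ?_⟩
  set s := max 1 ‖y‖
  have hs : 0 < s := one_pos.trans_le (le_max_left _ _)
  have hu : ‖s⁻¹ • y‖ ≤ 1 := by
    rw [norm_smul, norm_inv, Real.norm_of_nonneg hs.le]
    exact inv_mul_le_one_of_le₀ (le_max_right _ _) hs.le
  rw [rpow_mul_integral_div_smul_eq μ V W α _ (by linarith) hs, mul_comm M, ← one_rpow α,
    ← rpow_max zero_le_one (norm_nonneg y) hα₀.le]
  refine mul_le_mul_of_nonneg_left ?_ (by positivity)
  exact rpow_mul_log_rpow_neg_mul_le hα₀.le hk hB (hE _ _) (by linarith) hρ₁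
    (fun h => hball _ h _ hu) (div_pos (by linarith) hs) (div_le_self (by linarith)
    (le_max_left _ _)) hlogρ

theorem domination_estimate_scalar_vector
    {Ω : Type*} [MeasurableSpace Ω] (μ : Measure Ω) [IsProbabilityMeasure μ]
    (m : ℕ) (V : Ω → ℝ) (hV : Measurable V)
    (α k cp cm : ℝ) (hα₀ : 0 < α) (hα₂ : α < 2) (hk : 0 ≤ k)
    (hcp : 0 ≤ cp) (hcm : 0 ≤ cm)
    (W : EuclideanSpace ℝ (Fin m) → ℝ) (hWc : Continuous W)
    (C : ℝ) (hWb : ∀ x, |W x| ≤ C * ‖x‖ ^ 2 / (1 + ‖x‖ ^ 2))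
    (hpt : ∀ y : EuclideanSpace ℝ (Fin m),
      Tendsto (fun ρ : ℝ => ρ ^ α * (Real.log ρ) ^ (-k) *
          ∫ ω, W ((V ω / ρ) • y) ∂μ) atTop
        (nhds (∫ x in Set.Ioi (0:ℝ),
          (cp * W (x • y) + cm * W ((-x) • y)) / x ^ (1 + α))))
    (hunif : ∀ R > (0:ℝ), TendstoUniformlyOn
      (fun ρ (y : EuclideanSpace ℝ (Fin m)) => ρ ^ α * (Real.log ρ) ^ (-k) *
        ∫ ω, W ((V ω / ρ) • y) ∂μ)
      (fun y => ∫ x in Set.Ioi (0:ℝ),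
        (cp * W (x • y) + cm * W ((-x) • y)) / x ^ (1 + α))
      atTop (Metric.closedBall 0 R)) :
    ∃ C' : ℝ, ∀ ρ : ℝ, 3 ≤ ρ → 1 ≤ Real.log ρ →
      ∀ y : EuclideanSpace ℝ (Fin m),
        ρ ^ α * (Real.log ρ) ^ (-k) * ∫ ω, W ((V ω / ρ) • y) ∂μ
          ≤ C' * max 1 (‖y‖ ^ α) :=
  domination_estimate_scalar_vector_general μ m V α k cp cm hα₀ hk W C hWb hunif
end

section
/- Suppose a random m-dimensional vector Z satisfies lim_{ρ→∞} ρ^α (ln ρ)^{−k} E[W(Z/ρ)] = ∫₀^∞ ∫_{S^{m−1}} W(sx) ν(ds) x^{−(1+α)} dx for some finite measure ν on S^{m−1} with ν(S^{m−1}) > 0 and all bounded continuous W with |W(x)| ≤ C|x|²/(1+|x|²). Let T : ℝ^m → ℝ^d (d ≤ m) be linear. Then Z' = TZ satisfies the same limit relation with the measure ν' on S^{d−1} defined by ν'(Γ) = ∫_{S^{m−1}} 1_Γ(Ts/|Ts|) |Ts|^α ν(ds) for Borel Γ ⊆ S^{d−1}. -/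
/-!
Applying the hypothesis to the test function `W' ∘ T`, which inherits the growth bound because `T`
is bounded, yields the limit with integrand `∫ W' (x • T s) dν`. For `T s ≠ 0` the substitution
`x ↦ ‖T s‖ x` in the radial integral against `x ^ (-(1 + α)) dx` pulls out the factor `‖T s‖ ^ α`
and replaces `T s` by its direction. Fubini lets us do this inside the `ν`-integral: both
integrands are dominated by `C * min (x ^ 2) 1 * x ^ (-(1 + α))`, integrable on `(0, ∞)` exactly
because `0 < α < 2`.
-/

open MeasureTheory Filter Real Set

lemma min_sq_one_le_max_mul {a b R : ℝ} (ha : 0 ≤ a) (hab : a ≤ R * b) :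
    min (a ^ 2) 1 ≤ max (R ^ 2) 1 * min (b ^ 2) 1 := by
  have hsq : a ^ 2 ≤ R ^ 2 * b ^ 2 := by rw [← mul_pow]; exact pow_le_pow_left₀ ha hab 2
  rcases le_total (b ^ 2) 1 with hb1 | hb1
  · rw [min_eq_left hb1]
    calc min (a ^ 2) 1 ≤ R ^ 2 * b ^ 2 := (min_le_left _ _).trans hsq
      _ ≤ max (R ^ 2) 1 * b ^ 2 := by gcongr; exact le_max_left _ _
  · rw [min_eq_right hb1, mul_one]
    exact (min_le_right _ _).trans (le_max_right _ _)

lemma div_one_add_le_min {t : ℝ} (ht : 0 ≤ t) : t / (1 + t) ≤ min t 1 := by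
  have h : 0 < 1 + t := by linarith
  refine le_min ?_ ?_ <;> rw [div_le_iff₀ h] <;> nlinarith

lemma min_le_two_mul_div_one_add {t : ℝ} (ht : 0 ≤ t) : min t 1 ≤ 2 * (t / (1 + t)) := by
  have h : 0 < 1 + t := by linarith
  rw [mul_div_assoc', le_div_iff₀ h]
  rcases le_total t 1 with h1 | h1
  · rw [min_eq_left h1]; nlinarith
  · rw [min_eq_right h1]; linarith

section GrowthBound

variable {E F : Type*} [SeminormedAddCommGroup E] [SeminormedAddCommGroup F]

lemma exists_abs_le_mul_min_of_abs_le {W : F → ℝ}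
    (hW : ∃ C : ℝ, ∀ y, |W y| ≤ C * ‖y‖ ^ 2 / (1 + ‖y‖ ^ 2)) :
    ∃ C, 0 ≤ C ∧ ∀ y, |W y| ≤ C * min (‖y‖ ^ 2) 1 := by
  obtain ⟨C, hC⟩ := hW
  refine ⟨max C 0, le_max_right _ _, fun y => ?_⟩
  calc |W y| ≤ C * ‖y‖ ^ 2 / (1 + ‖y‖ ^ 2) := hC y
    _ ≤ max C 0 * (‖y‖ ^ 2 / (1 + ‖y‖ ^ 2)) := by
      rw [mul_div_assoc]; gcongr; exact le_max_left C 0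
    _ ≤ max C 0 * min (‖y‖ ^ 2) 1 := by
      gcongr
      exact div_one_add_le_min (by positivity)

lemma abs_le_of_norm_le_mul {W : F → ℝ} {C R x : ℝ} (hC : 0 ≤ C)
    (hW : ∀ y, |W y| ≤ C * min (‖y‖ ^ 2) 1) {y : F} (hy : ‖y‖ ≤ R * x) :
    |W y| ≤ C * max (R ^ 2) 1 * min (x ^ 2) 1 := by
  rw [mul_assoc]
  exact (hW y).trans (mul_le_mul_of_nonneg_left
    (min_sq_one_le_max_mul (norm_nonneg y) hy) hC)

lemma exists_abs_comp_le [NormedSpace ℝ E] [NormedSpace ℝ F] (T : E →L[ℝ] F) {W : F → ℝ}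
    (hW : ∃ C : ℝ, ∀ y, |W y| ≤ C * ‖y‖ ^ 2 / (1 + ‖y‖ ^ 2)) :
    ∃ C : ℝ, ∀ z, |W (T z)| ≤ C * ‖z‖ ^ 2 / (1 + ‖z‖ ^ 2) := by
  obtain ⟨C, hC, hCW⟩ := exists_abs_le_mul_min_of_abs_le hW
  refine ⟨C * max (‖T‖ ^ 2) 1 * 2, fun z => ?_⟩
  calc |W (T z)| ≤ C * max (‖T‖ ^ 2) 1 * min (‖z‖ ^ 2) 1 :=
        abs_le_of_norm_le_mul hC hCW (T.le_opNorm z)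
    _ ≤ C * max (‖T‖ ^ 2) 1 * (2 * (‖z‖ ^ 2 / (1 + ‖z‖ ^ 2))) := by
        gcongr; exact min_le_two_mul_div_one_add (by positivity)
    _ = C * max (‖T‖ ^ 2) 1 * 2 * ‖z‖ ^ 2 / (1 + ‖z‖ ^ 2) := by ring

end GrowthBound

lemma integrableOn_Ioi_min_sq_one_mul_rpow {α : ℝ} (hα₀ : 0 < α) (hα₂ : α < 2) :
    IntegrableOn (fun x : ℝ => min (x ^ 2) 1 * x ^ (-(1 + α))) (Ioi 0) := by
  have hnear : IntegrableOn (fun x : ℝ => min (x ^ 2) 1 * x ^ (-(1 + α))) (Ioc 0 1) := by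
    have h := intervalIntegral.intervalIntegrable_rpow' (a := 0) (b := 1) (r := 1 - α)
      (by linarith)
    rw [intervalIntegrable_iff_integrableOn_Ioc_of_le zero_le_one] at h
    refine h.congr_fun (fun x hx => ?_) measurableSet_Ioc
    rw [min_eq_left (by nlinarith [hx.1, hx.2]), ← rpow_natCast, ← rpow_add hx.1]
    congr 1
    push_cast
    ring
  have hfar : IntegrableOn (fun x : ℝ => min (x ^ 2) 1 * x ^ (-(1 + α))) (Ioi 1) := by
    refine (integrableOn_Ioi_rpow_of_lt (a := -(1 + α)) (by linarith) one_pos).congr_fun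
      (fun x hx => ?_) measurableSet_Ioi
    rw [min_eq_right (one_le_pow₀ (le_of_lt hx)), one_mul]
  simpa only [Ioc_union_Ioi_eq_Ioi zero_le_one] using hnear.union hfar

lemma integral_Ioi_comp_mul_left_mul_rpow (g : ℝ → ℝ) (α : ℝ) {c : ℝ} (hc : 0 < c) :
    ∫ x in Ioi 0, g (c * x) * x ^ (-(1 + α)) = c ^ α * ∫ x in Ioi 0, g x * x ^ (-(1 + α)) := by
  have hsub := integral_comp_mul_left_Ioi (fun y => g y * y ^ (-(1 + α))) 0 hc
  rw [mul_zero, smul_eq_mul] at hsub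
  calc ∫ x in Ioi 0, g (c * x) * x ^ (-(1 + α))
      = ∫ x in Ioi 0, c ^ (1 + α) * (g (c * x) * (c * x) ^ (-(1 + α))) := by
        refine setIntegral_congr_fun measurableSet_Ioi fun x hx => ?_
        rw [mul_rpow hc.le (le_of_lt hx), rpow_neg hc.le, rpow_neg (le_of_lt hx)]
        field_simp
    _ = c ^ α * ∫ x in Ioi 0, g x * x ^ (-(1 + α)) := by
        rw [integral_const_mul, hsub, rpow_add hc, rpow_one]
        field_simp

section Radial

variable {F : Type*} [NormedAddCommGroup F] [NormedSpace ℝ F]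

lemma integral_Ioi_smul_mul_rpow (W : F → ℝ) (α : ℝ) {v : F} (hv : v ≠ 0) :
    ∫ x in Ioi 0, W (x • v) * x ^ (-(1 + α))
      = ‖v‖ ^ α * ∫ x in Ioi 0, W (x • (‖v‖⁻¹ • v)) * x ^ (-(1 + α)) := by
  have hv' : ‖v‖ ≠ 0 := norm_ne_zero_iff.mpr hv
  rw [← integral_Ioi_comp_mul_left_mul_rpow (fun y => W (y • (‖v‖⁻¹ • v))) α
    (norm_pos_iff.mpr hv)]
  simp only [smul_smul, mul_comm ‖v‖, mul_assoc, inv_mul_cancel₀ hv', mul_one]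

lemma integral_Ioi_smul_mul_rpow_eq_ite [DecidableEq F] {W : F → ℝ} (hW0 : W 0 = 0) (α : ℝ)
    (v : F) :
    ∫ x in Ioi 0, W (x • v) * x ^ (-(1 + α))
      = ∫ x in Ioi 0, (if v = 0 then 0 else ‖v‖ ^ α * W (x • (‖v‖⁻¹ • v))) * x ^ (-(1 + α)) := by
  split_ifs with hv
  · simp [hv, hW0]
  · simp only [integral_Ioi_smul_mul_rpow W α hv, mul_assoc, integral_const_mul]

lemma abs_smul_le_of_norm_le {W : F → ℝ} {C M x : ℝ} (hC : 0 ≤ C)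
    (hW : ∀ y, |W y| ≤ C * min (‖y‖ ^ 2) 1) (hx : 0 ≤ x) {v : F} (hv : ‖v‖ ≤ M) :
    |W (x • v)| ≤ C * max (M ^ 2) 1 * min (x ^ 2) 1 := by
  refine abs_le_of_norm_le_mul hC hW ?_
  rw [norm_smul, norm_of_nonneg hx, mul_comm]
  exact mul_le_mul_of_nonneg_right hv hx

lemma abs_ite_le_of_norm_le [DecidableEq F] {W : F → ℝ} {α C M x : ℝ} (hα : 0 ≤ α) (hC : 0 ≤ C)
    (hW : ∀ y, |W y| ≤ C * min (‖y‖ ^ 2) 1) (hx : 0 ≤ x) {v : F} (hv : ‖v‖ ≤ M) :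
    |if v = 0 then 0 else ‖v‖ ^ α * W (x • (‖v‖⁻¹ • v))| ≤ M ^ α * C * min (x ^ 2) 1 := by
  have hM : 0 ≤ M := (norm_nonneg v).trans hv
  split_ifs with hv0
  · rw [abs_zero]
    positivity
  have hu : ‖‖v‖⁻¹ • v‖ ≤ 1 := by
    rw [norm_smul, norm_inv, norm_norm, inv_mul_cancel₀ (norm_ne_zero_iff.mpr hv0)]
  calc |‖v‖ ^ α * W (x • (‖v‖⁻¹ • v))| = ‖v‖ ^ α * |W (x • (‖v‖⁻¹ • v))| := by
        rw [abs_mul, abs_of_nonneg (rpow_nonneg (norm_nonneg v) α)]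
    _ ≤ M ^ α * (C * max (1 ^ 2) 1 * min (x ^ 2) 1) := by
        gcongr
        exact abs_smul_le_of_norm_le hC hW hx hu
    _ = M ^ α * C * min (x ^ 2) 1 := by rw [one_pow, max_self, mul_one, mul_assoc]

end Radial

section Fubini

variable {S : Type*} [MeasurableSpace S] {ν : Measure S} [IsFiniteMeasure ν] {α : ℝ}

lemma integrable_prod_mul_rpow_of_abs_le (hα₀ : 0 < α) (hα₂ : α < 2) {f : ℝ → S → ℝ}
    (hf : AEStronglyMeasurable (Function.uncurry f) ((volume.restrict (Ioi 0)).prod ν))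
    {C : ℝ} (hfC : ∀ᵐ s ∂ν, ∀ x, 0 < x → |f x s| ≤ C * min (x ^ 2) 1) :
    Integrable (fun p : ℝ × S => f p.1 p.2 * p.1 ^ (-(1 + α)))
      ((volume.restrict (Ioi 0)).prod ν) := by
  have hdom := ((integrableOn_Ioi_min_sq_one_mul_rpow hα₀ hα₂).const_mul C).comp_fst ν
  refine hdom.mono' (hf.mul (measurable_fst.pow_const _).aestronglyMeasurable) ?_
  filter_upwards [Measure.quasiMeasurePreserving_fst.ae (ae_restrict_mem measurableSet_Ioi),
    Measure.quasiMeasurePreserving_snd.ae hfC] with p (hx : 0 < p.1) hbound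
  rw [norm_mul, norm_of_nonneg (rpow_nonneg hx.le _), ← mul_assoc]
  exact mul_le_mul_of_nonneg_right (hbound p.1 hx) (rpow_nonneg hx.le _)

lemma integral_Ioi_integral_mul_rpow_congr (hα₀ : 0 < α) (hα₂ : α < 2) {f g : ℝ → S → ℝ}
    (hf : AEStronglyMeasurable (Function.uncurry f) ((volume.restrict (Ioi 0)).prod ν))
    (hg : AEStronglyMeasurable (Function.uncurry g) ((volume.restrict (Ioi 0)).prod ν))
    {C D : ℝ} (hfC : ∀ᵐ s ∂ν, ∀ x, 0 < x → |f x s| ≤ C * min (x ^ 2) 1)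
    (hgD : ∀ᵐ s ∂ν, ∀ x, 0 < x → |g x s| ≤ D * min (x ^ 2) 1)
    (hfg : ∀ s, ∫ x in Ioi 0, f x s * x ^ (-(1 + α)) = ∫ x in Ioi 0, g x s * x ^ (-(1 + α))) :
    ∫ x in Ioi 0, (∫ s, f x s ∂ν) * x ^ (-(1 + α))
      = ∫ x in Ioi 0, (∫ s, g x s ∂ν) * x ^ (-(1 + α)) := by
  simp only [← integral_mul_const]
  refine (integral_integral_swap (integrable_prod_mul_rpow_of_abs_le hα₀ hα₂ hf hfC)).trans ?_
  refine Eq.trans ?_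
    (integral_integral_swap (integrable_prod_mul_rpow_of_abs_le hα₀ hα₂ hg hgD)).symm
  simp only [hfg]

end Fubini

theorem integral_Ioi_integral_comp_clm
    {E F : Type*} [NormedAddCommGroup E] [NormedSpace ℝ E] [MeasurableSpace E] [BorelSpace E]
    [SecondCountableTopology E] [NormedAddCommGroup F] [NormedSpace ℝ F] [MeasurableSpace F]
    [BorelSpace F] [SecondCountableTopology F] [DecidableEq F]
    {α : ℝ} (hα₀ : 0 < α) (hα₂ : α < 2) (T : E →L[ℝ] F) {W : F → ℝ} (hWc : Continuous W)
    (hW : ∃ C : ℝ, ∀ y, |W y| ≤ C * ‖y‖ ^ 2 / (1 + ‖y‖ ^ 2))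
    (ν : Measure E) [IsFiniteMeasure ν] {R : ℝ} (hν : ∀ᵐ s ∂ν, ‖s‖ ≤ R) :
    ∫ x in Ioi 0, (∫ s, W (x • T s) ∂ν) * x ^ (-(1 + α))
      = ∫ x in Ioi 0,
          (∫ s, (if T s = 0 then 0 else ‖T s‖ ^ α * W (x • (‖T s‖⁻¹ • T s))) ∂ν)
            * x ^ (-(1 + α)) := by
  obtain ⟨C, hC, hCW⟩ := exists_abs_le_mul_min_of_abs_le hW
  have hW0 : W 0 = 0 := by simpa using hCW 0
  have hTR : ∀ᵐ s ∂ν, ‖T s‖ ≤ ‖T‖ * R := hν.mono fun s hs =>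
    (T.le_opNorm s).trans (mul_le_mul_of_nonneg_left hs (norm_nonneg T))
  have hWm : Measurable W := hWc.measurable
  refine integral_Ioi_integral_mul_rpow_congr (C := C * max ((‖T‖ * R) ^ 2) 1)
    (D := (‖T‖ * R) ^ α * C) hα₀ hα₂ (Continuous.aestronglyMeasurable (by fun_prop))
    ((Measurable.ite (measurableSet_eq_fun (by fun_prop) measurable_const) measurable_const
      (by fun_prop)).aestronglyMeasurable) ?_ ?_
    fun s => integral_Ioi_smul_mul_rpow_eq_ite hW0 α (T s)
  · filter_upwards [hTR] with s hs x hx using abs_smul_le_of_norm_le hC hCW hx.le hs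
  · filter_upwards [hTR] with s hs x hx using abs_ite_le_of_norm_le hα₀.le hC hCW hx.le hs

theorem regular_variation_linear_image_general
    {Ω : Type*} [MeasurableSpace Ω] (μ : Measure Ω)
    (m d : ℕ)
    (Z : Ω → EuclideanSpace ℝ (Fin m))
    (α k : ℝ) (hα₀ : 0 < α) (hα₂ : α < 2)
    (ν : Measure (EuclideanSpace ℝ (Fin m))) [IsFiniteMeasure ν]
    (hsph : ∀ᵐ s ∂ν, ‖s‖ = 1)
    (hZtail : ∀ W : EuclideanSpace ℝ (Fin m) → ℝ, Continuous W →
      (∃ C : ℝ, ∀ x, |W x| ≤ C * ‖x‖ ^ 2 / (1 + ‖x‖ ^ 2)) →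
      Tendsto (fun ρ : ℝ => ρ ^ α * (Real.log ρ) ^ (-k) *
          ∫ ω, W (ρ⁻¹ • Z ω) ∂μ) atTop
        (nhds (∫ x in Set.Ioi (0:ℝ), (∫ s, W (x • s) ∂ν) * x ^ (-(1 + α)))))
    (T : EuclideanSpace ℝ (Fin m) →ₗ[ℝ] EuclideanSpace ℝ (Fin d)) :
    ∀ W' : EuclideanSpace ℝ (Fin d) → ℝ, Continuous W' →
      (∃ C : ℝ, ∀ x, |W' x| ≤ C * ‖x‖ ^ 2 / (1 + ‖x‖ ^ 2)) →
      Tendsto (fun ρ : ℝ => ρ ^ α * (Real.log ρ) ^ (-k) *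
          ∫ ω, W' (ρ⁻¹ • T (Z ω)) ∂μ) atTop
        (nhds (∫ x in Set.Ioi (0:ℝ),
          (∫ s, (if T s = 0 then 0 else ‖T s‖ ^ α * W' (x • (‖T s‖⁻¹ • T s))) ∂ν)
            * x ^ (-(1 + α)))) := by
  intro W' hW'c hW'b
  let T' := LinearMap.toContinuousLinearMap T
  have hlim :=
    hZtail (fun z => W' (T' z)) (hW'c.comp T'.continuous) (exists_abs_comp_le T' hW'b)
  simp only [map_smul] at hlim
  rwa [integral_Ioi_integral_comp_clm hα₀ hα₂ T' hW'c hW'b ν (hsph.mono fun _ hs => hs.le)]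
    at hlim

theorem regular_variation_linear_image
    {Ω : Type*} [MeasurableSpace Ω] (μ : Measure Ω) [IsProbabilityMeasure μ]
    (m d : ℕ) (hdm : d ≤ m)
    (Z : Ω → EuclideanSpace ℝ (Fin m)) (hZ : Measurable Z)
    (α k : ℝ) (hα₀ : 0 < α) (hα₂ : α < 2) (hk : 0 ≤ k)
    (ν : Measure (EuclideanSpace ℝ (Fin m))) [IsFiniteMeasure ν]
    (hν0 : 0 < ν Set.univ) (hsph : ∀ᵐ s ∂ν, ‖s‖ = 1)
    (hZtail : ∀ W : EuclideanSpace ℝ (Fin m) → ℝ, Continuous W →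
      (∃ C : ℝ, ∀ x, |W x| ≤ C * ‖x‖ ^ 2 / (1 + ‖x‖ ^ 2)) →
      Tendsto (fun ρ : ℝ => ρ ^ α * (Real.log ρ) ^ (-k) *
          ∫ ω, W (ρ⁻¹ • Z ω) ∂μ) atTop
        (nhds (∫ x in Set.Ioi (0:ℝ), (∫ s, W (x • s) ∂ν) * x ^ (-(1 + α)))))
    (T : EuclideanSpace ℝ (Fin m) →ₗ[ℝ] EuclideanSpace ℝ (Fin d)) :
    ∀ W' : EuclideanSpace ℝ (Fin d) → ℝ, Continuous W' →
      (∃ C : ℝ, ∀ x, |W' x| ≤ C * ‖x‖ ^ 2 / (1 + ‖x‖ ^ 2)) →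
      Tendsto (fun ρ : ℝ => ρ ^ α * (Real.log ρ) ^ (-k) *
          ∫ ω, W' (ρ⁻¹ • T (Z ω)) ∂μ) atTop
        (nhds (∫ x in Set.Ioi (0:ℝ),
          (∫ s, (if T s = 0 then 0 else ‖T s‖ ^ α * W' (x • (‖T s‖⁻¹ • T s))) ∂ν)
            * x ^ (-(1 + α)))) :=
  regular_variation_linear_image_general μ m d Z α k hα₀ hα₂ ν hsph hZtail T
end
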